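/- arXiv:2403.10314 — 10 statements merged into one kernel-verified Lean document; each statement's English description precedes it below -/
import Mathlib

section
/- For any even integer d ≥ 0 and indices 1 ≤ i < j ≤ n, the CHS polynomials satisfy (xᵢ − xⱼ)·(∂/∂xᵢ − ∂/∂xⱼ) h_d(x₁,…,xₙ) = (xᵢ − xⱼ)²·h_{d−2}(x₁,…,xₙ, xᵢ, xⱼ), where h_{d−2} is taken in n+2 variables. -/
open MvPolynomial

/-- The complete homogeneous symmetric polynomial of degree `d` in `n` variables,
as a multivariate polynomial. -/
noncomputable def chsPoly (n d : ℕ) : MvPolynomial (Fin n) ℝ :=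
  ∑ f ∈ Finset.univ.filter (fun f : Fin d → Fin n => ∀ i j : Fin d, i ≤ j → f i ≤ f j),
    ∏ i, MvPolynomial.X (f i)

/-!
Write `h_m(y, a)`, in Lean `aeval (Option.elim' a y) (hsymm (Option ι) R m)`, for `h_m` evaluated
at the family `y` extended by one more value `a`.
Splitting off the occurrences of the extra variable gives the recurrence
`h_{m+1}(y, a) = a h_m(y, a) + h_{m+1}(y)`. Applied with `a = xᵢ` to `x` with `xᵢ` removed, and
differentiated, it yields by induction `∂ᵢ h_{m+1}(x) = h_m(x, xᵢ)`. Applied to `h_{m+1}(y, a, b)`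
once in `b` and, by symmetry, once in `a`, it yields
`h_{m+1}(y, a) - h_{m+1}(y, b) = (a - b) h_m(y, a, b)`.
With `y = x`, `a = xᵢ`, `b = xⱼ` this is `(∂ᵢ - ∂ⱼ) h_d = (xᵢ - xⱼ) h_{d-2}(x, xᵢ, xⱼ)`.
-/

namespace MvPolynomial

variable {R : Type*} [CommSemiring R] {ι κ : Type*}

theorem sum_monotone_prod_X_eq_hsymm [Fintype ι] [LinearOrder ι] (d : ℕ) :
    ∑ f ∈ Finset.univ.filter (fun f : Fin d → ι => Monotone f), ∏ k, (X (f k) : MvPolynomial ι R) =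
      hsymm ι R d := by
  refine Finset.sum_bij (fun f _ => (⟨(List.ofFn f : Multiset ι), by simp⟩ : Sym ι d))
    (fun _ _ => Finset.mem_univ _) ?_ ?_ ?_
  · intro f hf g hg hfg
    simp only [Finset.mem_filter, Finset.mem_univ, true_and] at hf hg
    refine List.ofFn_injective (List.Perm.eq_of_pairwise' (r := (· ≤ ·))
      (List.sortedLE_ofFn_iff.mpr hf).pairwise (List.sortedLE_ofFn_iff.mpr hg).pairwise
      (Multiset.coe_eq_coe.mp ?_))
    simpa using congrArg Subtype.val hfg
  · rintro ⟨s, hs⟩ -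
    have hlen : (s.sort (· ≤ ·)).length = d := by rw [Multiset.length_sort, hs]
    refine ⟨fun k => (s.sort (· ≤ ·)).get (Fin.cast hlen.symm k), ?_, ?_⟩
    · simp only [Finset.mem_filter, Finset.mem_univ, true_and]
      intro a b hab
      exact (Multiset.pairwise_sort (s := s) (r := (· ≤ ·))).rel_get_of_le (by simpa using hab)
    · apply Subtype.ext
      show ((List.ofFn _ : List ι) : Multiset ι) = s
      rw [← List.ofFn_congr hlen, List.ofFn_get, Multiset.sort_eq]
  · intro f _
    show _ = (Multiset.map X (List.ofFn f : Multiset ι)).prod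
    rw [Multiset.map_coe, Multiset.prod_coe, List.map_ofFn, List.prod_ofFn]
    rfl

theorem pderiv_rename_eq_zero [DecidableEq ι] {f : κ → ι} {i : ι} (hf : ∀ b, f b ≠ i)
    (p : MvPolynomial κ R) : pderiv i (rename f p) = 0 :=
  pderiv_eq_zero_of_notMem_vars fun h => by
    obtain ⟨b, -, hb⟩ := Finset.mem_image.mp (vars_rename f p h)
    exact hf b hb

theorem aeval_hsymm_comp_equiv {A : Type*} [CommSemiring A] [Algebra R A] [Fintype ι]
    [DecidableEq ι] [Fintype κ] [DecidableEq κ] (e : ι ≃ κ) (y : κ → A) (m : ℕ) :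
    aeval (y ∘ e) (hsymm ι R m) = aeval y (hsymm κ R m) := by
  rw [← rename_hsymm ι R m e, aeval_rename]

variable [Fintype ι] [DecidableEq ι]

theorem hsymm_option_succ (m : ℕ) :
    hsymm (Option ι) R (m + 1) =
      X none * hsymm (Option ι) R m + rename some (hsymm ι R (m + 1)) := by
  simp only [hsymm]
  rw [← symOptionSuccEquiv.symm.sum_comp, Fintype.sum_sum_type, Finset.mul_sum, map_sum]
  congr 1 <;> refine Finset.sum_congr rfl fun s _ => ?_
  · simp [symOptionSuccEquiv, Sym.coe_cons]
  · simp [symOptionSuccEquiv, map_multiset_prod, Multiset.map_map]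

theorem aeval_hsymm_option_succ {A : Type*} [CommSemiring A] [Algebra R A] (a : A) (y : ι → A)
    (m : ℕ) :
    aeval (Option.elim' a y) (hsymm (Option ι) R (m + 1)) =
      a * aeval (Option.elim' a y) (hsymm (Option ι) R m) + aeval y (hsymm ι R (m + 1)) := by
  rw [hsymm_option_succ, map_add, map_mul, aeval_X, aeval_rename]
  rfl

theorem aeval_hsymm_option_sub {A : Type*} [CommRing A] [Algebra R A] (a b : A) (y : ι → A)
    (m : ℕ) :
    aeval (Option.elim' a y) (hsymm (Option ι) R (m + 1)) -
        aeval (Option.elim' b y) (hsymm (Option ι) R (m + 1)) =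
      (a - b) * aeval (Option.elim' b (Option.elim' a y)) (hsymm (Option (Option ι)) R m) := by
  have hswap : Option.elim' b (Option.elim' a y) ∘ Equiv.swap none (some none) =
      Option.elim' a (Option.elim' b y) := by
    funext o
    rcases o with _ | _ | _ <;> simp [Equiv.swap_apply_of_ne_of_ne]
  have hb := aeval_hsymm_option_succ (R := R) b (Option.elim' a y) m
  have ha := aeval_hsymm_option_succ (R := R) a (Option.elim' b y) m
  simp only [← hswap, aeval_hsymm_comp_equiv] at ha
  linear_combination ha - hb

theorem hsymm_succ_eq_X_mul_add (i : ι) (m : ℕ) :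
    hsymm ι R (m + 1) = X i * hsymm ι R m +
      rename (Subtype.val : {b // b ≠ i} → ι) (hsymm {b // b ≠ i} R (m + 1)) := by
  simp only [← rename_hsymm _ R _ (Equiv.optionSubtypeNe i), hsymm_option_succ, map_add, map_mul,
    rename_X, Equiv.optionSubtypeNe_none, rename_rename]
  rfl

theorem pderiv_hsymm_succ (i : ι) (m : ℕ) :
    pderiv i (hsymm ι R (m + 1)) = aeval (Option.elim' (X i) X) (hsymm (Option ι) R m) := by
  have step (k : ℕ) :
      pderiv i (hsymm ι R (k + 1)) = hsymm ι R k + X i * pderiv i (hsymm ι R k) := by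
    rw [hsymm_succ_eq_X_mul_add i k, map_add, pderiv_rename_eq_zero (fun b => b.2), add_zero,
      Derivation.leibniz, pderiv_X_self, smul_eq_mul, smul_eq_mul, mul_one, add_comm]
  induction m with
  | zero => simp
  | succ m ih => rw [step, ih, aeval_hsymm_option_succ, aeval_X_left_apply, add_comm]

end MvPolynomial

theorem chsPoly_eq_hsymm (n d : ℕ) : chsPoly n d = hsymm (Fin n) ℝ d :=
  sum_monotone_prod_X_eq_hsymm d

theorem chs_derivation_identity_general (n d : ℕ) (hd2 : 2 ≤ d)
    (i j : Fin n) :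
    (X i - X j) * (pderiv i (chsPoly n d) - pderiv j (chsPoly n d)) =
      (X i - X j) ^ 2 *
        aeval (fun k : Fin (n + 2) =>
            if h : (k : ℕ) < n then (X (⟨k, h⟩ : Fin n) : MvPolynomial (Fin n) ℝ)
            else if (k : ℕ) = n then X i else X j)
          (chsPoly (n + 2) (d - 2)) := by
  obtain ⟨e, rfl⟩ : ∃ e, d = e + 2 := ⟨d - 2, by omega⟩
  have hsubst : (fun k : Fin (n + 2) =>
        if h : (k : ℕ) < n then (X (⟨k, h⟩ : Fin n) : MvPolynomial (Fin n) ℝ)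
        else if (k : ℕ) = n then X i else X j) =
      Option.elim' (X j) (Option.elim' (X i) X) ∘
        finSuccEquivLast.trans (Equiv.optionCongr finSuccEquivLast) := by
    funext k
    induction k using Fin.lastCases with
    | last => simp
    | cast k =>
      induction k using Fin.lastCases with
      | last => simp
      | cast a => simp
  rw [Nat.add_sub_cancel, chsPoly_eq_hsymm, chsPoly_eq_hsymm, pderiv_hsymm_succ,
    pderiv_hsymm_succ, aeval_hsymm_option_sub, hsubst, aeval_hsymm_comp_equiv]
  ring

/-- `(xᵢ - xⱼ)(∂ᵢ - ∂ⱼ) h_d(x₁,…,xₙ) = (xᵢ - xⱼ)² h_{d-2}(x₁,…,xₙ,xᵢ,xⱼ)`. -/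
theorem chs_derivation_identity (n d : ℕ) (hd : Even d) (hd2 : 2 ≤ d)
    (i j : Fin n) (hij : i < j) :
    (X i - X j) * (pderiv i (chsPoly n d) - pderiv j (chsPoly n d)) =
      (X i - X j) ^ 2 *
        aeval (fun k : Fin (n + 2) =>
            if h : (k : ℕ) < n then (X (⟨k, h⟩ : Fin n) : MvPolynomial (Fin n) ℝ)
            else if (k : ℕ) = n then X i else X j)
          (chsPoly (n + 2) (d - 2)) :=
  chs_derivation_identity_general n d hd2 i j
end

section
/- If d ≥ 0 is even and x ≺ y in the majorization order on ℝⁿ, then h_d(x) ≤ h_d(y). That is, the even-degree complete homogeneous symmetric polynomials are Schur-convex. -/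
/-- The complete homogeneous symmetric polynomial of degree `d` in `n` real variables:
the sum of all monomials `x (f 0) * ⋯ * x (f (d-1))` over weakly increasing index tuples. -/
def chs (n d : ℕ) (x : Fin n → ℝ) : ℝ :=
  ∑ f ∈ Finset.univ.filter (fun f : Fin d → Fin n => ∀ i j : Fin d, i ≤ j → f i ≤ f j),
    ∏ i, x (f i)

/-- The nonincreasing rearrangement of a finite tuple of reals. -/
noncomputable def decSort {n : ℕ} (x : Fin n → ℝ) : Fin n → ℝ :=
  x ∘ Tuple.sort (fun i => -x i)

/-- Sum of the first `k` entries of a tuple. -/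
def pSum {n : ℕ} (x : Fin n → ℝ) (k : ℕ) : ℝ :=
  ∑ i ∈ Finset.univ.filter (fun i : Fin n => (i : ℕ) < k), x i

/-- `Majorizes x y` means `x ≺ y`: every partial sum of the nonincreasing rearrangement of `x`
is at most the corresponding one for `y`, with equal total sums. -/
def Majorizes {n : ℕ} (x y : Fin n → ℝ) : Prop :=
  (∀ k : ℕ, k < n → pSum (decSort x) k ≤ pSum (decSort y) k) ∧ (∑ i, x i) = ∑ i, y i

noncomputable def F : ℕ → List ℝ → ℝ
  | 0, _ => 1
  | _+1, [] => 0
  | d+1, a::w => a * F d (a::w) + F (d+1) w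

lemma F_zero (w : List ℝ) : F 0 w = 1 := by simp [F]
lemma F_succ_nil (d : ℕ) : F (d+1) [] = 0 := by simp [F]
lemma F_succ_cons (d : ℕ) (a : ℝ) (w : List ℝ) :
    F (d+1) (a::w) = a * F d (a::w) + F (d+1) w := by rw [F]

lemma F_one (w : List ℝ) : F 1 w = w.sum := by
  induction w with
  | nil => simp [F_succ_nil]
  | cons a w ih => rw [F_succ_cons, F_zero, ih]; simp

lemma F_swap : ∀ (d : ℕ) (a b : ℝ) (w : List ℝ), F d (a::b::w) = F d (b::a::w) := by
  intro d
  induction d using Nat.strong_induction_on with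
  | _ d IH =>
    match d with
    | 0 => intro a b w; rw [F_zero, F_zero]
    | 1 => intro a b w; rw [F_one, F_one]; simp [List.sum_cons]; ring
    | (e+1) =>
      intro a b w
      have h0a := F_succ_cons e a (b::w)
      have h0b := F_succ_cons e b (a::w)
      match e with
      | 0 =>
        rw [h0a, h0b, F_zero, F_zero, F_one, F_one]
        simp [List.sum_cons]; ring
      | 1 =>
        rw [h0a, h0b, F_succ_cons 1 b w, F_succ_cons 1 a w, F_one, F_one, F_one, F_one]
        simp [List.sum_cons]; ring
      | (f+2) =>
        have h0c := F_succ_cons (f+2) b w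
        have h0d := F_succ_cons (f+2) a w
        have h1 := F_succ_cons (f+1) a (b::w)
        have h2 := F_succ_cons (f+1) b (a::w)
        have h3 := F_succ_cons (f+1) b w
        have h4 := F_succ_cons (f+1) a w
        have h5 := F_succ_cons f a (b::w)
        have h6 := F_succ_cons f b (a::w)
        have hS : F (f+1) (a::b::w) = F (f+1) (b::a::w) := IH (f+1) (by omega) a b w
        have hT : F f (a::b::w) = F f (b::a::w) := IH f (by omega) a b w
        linear_combination (h0a - h0b) + (h0c - h0d) + a*h1 - b*h2 + (a+b)*h3 - (a+b)*h4
          + a^2*h5 - b^2*h6 + (a^2+a*b+b^2)*(hS - h5 + h6) - (a^2*b+a*b^2)*hT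
lemma F_perm (d : ℕ) {w w' : List ℝ} (h : w.Perm w') : F d w = F d w' := by
  induction h generalizing d with
  | nil => rfl
  | cons a h ih =>
    induction d with
    | zero => rw [F_zero, F_zero]
    | succ e ihe => rw [F_succ_cons, F_succ_cons, ihe, ih]
  | swap a b l => exact F_swap d b a l
  | trans h1 h2 ih1 ih2 => rw [ih1, ih2]

/-- peel-off sum formula -/
lemma F_cons_sum (d : ℕ) (a : ℝ) (w : List ℝ) :
    F d (a::w) = ∑ k ∈ Finset.range (d+1), a^k * F (d-k) w := by
  induction d with
  | zero => simp [F_zero]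
  | succ d ih =>
    rw [F_succ_cons, ih, Finset.mul_sum]
    conv_rhs => rw [Finset.sum_range_succ']
    simp only [Nat.succ_sub_succ, pow_zero, one_mul, Nat.sub_zero]
    congr 1
    exact Finset.sum_congr rfl fun k _ => by ring
lemma chs_zero (n : ℕ) (x : Fin n → ℝ) : chs n 0 x = 1 := by
  rw [chs]
  rw [Finset.filter_true_of_mem (fun f _ => fun i j _ => i.elim0)]
  simp

lemma chs_nil (d : ℕ) (x : Fin 0 → ℝ) : chs 0 (d+1) x = 0 := by
  rw [chs]
  have : (Finset.univ : Finset (Fin (d+1) → Fin 0)) = ∅ := by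
    apply Finset.eq_empty_of_forall_notMem
    intro f
    exact (f 0).elim0
  simp [this]

lemma chs_rec (n d : ℕ) (x : Fin (n+1) → ℝ) :
    chs (n+1) (d+1) x = x 0 * chs (n+1) d x + chs n (d+1) (x ∘ Fin.succ) := by
  classical
  rw [chs]
  rw [← Finset.sum_filter_add_sum_filter_not _ (fun f => f 0 = 0)]
  congr 1
  · -- f 0 = 0 part: equals x 0 * chs (n+1) d x
    rw [chs, Finset.mul_sum]
    rw [Finset.filter_filter]
    refine Finset.sum_bij' (i := fun f _ => f ∘ Fin.succ) (j := fun g _ => Fin.cons 0 g)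
      ?_ ?_ ?_ ?_ ?_
    · intro f hf
      simp only [Finset.mem_filter, Finset.mem_univ, true_and] at hf ⊢
      exact fun i j hij => hf.1 i.succ j.succ (Fin.succ_le_succ_iff.mpr hij)
    · intro g hg
      simp only [Finset.mem_filter, Finset.mem_univ, true_and] at hg ⊢
      refine ⟨?_, by simp⟩
      intro i j
      refine Fin.cases ?_ (fun i' => ?_) i
      · intro _
        simp only [Fin.cons_zero]
        exact Fin.zero_le _
      · refine Fin.cases ?_ (fun j' => ?_) j
        · intro h
          exact absurd (Fin.le_zero_iff.mp h) (Fin.succ_ne_zero i')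
        · intro h
          simp only [Fin.cons_succ]
          exact hg i' j' (Fin.succ_le_succ_iff.mp h)
    · intro f hf
      simp only [Finset.mem_filter, Finset.mem_univ, true_and] at hf
      funext i
      refine Fin.cases ?_ (fun i' => ?_) i
      · simp [hf.2]
      · simp
    · intro g hg
      funext i
      simp
    · intro f hf
      simp only [Finset.mem_filter, Finset.mem_univ, true_and] at hf
      rw [Fin.prod_univ_succ, hf.2]
      rfl
  · -- f 0 ≠ 0 part
    rw [chs]
    refine Finset.sum_bij' (i := fun f hf => fun i => (f i).pred ?_)
      (j := fun h _ => Fin.succ ∘ h) ?_ ?_ ?_ ?_ ?_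
    · simp only [Finset.mem_filter, Finset.mem_univ, true_and] at hf
      intro h0
      exact hf.2 (Fin.le_zero_iff.mp (h0 ▸ hf.1 0 i (Fin.zero_le i)))
    · intro f hf
      simp only [Finset.mem_filter, Finset.mem_univ, true_and] at hf ⊢
      intro i j hij
      rw [Fin.pred_le_pred_iff]
      exact hf.1 i j hij
    · intro h hh
      simp only [Finset.mem_filter, Finset.mem_univ, true_and] at hh ⊢
      constructor
      · intro i j hij
        exact Fin.succ_le_succ_iff.mpr (hh i j hij)
      · exact Fin.succ_ne_zero _
    · intro f hf
      funext i
      simp [Fin.succ_pred]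
    · intro h hh
      funext i
      simp [Fin.pred_succ]
    · intro f hf
      exact Finset.prod_congr rfl fun i _ => by simp [Function.comp, Fin.succ_pred]
lemma chs_eq_F (n : ℕ) : ∀ (d : ℕ) (x : Fin n → ℝ), chs n d x = F d (List.ofFn x) := by
  induction n with
  | zero =>
    intro d x
    match d with
    | 0 => rw [chs_zero, F_zero]
    | d+1 => rw [chs_nil, List.ofFn_zero, F_succ_nil]
  | succ n ihn =>
    intro d
    induction d with
    | zero => intro x; rw [chs_zero, F_zero]
    | succ d ihd =>
      intro x
      rw [chs_rec, ihd, ihn, List.ofFn_succ, F_succ_cons, ← List.ofFn_succ]; rfl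
lemma ofFn_comp_perm {n : ℕ} (x : Fin n → ℝ) (σ : Equiv.Perm (Fin n)) :
    (List.ofFn (x ∘ σ)).Perm (List.ofFn x) := by
  rw [List.ofFn_eq_map, List.ofFn_eq_map]
  have h1 : ((List.finRange n).map σ).Perm (List.finRange n) := by
    apply List.perm_of_nodup_nodup_toFinset_eq
    · exact (List.nodup_finRange n).map σ.injective
    · exact List.nodup_finRange n
    · apply Finset.eq_of_subset_of_card_le
      · intro a _; simp [List.mem_toFinset]
      · simp [List.toFinset_card_of_nodup, (List.nodup_finRange n).map σ.injective]
  have := h1.map x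
  simpa [List.map_map] using this

lemma chs_perm {n d : ℕ} (x : Fin n → ℝ) (σ : Equiv.Perm (Fin n)) :
    chs n d (x ∘ σ) = chs n d x := by
  rw [chs_eq_F, chs_eq_F]
  exact F_perm d (ofFn_comp_perm x σ)
section HunterNonneg
open MeasureTheory Set
lemma exp_pow_integrableOn (j : ℕ) :
    IntegrableOn (fun t : ℝ => Real.exp (-t) * t ^ j) (Ioi 0) := by
  have h := Real.GammaIntegral_convergent (s := (j+1 : ℝ)) (by positivity)
  refine h.congr_fun (fun x hx => ?_) measurableSet_Ioi
  rw [add_sub_cancel_right]; beta_reduce; rw [Real.rpow_natCast]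

lemma integral_exp_pow (j : ℕ) :
    ∫ t in Ioi (0:ℝ), Real.exp (-t) * t ^ j = (j.factorial : ℝ) := by
  have h := Real.Gamma_eq_integral (s := (j+1 : ℝ)) (by positivity)
  rw [add_sub_cancel_right] at h
  have h2 : Real.Gamma ((j:ℝ) + 1) = j.factorial := Real.Gamma_nat_eq_factorial j
  rw [← h2, h]
  refine setIntegral_congr_fun measurableSet_Ioi (fun x hx => ?_)
  rw [Real.rpow_natCast]

lemma integral_exp_affine_pow (a c : ℝ) (m : ℕ) :
    ∫ t in Ioi (0:ℝ), Real.exp (-t) * (c + a * t) ^ m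
      = ∑ j ∈ Finset.range (m+1), (m.choose j : ℝ) * (j.factorial : ℝ) * a ^ j * c ^ (m - j) := by
  have hexp : ∀ t : ℝ, Real.exp (-t) * (c + a*t)^m
      = ∑ j ∈ Finset.range (m+1), (m.choose j : ℝ) * a^j * c^(m-j) * (Real.exp (-t) * t^j) := by
    intro t
    rw [add_comm c (a*t), add_pow]
    rw [Finset.mul_sum]
    exact Finset.sum_congr rfl fun j hj => by rw [mul_pow]; ring
  rw [MeasureTheory.setIntegral_congr_fun measurableSet_Ioi (fun t _ => hexp t)]
  rw [MeasureTheory.integral_finset_sum]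
  · refine Finset.sum_congr rfl fun j hj => ?_
    rw [MeasureTheory.integral_const_mul, integral_exp_pow]
    ring
  · intro j hj
    exact (exp_pow_integrableOn j).const_mul _
lemma exp_affine_pow_integrableOn (a c : ℝ) (m : ℕ) :
    IntegrableOn (fun t : ℝ => Real.exp (-t) * (c + a * t) ^ m) (Ioi 0) := by
  have : ∀ t : ℝ, Real.exp (-t) * (c + a*t)^m
      = ∑ j ∈ Finset.range (m+1), (m.choose j : ℝ) * a^j * c^(m-j) * (Real.exp (-t) * t^j) := by
    intro t
    rw [add_comm c (a*t), add_pow, Finset.mul_sum]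
    exact Finset.sum_congr rfl fun j hj => by rw [mul_pow]; ring
  have hsum : IntegrableOn (fun t : ℝ => ∑ j ∈ Finset.range (m+1),
      (m.choose j : ℝ) * a^j * c^(m-j) * (Real.exp (-t) * t^j)) (Ioi 0) :=
    integrable_finset_sum _ (fun j _ =>
      ((exp_pow_integrableOn j).const_mul ((m.choose j : ℝ) * a^j * c^(m-j))))
  exact hsum.congr (Filter.EventuallyEq.of_eq (funext fun t => (this t).symm))

noncomputable def G (d : ℕ) (w : List ℝ) (c : ℝ) : ℝ :=
  ∑ k ∈ Finset.range (d+1), c^(d-k) / (d-k).factorial * F k w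

lemma G_nil (d : ℕ) (c : ℝ) : G d [] c = c^d / d.factorial := by
  rw [G, Finset.sum_eq_single 0]
  · simp [F_zero]
  · intro k hk hk0
    match k, hk0 with
    | k+1, _ => rw [F_succ_nil]; ring
  · simp

lemma G_cons (d : ℕ) (a : ℝ) (v : List ℝ) (c : ℝ) :
    G d (a::v) c = ∫ t in Ioi (0:ℝ), Real.exp (-t) * G d v (c + a*t) := by
  have hpt : ∀ t : ℝ, Real.exp (-t) * G d v (c + a*t)
      = ∑ k ∈ Finset.range (d+1),
          (F k v / (d-k).factorial) * (Real.exp (-t) * (c + a*t)^(d-k)) := by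
    intro t
    rw [G, Finset.mul_sum]
    exact Finset.sum_congr rfl fun k hk => by ring
  rw [MeasureTheory.setIntegral_congr_fun measurableSet_Ioi (fun t _ => hpt t)]
  rw [MeasureTheory.integral_finset_sum _
    (fun k hk => (exp_affine_pow_integrableOn a c (d-k)).const_mul _)]
  have hval : ∀ k ∈ Finset.range (d+1),
      (∫ t in Ioi (0:ℝ), (F k v / (d-k).factorial) * (Real.exp (-t) * (c + a*t)^(d-k)))
      = ∑ j ∈ Finset.range (d-k+1),
          (F k v) * (a^j * c^(d-k-j) / (d-k-j).factorial) := by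
    intro k hk
    rw [MeasureTheory.integral_const_mul, integral_exp_affine_pow, Finset.mul_sum]
    refine Finset.sum_congr rfl fun j hj => ?_
    have hjle : j ≤ d - k := Nat.lt_succ_iff.mp (Finset.mem_range.mp hj)
    have hfac : ((d-k).choose j : ℝ) * (j.factorial : ℝ) * ((d-k-j).factorial : ℝ)
        = ((d-k).factorial : ℝ) := by
      exact_mod_cast Nat.choose_mul_factorial_mul_factorial hjle
    have h1 : ((d-k).factorial : ℝ) ≠ 0 := Nat.cast_ne_zero.mpr (Nat.factorial_ne_zero _)
    have h2 : ((d-k-j).factorial : ℝ) ≠ 0 := Nat.cast_ne_zero.mpr (Nat.factorial_ne_zero _)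
    field_simp
    linear_combination (F k v * a^j * c^(d-k-j)) * hfac
  rw [Finset.sum_congr rfl hval]
  -- now compare with G d (a::v) c
  rw [G]
  have hF : ∀ k ∈ Finset.range (d+1), c^(d-k)/((d-k).factorial : ℝ) * F k (a::v)
      = ∑ i ∈ Finset.range (k+1), (c^(d-k)/((d-k).factorial:ℝ)) * a^i * F (k-i) v := by
    intro k hk
    rw [F_cons_sum, Finset.mul_sum]
    exact Finset.sum_congr rfl fun i hi => by ring
  rw [Finset.sum_congr rfl hF]
  set g : ℕ → ℕ → ℝ := fun u w => F u v * (a^w * c^(d-u-w) / ((d-u-w).factorial : ℝ)) with hg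
  have hL : ∀ x ∈ Finset.range (d+1),
      (∑ i ∈ Finset.range (x+1), c^(d-x)/((d-x).factorial:ℝ) * a^i * F (x-i) v)
      = ∑ k ∈ Finset.range (x+1), g k (x-k) := by
    intro x hx
    rw [← Finset.sum_range_reflect (fun i => c^(d-x)/((d-x).factorial:ℝ) * a^i * F (x-i) v) (x+1)]
    refine Finset.sum_congr rfl fun j hj => ?_
    have hjx : j ≤ x := Nat.lt_succ_iff.mp (Finset.mem_range.mp hj)
    have e1 : x + 1 - 1 - j = x - j := by omega
    have e2 : x - (x - j) = j := by omega
    have e3 : d - j - (x - j) = d - x := by omega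
    rw [e1, e2, hg]
    simp only
    rw [e3]
    ring
  rw [Finset.sum_congr rfl hL, Finset.sum_range_diag_flip (d+1) g]
  refine Finset.sum_congr rfl fun x hx => ?_
  have hxd : x ≤ d := Nat.lt_succ_iff.mp (Finset.mem_range.mp hx)
  have e4 : d + 1 - x = d - x + 1 := by omega
  rw [e4]

lemma G_nonneg (d : ℕ) (hd : Even d) : ∀ (w : List ℝ) (c : ℝ), 0 ≤ G d w c := by
  intro w
  induction w with
  | nil =>
    intro c
    rw [G_nil]
    exact div_nonneg (hd.pow_nonneg c) (Nat.cast_nonneg _)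
  | cons a v ih =>
    intro c
    rw [G_cons]
    apply setIntegral_nonneg measurableSet_Ioi
    intro t _
    exact mul_nonneg (Real.exp_nonneg _) (ih _)

lemma F_nonneg (d : ℕ) (hd : Even d) (w : List ℝ) : 0 ≤ F d w := by
  have h := G_nonneg d hd w 0
  rw [G, Finset.sum_eq_single d] at h
  · simpa using h
  · intro k hk hkd
    have : d - k ≠ 0 := by
      have := Finset.mem_range.mp hk; omega
    rw [zero_pow this]
    ring
  · simp
end HunterNonneg
lemma F_pair (m : ℕ) (s t : ℝ) (z : List ℝ) :
    F (m+2) (s::t::z) = (s+t) * F (m+1) (s::t::z) - (s*t) * F m (s::t::z) + F (m+2) z := by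
  have h1 := F_succ_cons (m+1) s (t::z)
  have h2 := F_succ_cons (m+1) t z
  have h3 := F_succ_cons m s (t::z)
  linear_combination h1 + h2 - t*h3

lemma F_transfer : ∀ (d : ℕ) (s t s' t' : ℝ) (z : List ℝ), s + t = s' + t' →
    F (d+2) (s::t::z) - F (d+2) (s'::t'::z) = (s'*t' - s*t) * F d (s::t::s'::t'::z) := by
  intro d
  induction d using Nat.strong_induction_on with
  | _ d IH =>
    match d with
    | 0 =>
      intro s t s' t' z hsum
      have ht' : t' = s + t - s' := by linarith
      subst ht'
      have hp1 := F_pair 0 s t z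
      have hp2 := F_pair 0 s' (s+t-s') z
      rw [F_zero] at hp1 hp2
      rw [hp1, hp2, F_one, F_one, F_zero]
      simp only [List.sum_cons]
      ring
    | 1 =>
      intro s t s' t' z hsum
      have ht' : t' = s + t - s' := by linarith
      subst ht'
      have hp1 := F_pair 1 s t z
      have hp2 := F_pair 1 s' (s+t-s') z
      have hq1 := F_pair 0 s t z
      have hq2 := F_pair 0 s' (s+t-s') z
      rw [F_zero] at hq1 hq2
      rw [hp1, hp2, hq1, hq2, F_one, F_one, F_one]
      simp only [List.sum_cons]
      ring
    | (e+2) =>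
      intro s t s' t' z hsum
      have IH1 := IH (e+1) (by omega) s t s' t' z hsum
      have IH2 := IH e (by omega) s t s' t' z hsum
      have ht' : t' = s + t - s' := by linarith
      subst ht'
      have hp1 := F_pair (e+2) s t z
      have hp2 := F_pair (e+2) s' (s+t-s') z
      have hp3 := F_pair e s t ((s'::(s+t-s')::z))
      linear_combination hp1 - hp2 - (s'*(s+t-s') - s*t)*hp3 + (s+t)*IH1 - (s*t)*IH2

lemma F_transfer_le (d : ℕ) (hd : Even d) (s t δ : ℝ) (hδ : 0 ≤ δ)
    (hst : t + δ ≤ s - δ) (z : List ℝ) :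
    F d ((s-δ)::(t+δ)::z) ≤ F d (s::t::z) := by
  match d with
  | 0 => rw [F_zero, F_zero]
  | 1 => rw [F_one, F_one]; simp only [List.sum_cons]; linarith
  | (e+2) =>
    have h := F_transfer e s t (s-δ) (t+δ) z (by ring)
    have he : Even e := by
      rcases hd with ⟨k, hk⟩
      exact ⟨k-1, by omega⟩
    have h1 : 0 ≤ F e (s::t::(s-δ)::(t+δ)::z) := F_nonneg e he _
    have h2 : 0 ≤ (s-δ)*(t+δ) - s*t := by nlinarith
    nlinarith [mul_nonneg h2 h1]
lemma pSum_total {n : ℕ} (x : Fin n → ℝ) {m : ℕ} (h : n ≤ m) : pSum x m = ∑ i, x i := by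
  rw [pSum, Finset.filter_true_of_mem (fun i _ => lt_of_lt_of_le i.isLt h)]

lemma pSum_update {n : ℕ} (x : Fin n → ℝ) (i : Fin n) (a : ℝ) (m : ℕ) :
    pSum (Function.update x i a) m = pSum x m + (if (i:ℕ) < m then a - x i else 0) := by
  by_cases h : (i:ℕ) < m
  · rw [if_pos h]
    have hi : i ∈ Finset.univ.filter (fun i : Fin n => (i : ℕ) < m) := by
      simp [h]
    rw [pSum, pSum, ← Finset.add_sum_erase _ _ hi, ← Finset.add_sum_erase _ _ hi]
    rw [Function.update_self]
    have : ∀ b ∈ (Finset.univ.filter (fun i : Fin n => (i : ℕ) < m)).erase i,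
        Function.update x i a b = x b := by
      intro b hb
      exact Function.update_of_ne (Finset.ne_of_mem_erase hb) _ _
    rw [Finset.sum_congr rfl this]
    ring
  · rw [if_neg h, add_zero, pSum, pSum]
    refine Finset.sum_congr rfl fun b hb => ?_
    refine Function.update_of_ne (fun hbi => ?_) _ _
    exact h (hbi ▸ (Finset.mem_filter.mp hb).2)

lemma pSum_succ {n : ℕ} (x : Fin n → ℝ) (j : Fin n) :
    pSum x ((j:ℕ)+1) = pSum x (j:ℕ) + x j := by
  rw [pSum, pSum]
  have hj : j ∈ Finset.univ.filter (fun i : Fin n => (i : ℕ) < (j:ℕ)+1) := by simp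
  rw [← Finset.add_sum_erase _ _ hj, add_comm]
  congr 1
  apply Finset.sum_congr
  · ext b
    simp only [Finset.mem_erase, Finset.mem_filter, Finset.mem_univ, true_and]
    constructor
    · rintro ⟨hbj, hb⟩
      have : (b:ℕ) ≠ (j:ℕ) := fun h => hbj (Fin.ext h)
      omega
    · intro hb
      exact ⟨fun h => by omega, by omega⟩
  · intro _ _; rfl

lemma pSum_split {n : ℕ} (x : Fin n → ℝ) {m m' : ℕ} (h : m' ≤ m) :
    pSum x m = pSum x m' + ∑ i ∈ Finset.univ.filter (fun i : Fin n => m' ≤ (i:ℕ) ∧ (i:ℕ) < m), x i := by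
  rw [pSum, pSum, ← Finset.sum_union]
  · congr 1
    ext b
    simp only [Finset.mem_union, Finset.mem_filter, Finset.mem_univ, true_and]
    omega
  · rw [Finset.disjoint_filter]
    intro b _ hb
    simp only [not_and, not_lt]
    omega
theorem main_ind (n d : ℕ) (hd : Even d) :
    ∀ (N : ℕ) (u v : Fin n → ℝ),
    (Finset.univ.filter fun i => u i ≠ v i).card ≤ N →
    Antitone u → Antitone v → (∀ m : ℕ, pSum u m ≤ pSum v m) → pSum u n = pSum v n →
    F d (List.ofFn u) ≤ F d (List.ofFn v) := by
  intro N
  induction N with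
  | zero =>
    intro u v hcard _ _ _ _
    have : u = v := by
      funext i
      by_contra hne
      have : i ∈ Finset.univ.filter fun i => u i ≠ v i := by simp [hne]
      have := Finset.card_pos.mpr ⟨i, this⟩
      omega
    rw [this]
  | succ N ihN =>
    intro u v hcard hu hv hps htot
    by_cases huv : u = v
    · rw [huv]
    -- totals as full sums
    have htotsum : ∑ i, u i = ∑ i, v i := by
      rw [← pSum_total u (le_refl n), ← pSum_total v (le_refl n)]; exact htot
    -- find j : max index with u j < v j
    have hex : ∃ i, u i ≠ v i := Function.ne_iff.mp huv
    set S := Finset.univ.filter (fun i => u i < v i) with hS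
    have hSne : S.Nonempty := by
      by_contra hSe
      rw [Finset.not_nonempty_iff_eq_empty] at hSe
      have hle : ∀ i : Fin n, v i ≤ u i := by
        intro i
        by_contra hlt
        push_neg at hlt
        have : i ∈ S := by simp [hS, hlt]
        simp [hSe] at this
      obtain ⟨i₀, hi₀⟩ := hex
      have : ∑ i, v i < ∑ i, u i :=
        Finset.sum_lt_sum (fun i _ => hle i)
          ⟨i₀, Finset.mem_univ _, lt_of_le_of_ne (hle i₀) (Ne.symm hi₀)⟩
      linarith
    set j := S.max' hSne with hjdef
    have hj : u j < v j := by
      have := S.max'_mem hSne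
      simp only [hS, Finset.mem_filter] at this
      exact this.2
    have hjmax : ∀ i : Fin n, u i < v i → i ≤ j := by
      intro i hi
      exact S.le_max' i (by simp [hS, hi])
    -- find k : min index > j with v k < u k
    set T := Finset.univ.filter (fun i : Fin n => j < i ∧ v i < u i) with hT
    have hTne : T.Nonempty := by
      by_contra hTe
      rw [Finset.not_nonempty_iff_eq_empty] at hTe
      have hle : ∀ i : Fin n, j < i → u i ≤ v i := by
        intro i hji
        by_contra hlt
        push_neg at hlt
        have : i ∈ T := by simp [hT, hji, hlt]
        simp [hTe] at this
      -- pSum beyond j+1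
      have hsplitu := pSum_split u (show (j:ℕ)+1 ≤ n from j.isLt)
      have hsplitv := pSum_split v (show (j:ℕ)+1 ≤ n from j.isLt)
      have hsum_le : ∑ i ∈ Finset.univ.filter (fun i : Fin n => (j:ℕ)+1 ≤ (i:ℕ) ∧ (i:ℕ) < n), u i
          ≤ ∑ i ∈ Finset.univ.filter (fun i : Fin n => (j:ℕ)+1 ≤ (i:ℕ) ∧ (i:ℕ) < n), v i := by
        refine Finset.sum_le_sum fun i hi => ?_
        have := (Finset.mem_filter.mp hi).2
        exact hle i (by rw [Fin.lt_def]; omega)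
      have h1 : pSum u ((j:ℕ)+1) < pSum v ((j:ℕ)+1) := by
        rw [pSum_succ u j, pSum_succ v j]
        have := hps (j:ℕ)
        linarith
      rw [hsplitu, hsplitv] at htot
      linarith
    set k := T.min' hTne with hkdef
    have hkmem := T.min'_mem hTne
    simp only [hT, Finset.mem_filter] at hkmem
    have hjk : j < k := hkmem.2.1
    have hk : v k < u k := hkmem.2.2
    have hkmin : ∀ i : Fin n, j < i → v i < u i → k ≤ i := by
      intro i h1 h2
      exact T.min'_le i (by simp [hT, h1, h2])
    have hbetween : ∀ i : Fin n, j < i → i < k → u i = v i := by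
      intro i h1 h2
      have hle1 : ¬ (u i < v i) := fun hlt => absurd (hjmax i hlt) (not_le.mpr h1)
      have hle2 : ¬ (v i < u i) := fun hlt => absurd (hkmin i h1 hlt) (not_le.mpr h2)
      linarith [not_lt.mp hle1, not_lt.mp hle2]
    set δ := min (v j - u j) (u k - v k) with hδdef
    have hδpos : 0 < δ := lt_min (by linarith) (by linarith)
    have hδ1 : u j ≤ v j - δ := by
      have := min_le_left (v j - u j) (u k - v k); linarith
    have hδ2 : v k + δ ≤ u k := by
      have := min_le_right (v j - u j) (u k - v k); linarith
    have hujk : u k ≤ u j := hu hjk.le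
    have hchain : v k + δ ≤ v j - δ := by linarith
    have hjkne : j ≠ k := ne_of_lt hjk
    set v' := Function.update (Function.update v j (v j - δ)) k (v k + δ) with hv'def
    have hv'k : v' k = v k + δ := Function.update_self _ _ _
    have hv'j : v' j = v j - δ := by
      rw [hv'def, Function.update_of_ne hjkne, Function.update_self]
    have hv'other : ∀ i : Fin n, i ≠ j → i ≠ k → v' i = v i := by
      intro i h1 h2
      rw [hv'def, Function.update_of_ne h2, Function.update_of_ne h1]
    -- antitone v'
    have hv' : Antitone v' := by
      intro i₁ i₂ hle
      rcases eq_or_lt_of_le hle with heq | hlt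
      · rw [heq]
      rcases eq_or_ne i₁ j with h1j | h1j
    -- i₁ = j
      · subst h1j
        rcases eq_or_ne i₂ k with h2k | h2k
        · subst h2k; rw [hv'j, hv'k]; exact hchain
        · rcases lt_or_gt_of_ne h2k with hlt2 | hgt2
          · rw [hv'j, hv'other i₂ (ne_of_gt hlt) h2k, ← hbetween i₂ hlt hlt2]
            linarith [hu hlt.le]
          · rw [hv'j, hv'other i₂ (ne_of_gt hlt) h2k]
            have := hv hgt2.le
            linarith
      rcases eq_or_ne i₁ k with h1k | h1k
    -- i₁ = k
      · subst h1k
        have h2j : i₂ ≠ j := ne_of_gt (lt_trans hjk hlt)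
        have h2k : i₂ ≠ k := ne_of_gt hlt
        rw [hv'k, hv'other i₂ h2j h2k]
        have := hv hlt.le
        linarith
    -- i₁ ∉ {j, k}
      rcases eq_or_ne i₂ j with h2j | h2j
      · subst h2j
        rw [hv'j, hv'other i₁ h1j h1k]
        have := hv hlt.le
        linarith
      rcases eq_or_ne i₂ k with h2k | h2k
      · subst h2k
        rw [hv'k, hv'other i₁ h1j h1k]
        rcases lt_or_gt_of_ne h1j with hlt1 | hgt1
        · have := hv hlt1.le
          linarith
        · rw [← hbetween i₁ hgt1 hlt]
          linarith [hu hlt.le]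
      · rw [hv'other i₁ h1j h1k, hv'other i₂ h2j h2k]
        exact hv hle
    -- partial sums of v'
    have hpsv' : ∀ m : ℕ, pSum v' m
        = pSum v m + (if (j:ℕ) < m then -δ else 0) + (if (k:ℕ) < m then δ else 0) := by
      intro m
      rw [hv'def, pSum_update, pSum_update]
      rw [Function.update_of_ne (Ne.symm hjkne)]
      congr 1
      · congr 1
        by_cases hm : (j:ℕ) < m <;> simp [hm] <;> ring
      · by_cases hm : (k:ℕ) < m <;> simp [hm] <;> ring
    have hps' : ∀ m : ℕ, pSum u m ≤ pSum v' m := by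
      intro m
      rw [hpsv' m]
      by_cases hjm : (j:ℕ) < m
      · by_cases hkm : (k:ℕ) < m
        · simp only [if_pos hjm, if_pos hkm]
          have := hps m
          linarith
        · -- j < m ≤ k : need slack δ
          simp only [if_pos hjm, if_neg hkm]
          have hm1 : (j:ℕ)+1 ≤ m := hjm
          have hsplitu := pSum_split u hm1
          have hsplitv := pSum_split v hm1
          have hsums : ∑ i ∈ Finset.univ.filter (fun i : Fin n => (j:ℕ)+1 ≤ (i:ℕ) ∧ (i:ℕ) < m), u i
              = ∑ i ∈ Finset.univ.filter (fun i : Fin n => (j:ℕ)+1 ≤ (i:ℕ) ∧ (i:ℕ) < m), v i := by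
            refine Finset.sum_congr rfl fun i hi => ?_
            have hmem := (Finset.mem_filter.mp hi).2
            refine hbetween i ?_ ?_
            · rw [Fin.lt_def]; omega
            · rw [Fin.lt_def]; push_neg at hkm; omega
          have h1 : pSum u ((j:ℕ)+1) + δ ≤ pSum v ((j:ℕ)+1) := by
            rw [pSum_succ u j, pSum_succ v j]
            have := hps (j:ℕ)
            have := min_le_left (v j - u j) (u k - v k)
            simp only [hδdef]
            linarith
          rw [hsplitu, hsplitv, hsums]
          linarith
      · have hkm : ¬ ((k:ℕ) < m) := by
          push_neg at hjm ⊢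
          have := hjk
          rw [Fin.lt_def] at this
          omega
        simp only [if_neg hjm, if_neg hkm]
        have := hps m
        linarith
    have htot' : pSum u n = pSum v' n := by
      rw [hpsv' n, if_pos j.isLt, if_pos k.isLt]
      linarith
    -- measure decreases
    have hsub : (Finset.univ.filter fun i => u i ≠ v' i) ⊆ (Finset.univ.filter fun i => u i ≠ v i) := by
      intro i hi
      rw [Finset.mem_filter] at hi ⊢
      refine ⟨Finset.mem_univ _, ?_⟩
      rcases eq_or_ne i j with h | h
      · subst h; exact ne_of_lt hj
      rcases eq_or_ne i k with h2 | h2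
      · subst h2; exact (ne_of_gt hk)
      · rw [← hv'other i h h2]; exact hi.2
    have hssub : (Finset.univ.filter fun i => u i ≠ v' i) ⊂ (Finset.univ.filter fun i => u i ≠ v i) := by
      refine ⟨hsub, ?_⟩
      intro hcon
      rcases le_total (v j - u j) (u k - v k) with hc | hc
      · have hδeq : δ = v j - u j := min_eq_left hc
        have : j ∈ (Finset.univ.filter fun i => u i ≠ v i) := by
          simp [ne_of_lt hj]
        have hj' := hcon this
        rw [Finset.mem_filter] at hj'
        apply hj'.2
        rw [hv'j, hδeq]
        ring
      · have hδeq : δ = u k - v k := min_eq_right hc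
        have : k ∈ (Finset.univ.filter fun i => u i ≠ v i) := by
          simp [ne_of_gt hk]
        have hk' := hcon this
        rw [Finset.mem_filter] at hk'
        apply hk'.2
        rw [hv'k, hδeq]
        ring
    have hcard' : (Finset.univ.filter fun i => u i ≠ v' i).card ≤ N := by
      have := Finset.card_lt_card hssub
      omega
    -- F inequality between v' and v
    have hrestmem : ∀ i : Fin n, i ∈ (((List.finRange n).erase j).erase k) → i ≠ j ∧ i ≠ k := by
      intro i hi
      have hnd : ((List.finRange n).erase j).Nodup := (List.nodup_finRange n).erase _
      have h2 := (List.Nodup.mem_erase_iff hnd).mp hi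
      have h3 := (List.Nodup.mem_erase_iff (List.nodup_finRange n)).mp h2.2
      exact ⟨h3.1, h2.1⟩
    have hpermv : (List.ofFn v).Perm (v j :: v k :: (((List.finRange n).erase j).erase k).map v) := by
      rw [List.ofFn_eq_map]
      have p1 : (List.finRange n).Perm (j :: (List.finRange n).erase j) :=
        List.perm_cons_erase (List.mem_finRange j)
      have hkmem' : k ∈ (List.finRange n).erase j := by
        rw [List.Nodup.mem_erase_iff (List.nodup_finRange n)]
        exact ⟨Ne.symm hjkne, List.mem_finRange k⟩
      have p2 : ((List.finRange n).erase j).Perm (k :: ((List.finRange n).erase j).erase k) :=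
        List.perm_cons_erase hkmem'
      have : (List.finRange n).Perm (j :: k :: ((List.finRange n).erase j).erase k) :=
        p1.trans (List.Perm.cons j p2)
      simpa using this.map v
    have hpermv' : (List.ofFn v').Perm
        ((v j - δ) :: (v k + δ) :: (((List.finRange n).erase j).erase k).map v) := by
      rw [List.ofFn_eq_map]
      have p1 : (List.finRange n).Perm (j :: (List.finRange n).erase j) :=
        List.perm_cons_erase (List.mem_finRange j)
      have hkmem' : k ∈ (List.finRange n).erase j := by
        rw [List.Nodup.mem_erase_iff (List.nodup_finRange n)]
        exact ⟨Ne.symm hjkne, List.mem_finRange k⟩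
      have p2 : ((List.finRange n).erase j).Perm (k :: ((List.finRange n).erase j).erase k) :=
        List.perm_cons_erase hkmem'
      have hp : (List.finRange n).Perm (j :: k :: ((List.finRange n).erase j).erase k) :=
        p1.trans (List.Perm.cons j p2)
      have := hp.map v'
      rw [List.map_cons, List.map_cons, hv'j, hv'k] at this
      have hmapeq : (((List.finRange n).erase j).erase k).map v'
          = (((List.finRange n).erase j).erase k).map v := by
        refine List.map_congr_left fun i hi => ?_
        obtain ⟨h1, h2⟩ := hrestmem i hi
        exact hv'other i h1 h2
      rw [hmapeq] at this
      simpa using this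
    have hFle : F d (List.ofFn v') ≤ F d (List.ofFn v) := by
      rw [F_perm d hpermv, F_perm d hpermv']
      exact F_transfer_le d hd (v j) (v k) δ hδpos.le hchain _
    exact le_trans (ihN u v' hcard' hu hv' hps' htot') hFle

/-- Even-degree complete homogeneous symmetric polynomials are Schur-convex. -/
theorem chs_schur_convex (n d : ℕ) (hd : Even d) (x y : Fin n → ℝ)
    (h : Majorizes x y) : chs n d x ≤ chs n d y := by
  obtain ⟨hps, htot⟩ := h
  have husum : ∑ i, decSort x i = ∑ i, x i := by
    rw [decSort]
    exact Equiv.sum_comp (Tuple.sort (fun i => -x i)) x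
  have hvsum : ∑ i, decSort y i = ∑ i, y i := by
    rw [decSort]
    exact Equiv.sum_comp (Tuple.sort (fun i => -y i)) y
  have hu : Antitone (decSort x) := by
    intro i j hij
    have := Tuple.monotone_sort (fun i => -x i) hij
    simp only [Function.comp_apply] at this
    simp only [decSort, Function.comp_apply]
    linarith
  have hv : Antitone (decSort y) := by
    intro i j hij
    have := Tuple.monotone_sort (fun i => -y i) hij
    simp only [Function.comp_apply] at this
    simp only [decSort, Function.comp_apply]
    linarith
  have hps' : ∀ m : ℕ, pSum (decSort x) m ≤ pSum (decSort y) m := by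
    intro m
    rcases lt_or_ge m n with hm | hm
    · exact hps m hm
    · rw [pSum_total _ hm, pSum_total _ hm, husum, hvsum, htot]
  have htot' : pSum (decSort x) n = pSum (decSort y) n := by
    rw [pSum_total _ (le_refl n), pSum_total _ (le_refl n), husum, hvsum, htot]
  have h1 : chs n d x = chs n d (decSort x) := (chs_perm x (Tuple.sort (fun i => -x i))).symm
  have h2 : chs n d y = chs n d (decSort y) := (chs_perm y (Tuple.sort (fun i => -y i))).symm
  rw [h1, h2, chs_eq_F, chs_eq_F]
  exact main_ind n d hd _ (decSort x) (decSort y) (le_refl _) hu hv hps' htot'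
end

section
/- For all x ∈ ℝⁿ and even d ≥ 0, h_d(x) ≥ x̄^d · C(n+d−1, d), where x̄ = (x₁+⋯+xₙ)/n is the arithmetic mean of the coordinates. -/
open Finset

namespace ChsAux

variable {n d : ℕ}

/-- multiplicity of value `i` in the tuple `g` -/
def cnt (g : Fin d → Fin n) (i : Fin n) : ℕ := #(Finset.univ.filter fun j => g j = i)

lemma prod_comp_eq_prod_pow (g : Fin d → Fin n) (v : Fin n → ℝ) :
    ∏ j, v (g j) = ∏ i, v i ^ cnt g i := by
  rw [← Finset.prod_fiberwise_of_maps_to (g := g) (fun j _ => Finset.mem_univ (g j))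
      (fun j => v (g j))]
  refine Finset.prod_congr rfl fun i _ => ?_
  rw [Finset.prod_congr rfl (fun j hj => by rw [(Finset.mem_filter.1 hj).2] : ∀ j ∈ _, v (g j) = v i),
    Finset.prod_const, cnt]

lemma cnt_comp_perm (g : Fin d → Fin n) (ρ : Equiv.Perm (Fin d)) (i : Fin n) :
    cnt (g ∘ ρ) i = cnt g i := by
  unfold cnt
  apply Finset.card_bij (fun j _ => ρ j)
  · intro j hj
    simp only [Finset.mem_filter, Finset.mem_univ, true_and] at hj ⊢
    exact hj
  · intro a _ b _ hab
    exact ρ.injective hab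
  · intro k hk
    simp only [Finset.mem_filter, Finset.mem_univ, true_and, Function.comp] at hk ⊢
    exact ⟨ρ.symm k, by simp [hk]⟩

lemma cnt_perm_comp (g : Fin d → Fin n) (π : Equiv.Perm (Fin n)) (i : Fin n) :
    cnt (π ∘ g) i = cnt g (π.symm i) := by
  unfold cnt
  congr 1
  apply Finset.filter_congr
  intro j _
  simp [Function.comp, Equiv.apply_eq_iff_eq_symm_apply]

/-- stabilizer of a tuple under precomposition by permutations -/
def stabEquiv (h : Fin d → Fin n) :
    ((i : Fin n) → Equiv.Perm {j // h j = i}) ≃ {σ : Equiv.Perm (Fin d) // h ∘ σ = h} where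
  toFun π := ⟨Equiv.ofFiberEquiv (f := h) (g := h) π,
    funext fun j => Equiv.ofFiberEquiv_map π j⟩
  invFun σp := fun i =>
    { toFun := fun u => ⟨σp.1 u.1, by
        have := congrFun σp.2 u.1
        simpa [Function.comp, u.2] using this⟩
      invFun := fun u => ⟨σp.1.symm u.1, by
        have := congrFun σp.2 (σp.1.symm u.1)
        simp only [Function.comp, Equiv.apply_symm_apply] at this
        rw [← this, u.2]⟩
      left_inv := fun u => by simp
      right_inv := fun u => by simp }
  left_inv := by
    intro π
    funext i
    ext u
    obtain ⟨j, rfl⟩ := u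
    rfl
  right_inv := by
    intro σp
    ext j
    simp [Equiv.ofFiberEquiv]

lemma card_stab (h : Fin d → Fin n) :
    Fintype.card {σ : Equiv.Perm (Fin d) // h ∘ σ = h} = ∏ i, (cnt h i).factorial := by
  rw [← Fintype.card_congr (stabEquiv h), Fintype.card_pi]
  refine Finset.prod_congr rfl fun i _ => ?_
  rw [Fintype.card_perm, Fintype.card_subtype]
  rfl

/-- the Finset of monotone tuples, as in `chs` -/
def mono (n d : ℕ) : Finset (Fin d → Fin n) :=
  Finset.univ.filter fun f => ∀ i j : Fin d, i ≤ j → f i ≤ f j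

lemma mem_mono_iff {f : Fin d → Fin n} : f ∈ mono n d ↔ Monotone f := by
  simp only [mono, Finset.mem_filter, Finset.mem_univ, true_and]
  exact ⟨fun h a b hab => h a b hab, fun h a b hab => h hab⟩

noncomputable def monoSymEquiv (n d : ℕ) : {f // f ∈ mono n d} ≃ Sym (Fin n) d := by
  apply Equiv.ofBijective
    (fun f => (⟨Multiset.map f.1 Finset.univ.val, by simp⟩ : Sym (Fin n) d))
  constructor
  · intro f f' h
    have hm : Multiset.map f.1 Finset.univ.val = Multiset.map f'.1 Finset.univ.val :=
      congrArg Subtype.val h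
    simp only [Fin.univ_val_map] at hm
    have hperm : (List.ofFn f.1).Perm (List.ofFn f'.1) := Multiset.coe_eq_coe.1 hm
    exact Subtype.ext <| List.ofFn_injective <| List.Perm.eq_of_sortedLE
      (List.sortedLE_ofFn_iff.2 (mem_mono_iff.1 f.2))
      (List.sortedLE_ofFn_iff.2 (mem_mono_iff.1 f'.2)) hperm
  · intro s
    obtain ⟨l, hl⟩ : ∃ l : List (Fin n), (↑l : Multiset (Fin n)) = s.1 :=
      ⟨s.1.toList, Multiset.coe_toList _⟩
    have hlen : l.length = d := by
      have := s.2
      rw [← hl] at this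
      simpa using this
    set f₀ : Fin d → Fin n := fun j => l.get (Fin.cast hlen.symm j) with hf₀
    refine ⟨⟨f₀ ∘ ⇑(Tuple.sort f₀), mem_mono_iff.2 (Tuple.monotone_sort f₀)⟩, ?_⟩
    apply Subtype.ext
    simp only [Fin.univ_val_map]
    rw [← hl]
    apply Multiset.coe_eq_coe.2
    refine (Equiv.Perm.ofFn_comp_perm (Tuple.sort f₀) f₀).trans ?_
    have : List.ofFn f₀ = l := by
      apply List.ext_get (by simpa using hlen.symm)
      intro i h1 h2
      simp [hf₀]
    rw [this]

lemma card_mono : #(mono n d) = (n + d - 1).choose d := by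
  rw [← Fintype.card_coe]
  rw [Fintype.card_congr (monoSymEquiv n d), Sym.card_sym_eq_choose, Fintype.card_fin]

lemma fiber_card (g : Fin d → Fin n) :
    #(((mono n d) ×ˢ (Finset.univ : Finset (Equiv.Perm (Fin d)))).filter
        fun p : (Fin d → Fin n) × Equiv.Perm (Fin d) => p.1 ∘ ⇑p.2 = g) = ∏ i, (cnt g i).factorial := by
  set ρ := Tuple.sort g with hρ
  have hsg : Monotone (g ∘ ⇑ρ) := Tuple.monotone_sort g
  have key : ∀ f : Fin d → Fin n, ∀ σ : Equiv.Perm (Fin d),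
      f ∈ mono n d → f ∘ ⇑σ = g → f = g ∘ ⇑ρ := by
    intro f σ hf hfσ
    have h1 : Monotone (f ∘ ⇑(σ * ρ)) := by
      have e : f ∘ ⇑(σ * ρ) = (f ∘ ⇑σ) ∘ ⇑ρ := rfl
      rw [e, hfσ]; exact hsg
    have h2 : Monotone (f ∘ ⇑(1 : Equiv.Perm (Fin d))) := by
      simpa using mem_mono_iff.1 hf
    have huniq := Tuple.unique_monotone h1 h2
    have e1 : f ∘ ⇑(σ * ρ) = g ∘ ⇑ρ := by
      have e : f ∘ ⇑(σ * ρ) = (f ∘ ⇑σ) ∘ ⇑ρ := rfl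
      rw [e, hfσ]
    have e2 : f ∘ ⇑(1 : Equiv.Perm (Fin d)) = f := by ext j; simp
    rw [e1, e2] at huniq
    exact huniq.symm
  have hstab : #(Finset.univ.filter fun σ : Equiv.Perm (Fin d) => (g ∘ ⇑ρ) ∘ ⇑σ = g ∘ ⇑ρ)
      = ∏ i, (cnt g i).factorial := by
    rw [← Fintype.card_subtype, card_stab]
    exact Finset.prod_congr rfl fun i _ => by rw [cnt_comp_perm]
  rw [← hstab]
  apply Finset.card_bij' (fun p _ => p.2 * ρ) (fun σ _ => (g ∘ ⇑ρ, σ * ρ⁻¹))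
  · intro p hp
    simp only [Finset.mem_filter, Finset.mem_product, Finset.mem_univ, and_true, true_and] at hp ⊢
    have hfe := key p.1 p.2 hp.1 hp.2
    have e : (g ∘ ⇑ρ) ∘ ⇑(p.2 * ρ) = (p.1 ∘ ⇑p.2) ∘ ⇑ρ := by rw [← hfe]; rfl
    rw [e, hp.2]
  · intro σ hσ
    simp only [Finset.mem_filter, Finset.mem_univ, true_and] at hσ
    simp only [Finset.mem_filter, Finset.mem_product, Finset.mem_univ, and_true, true_and]
    refine ⟨mem_mono_iff.2 hsg, ?_⟩
    have e : (g ∘ ⇑ρ) ∘ ⇑(σ * ρ⁻¹) = ((g ∘ ⇑ρ) ∘ ⇑σ) ∘ ⇑ρ⁻¹ := rfl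
    rw [e, hσ]
    ext j
    simp
  · intro p hp
    simp only [Finset.mem_filter, Finset.mem_product, Finset.mem_univ, and_true, true_and] at hp
    have hfe := key p.1 p.2 hp.1 hp.2
    refine Prod.ext hfe.symm ?_
    simp [mul_assoc]
  · intro σ hσ
    simp

lemma sum_M (x : Fin n → ℝ) :
    ∑ g : Fin d → Fin n, (∏ j, x (g j)) * ∏ i, ((cnt g i).factorial : ℝ)
      = (d.factorial : ℝ) * ∑ f ∈ mono n d, ∏ j, x (f j) := by
  have step1 : (d.factorial : ℝ) * ∑ f ∈ mono n d, ∏ j, x (f j)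
      = ∑ p ∈ (mono n d) ×ˢ (Finset.univ : Finset (Equiv.Perm (Fin d))),
          ∏ j, x ((p.1 ∘ ⇑p.2) j) := by
    rw [Finset.sum_product, Finset.mul_sum]
    refine Finset.sum_congr rfl fun f _ => ?_
    have e : ∀ σ : Equiv.Perm (Fin d), ∏ j, x ((f ∘ ⇑σ) j) = ∏ j, x (f j) := fun σ =>
      Equiv.prod_comp σ (fun j => x (f j))
    rw [Finset.sum_congr rfl (fun σ _ => e σ), Finset.sum_const, Finset.card_univ,
      Fintype.card_perm, Fintype.card_fin, nsmul_eq_mul]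
  rw [step1, ← Finset.sum_fiberwise_of_maps_to
    (fun p _ => Finset.mem_univ (p.1 ∘ ⇑p.2) : ∀ p ∈ (mono n d) ×ˢ (Finset.univ : Finset (Equiv.Perm (Fin d))), p.1 ∘ ⇑p.2 ∈ Finset.univ)
    (fun p : (Fin d → Fin n) × Equiv.Perm (Fin d) => ∏ j, x ((p.1 ∘ ⇑p.2) j))]
  refine Finset.sum_congr rfl fun g _ => ?_
  have hcg : ∀ p ∈ ((mono n d) ×ˢ (Finset.univ : Finset (Equiv.Perm (Fin d)))).filter
      (fun p : (Fin d → Fin n) × Equiv.Perm (Fin d) => p.1 ∘ ⇑p.2 = g), ∏ j, x ((p.1 ∘ ⇑p.2) j) = ∏ j, x (g j) := fun p hp => by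
    rw [(Finset.mem_filter.1 hp).2]
  rw [Finset.sum_congr rfl hcg,
    Finset.sum_const, fiber_card, nsmul_eq_mul, Nat.cast_prod, mul_comm]

lemma sum_M_cross (m : ℕ) (x : Fin n → ℝ) :
    (n : ℝ) * ∑ g : Fin (m+1) → Fin n, x (g 0) * ∏ i, ((cnt g i).factorial : ℝ)
      = (∑ i, x i) * ∑ g : Fin (m+1) → Fin n, ∏ i, ((cnt g i).factorial : ℝ) := by
  rcases Nat.eq_zero_or_pos n with hn | hn
  · subst hn
    simp
  set M : (Fin (m+1) → Fin n) → ℝ := fun g => ∏ i, ((cnt g i).factorial : ℝ) with hM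
  set S : Fin n → ℝ := fun i =>
    ∑ g ∈ Finset.univ.filter (fun g : Fin (m+1) → Fin n => g 0 = i), M g with hS
  have hSconst : ∀ i i' : Fin n, S i = S i' := by
    intro i i'
    simp only [hS]
    apply Finset.sum_nbij' (fun g => ⇑(Equiv.swap i i') ∘ g) (fun g => ⇑(Equiv.swap i i') ∘ g)
    · intro g hg
      simp only [Finset.mem_filter, Finset.mem_univ, true_and] at hg ⊢
      simp [Function.comp, hg, Equiv.swap_apply_left]
    · intro g hg
      simp only [Finset.mem_filter, Finset.mem_univ, true_and] at hg ⊢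
      simp [Function.comp, hg, Equiv.swap_apply_right]
    · intro g _
      ext j
      simp
    · intro g _
      ext j
      simp
    · intro g _
      simp only [hM]
      rw [← Equiv.prod_comp (Equiv.swap i i').symm (fun k => ((cnt g k).factorial : ℝ))]
      exact Finset.prod_congr rfl fun k _ => by rw [cnt_perm_comp]
  obtain ⟨c⟩ : Nonempty (Fin n) := ⟨⟨0, hn⟩⟩
  have hA : ∑ g : Fin (m+1) → Fin n, x (g 0) * M g = (∑ i, x i) * S c := by
    rw [← Finset.sum_fiberwise_of_maps_to (fun g _ => Finset.mem_univ (g 0))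
      (fun g => x (g 0) * M g), Finset.sum_mul]
    refine Finset.sum_congr rfl fun i _ => ?_
    have hcg : ∀ g ∈ Finset.univ.filter (fun g : Fin (m+1) → Fin n => g 0 = i),
        x (g 0) * M g = x i * M g := fun g hg => by
      rw [(Finset.mem_filter.1 hg).2]
    rw [Finset.sum_congr rfl hcg, ← Finset.mul_sum]
    have hfold : ∑ g ∈ Finset.univ.filter (fun g : Fin (m+1) → Fin n => g 0 = i), M g = S i := rfl
    rw [hfold, hSconst i c]
  have hB : ∑ g : Fin (m+1) → Fin n, M g = (n : ℝ) * S c := by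
    rw [← Finset.sum_fiberwise_of_maps_to (fun g _ => Finset.mem_univ (g 0)) M]
    rw [Finset.sum_congr rfl (fun i _ => hSconst i c), Finset.sum_const, Finset.card_univ,
      Fintype.card_fin, nsmul_eq_mul]
  rw [hA, hB]
  ring

/-! ## Analysis part -/

open MeasureTheory Real

noncomputable def oneDim (c : ℕ) : ℝ → ℝ :=
  Set.indicator (Set.Ioi (0:ℝ)) (fun t => t ^ c * Real.exp (-t))

lemma oneDim_eq (c : ℕ) :
    (fun t : ℝ => t ^ c * Real.exp (-t)) = fun t => Real.exp (-t) * t ^ ((c:ℝ) + 1 - 1) := by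
  funext t
  rw [show ((c:ℝ) + 1 - 1) = (c:ℝ) by ring, Real.rpow_natCast, mul_comm]

lemma oneDim_integrable (c : ℕ) : Integrable (oneDim c) := by
  rw [oneDim, integrable_indicator_iff measurableSet_Ioi]
  have h := Real.GammaIntegral_convergent (s := (c:ℝ) + 1) (by positivity)
  rw [oneDim_eq]
  exact h

lemma oneDim_integral (c : ℕ) : ∫ t, oneDim c t = (c.factorial : ℝ) := by
  rw [oneDim, integral_indicator measurableSet_Ioi]
  calc ∫ t in Set.Ioi (0:ℝ), t ^ c * Real.exp (-t)
      = ∫ t in Set.Ioi (0:ℝ), Real.exp (-t) * t ^ ((c:ℝ) + 1 - 1) := by rw [oneDim_eq]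
    _ = Real.Gamma ((c:ℝ) + 1) := (Real.Gamma_eq_integral (by positivity)).symm
    _ = (c.factorial : ℝ) := Real.Gamma_nat_eq_factorial c

lemma oneDim_nonneg (c : ℕ) (t : ℝ) : 0 ≤ oneDim c t := by
  apply Set.indicator_nonneg
  intro a ha
  have : (0:ℝ) < a := ha
  positivity

/-- the product weight `∏ e^{-yᵢ} 1_{yᵢ>0}` -/
noncomputable def W (y : Fin n → ℝ) : ℝ := ∏ i, oneDim 0 (y i)

lemma W_nonneg (y : Fin n → ℝ) : 0 ≤ W y :=
  Finset.prod_nonneg fun i _ => oneDim_nonneg 0 (y i)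

lemma mono_prod_eq (c : Fin n → ℕ) (y : Fin n → ℝ) :
    (∏ i, (y i) ^ (c i)) * W y = ∏ i, oneDim (c i) (y i) := by
  rw [W, ← Finset.prod_mul_distrib]
  refine Finset.prod_congr rfl fun i _ => ?_
  unfold oneDim
  by_cases h : y i ∈ Set.Ioi (0:ℝ)
  · rw [Set.indicator_of_mem h, Set.indicator_of_mem h]; ring
  · rw [Set.indicator_of_notMem h, Set.indicator_of_notMem h]; ring

lemma mono_integrable (c : Fin n → ℕ) :
    Integrable (fun y : Fin n → ℝ => ∏ i, oneDim (c i) (y i)) :=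
  Integrable.fintype_prod (fun i => oneDim_integrable (c i))

lemma mono_integral (c : Fin n → ℕ) :
    ∫ y : Fin n → ℝ, ∏ i, oneDim (c i) (y i) = ∏ i, ((c i).factorial : ℝ) := by
  rw [MeasureTheory.integral_fintype_prod_volume_eq_prod (ι := Fin n) (fun i => oneDim (c i))]
  exact Finset.prod_congr rfl fun i _ => oneDim_integral _

lemma moment_pointwise (a : Fin d → Fin n → ℝ) (y : Fin n → ℝ) :
    (∏ j, ∑ i, a j i * y i) * W y
      = ∑ g : Fin d → Fin n, (∏ j, a j (g j)) * ∏ i, oneDim (cnt g i) (y i) := by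
  rw [Finset.prod_univ_sum (fun _ => (Finset.univ : Finset (Fin n)))
      (fun j i => a j i * y i)]
  rw [Fintype.piFinset_univ, Finset.sum_mul]
  refine Finset.sum_congr rfl fun g _ => ?_
  rw [Finset.prod_mul_distrib, mul_assoc, prod_comp_eq_prod_pow g y, mono_prod_eq]

lemma moment_integrable (a : Fin d → Fin n → ℝ) :
    Integrable (fun y : Fin n → ℝ => (∏ j, ∑ i, a j i * y i) * W y) := by
  have e : (fun y : Fin n → ℝ => (∏ j, ∑ i, a j i * y i) * W y)
      = fun y => ∑ g : Fin d → Fin n, (∏ j, a j (g j)) * ∏ i, oneDim (cnt g i) (y i) :=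
    funext (moment_pointwise a)
  rw [e]
  exact integrable_finset_sum _ (fun g _ => (mono_integrable _).const_mul _)

lemma moment_integral (a : Fin d → Fin n → ℝ) :
    ∫ y : Fin n → ℝ, (∏ j, ∑ i, a j i * y i) * W y
      = ∑ g : Fin d → Fin n, (∏ j, a j (g j)) * ∏ i, ((cnt g i).factorial : ℝ) := by
  simp_rw [moment_pointwise a]
  rw [integral_finset_sum _ (fun g _ => (mono_integrable _).const_mul _)]
  refine Finset.sum_congr rfl fun g _ => ?_
  rw [MeasureTheory.integral_const_mul, mono_integral]

/-! ## Specializations -/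

lemma chs_mono_eq (v : Fin n → ℝ) : chs n d v = ∑ f ∈ mono n d, ∏ j, v (f j) := rfl

lemma chs_one : chs n d (fun _ => (1:ℝ)) = ((n + d - 1).choose d : ℝ) := by
  rw [chs_mono_eq]
  simp only [Finset.prod_const_one]
  rw [Finset.sum_const, card_mono, nsmul_eq_mul, mul_one]

lemma pow_shape (v : Fin n → ℝ) :
    (fun y : Fin n → ℝ => (∑ i, v i * y i) ^ d * W y)
      = fun y => (∏ _j : Fin d, ∑ i, v i * y i) * W y := by
  funext y
  rw [Finset.prod_const, Finset.card_univ, Fintype.card_fin]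

lemma intPow_integrable (v : Fin n → ℝ) :
    Integrable (fun y : Fin n → ℝ => (∑ i, v i * y i) ^ d * W y) := by
  rw [pow_shape]
  exact moment_integrable _

lemma intPow (v : Fin n → ℝ) :
    ∫ y : Fin n → ℝ, (∑ i, v i * y i) ^ d * W y
      = (d.factorial : ℝ) * chs n d v := by
  rw [pow_shape, moment_integral (fun _ => v), sum_M, chs_mono_eq]

lemma cross_shape (x : Fin n → ℝ) (m : ℕ) :
    (fun y : Fin n → ℝ => ((∑ i, x i * y i) * (∑ i, y i) ^ m) * W y)
      = fun y => (∏ j : Fin (m+1),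
          ∑ i, (if j = 0 then x else fun _ => (1:ℝ)) i * y i) * W y := by
  funext y
  congr 1
  rw [Fin.prod_univ_succ]
  have h0 : ∑ i, (if (0 : Fin (m+1)) = 0 then x else fun _ => (1:ℝ)) i * y i
      = ∑ i, x i * y i := by simp
  have hs : ∀ j : Fin m, ∑ i, (if j.succ = 0 then x else fun _ => (1:ℝ)) i * y i
      = ∑ i, y i := by
    intro j
    simp [Fin.succ_ne_zero]
  rw [h0, Finset.prod_congr rfl (fun j _ => hs j), Finset.prod_const, Finset.card_univ,
    Fintype.card_fin]

lemma intCross_integrable (x : Fin n → ℝ) (m : ℕ) :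
    Integrable (fun y : Fin n → ℝ => ((∑ i, x i * y i) * (∑ i, y i) ^ m) * W y) := by
  rw [cross_shape]
  exact moment_integrable _

lemma intCross (x : Fin n → ℝ) (m : ℕ) :
    ∫ y : Fin n → ℝ, ((∑ i, x i * y i) * (∑ i, y i) ^ m) * W y
      = ∑ g : Fin (m+1) → Fin n, x (g 0) * ∏ i, ((cnt g i).factorial : ℝ) := by
  rw [cross_shape, moment_integral]
  refine Finset.sum_congr rfl fun g _ => ?_
  congr 1
  rw [Fin.prod_univ_succ]
  simp [Fin.succ_ne_zero]

/-! ## Tangent line inequality -/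

lemma tangent_even {d : ℕ} (hd : Even d) (z c : ℝ) :
    c ^ d + d * c ^ (d - 1) * (z - c) ≤ z ^ d := by
  rcases Nat.eq_zero_or_pos d with rfl | hdpos
  · simp
  rcases eq_or_ne c 0 with rfl | hc
  · have h1 : (0:ℝ) ^ (d-1) = 0 := by
      obtain ⟨r, hr⟩ := hd
      exact zero_pow (by omega)
    rw [zero_pow hdpos.ne', h1]
    simpa using hd.pow_nonneg z
  · have hcd : 0 < c ^ d := hd.pow_pos hc
    set a : ℝ := (z - c) / c with ha
    have key : 1 + (d:ℝ) * a ≤ (1 + a) ^ d := by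
      rcases le_or_gt (-2 : ℝ) a with h | h
      · exact one_add_mul_le_pow h d
      · have h1 : (0:ℝ) ≤ (1 + a) ^ d := hd.pow_nonneg _
        have h2 : (1:ℝ) ≤ (d:ℝ) := by exact_mod_cast hdpos
        nlinarith
    have hpow : c ^ (d-1) * c = c ^ d := by
      rw [← pow_succ]
      congr 1
      omega
    have hzc : c * (1 + a) = z := by
      rw [ha]
      field_simp
      ring
    calc c ^ d + d * c ^ (d-1) * (z - c)
        = c ^ d * (1 + d * a) := by
          rw [ha, mul_add, mul_one]
          congr 1
          rw [← hpow]
          field_simp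
      _ ≤ c ^ d * ((1 + a) ^ d) := mul_le_mul_of_nonneg_left key hcd.le
      _ = (c * (1 + a)) ^ d := by rw [mul_pow]
      _ = z ^ d := by rw [hzc]

end ChsAux

open ChsAux MeasureTheory

/-- `h_d(x) ≥ x̄^d · C(n+d-1, d)` where `x̄` is the arithmetic mean of the coordinates. -/
theorem chs_ge_mean_pow (n d : ℕ) (hd : Even d) (x : Fin n → ℝ) :
    ((∑ i, x i) / n) ^ d * (Nat.choose (n + d - 1) d : ℝ) ≤ chs n d x := by
  rcases Nat.eq_zero_or_pos d with rfl | hdpos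
  · have h1 : chs n 0 x = 1 := by
      rw [chs, Finset.filter_true_of_mem (fun f _ => fun i j _ => i.elim0)]
      simp
    rw [h1]
    simp
  rcases Nat.eq_zero_or_pos n with rfl | hnpos
  · have h1 : chs 0 d x = 0 := by
      rw [chs]
      convert Finset.sum_empty
      rw [Finset.eq_empty_iff_forall_notMem]
      intro f _
      exact (f ⟨0, hdpos⟩).elim0
    rw [h1]
    simp [zero_pow hdpos.ne']
  -- main case
  obtain ⟨m, rfl⟩ : ∃ m, d = m + 1 := ⟨d - 1, by omega⟩
  have hn0 : (n:ℝ) ≠ 0 := Nat.cast_ne_zero.2 hnpos.ne'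
  set xb : ℝ := (∑ i, x i) / n with hxb
  set K : ℝ := ((m+1).factorial : ℝ) with hK
  set C' : ℝ := ((n + (m+1) - 1).choose (m+1) : ℝ) with hC'
  have hKpos : 0 < K := by
    rw [hK]
    exact_mod_cast Nat.factorial_pos (m+1)
  -- the three integrands
  set fZ : (Fin n → ℝ) → ℝ := fun y => (∑ i, x i * y i) ^ (m+1) * W y with hfZ
  set fT : (Fin n → ℝ) → ℝ := fun y => (∑ i, y i) ^ (m+1) * W y with hfT
  set fC : (Fin n → ℝ) → ℝ := fun y => ((∑ i, x i * y i) * (∑ i, y i) ^ m) * W y with hfC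
  have hbridge : fT = fun y : Fin n → ℝ => (∑ i, (fun _ => (1:ℝ)) i * y i) ^ (m+1) * W y := by
    funext y
    simp [hfT]
  have hZint : Integrable fZ := intPow_integrable x
  have hTint : Integrable fT := by rw [hbridge]; exact intPow_integrable _
  have hCint : Integrable fC := intCross_integrable x m
  have hZval : ∫ y, fZ y = K * chs n (m+1) x := intPow x
  have hTval : ∫ y, fT y = K * C' := by
    rw [hbridge, intPow, chs_one]
  have hMtot : (∑ g : Fin (m+1) → Fin n, ∏ i, ((cnt g i).factorial : ℝ)) = K * C' := by
    have h1 := sum_M (n := n) (d := m+1) (fun _ => (1:ℝ))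
    simp only [Finset.prod_const_one, one_mul] at h1
    rw [h1, Finset.sum_const, ChsAux.card_mono, nsmul_eq_mul, mul_one]
  have hCval : ∫ y, fC y = xb * (K * C') := by
    have h2 := sum_M_cross (n := n) m x
    rw [hMtot] at h2
    have h3 : ∫ y, fC y = ∑ g : Fin (m+1) → Fin n, x (g 0) * ∏ i, ((cnt g i).factorial : ℝ) :=
      intCross x m
    rw [h3, hxb]
    field_simp
    linear_combination h2
  -- tangent comparison
  set fL : (Fin n → ℝ) → ℝ := fun y =>
    xb ^ (m+1) * fT y + (((m:ℝ)+1) * xb ^ m) * fC y - (((m:ℝ)+1) * xb ^ (m+1)) * fT y with hfL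
  have hLint : Integrable fL :=
    ((hTint.const_mul _).add (hCint.const_mul _)).sub (hTint.const_mul _)
  have hLle : fL ≤ fZ := by
    intro y
    have e : fL y
        = ((xb * ∑ i, y i) ^ (m+1)
            + ((m:ℝ)+1) * (xb * ∑ i, y i) ^ m * ((∑ i, x i * y i) - xb * ∑ i, y i)) * W y := by
      simp only [hfL, hfT, hfC]
      ring
    rw [e]
    have ht := tangent_even hd ((∑ i, x i * y i)) (xb * ∑ i, y i)
    rw [Nat.add_sub_cancel] at ht
    push_cast at ht
    exact mul_le_mul_of_nonneg_right ht (W_nonneg y)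
  have hIL : ∫ y, fL y = K * (xb ^ (m+1) * C') := by
    have i1 : Integrable (fun y : Fin n → ℝ =>
        xb ^ (m+1) * fT y + ((m:ℝ)+1) * xb ^ m * fC y) :=
      (hTint.const_mul _).add (hCint.const_mul _)
    have i2 : Integrable (fun y : Fin n → ℝ => ((m:ℝ)+1) * xb ^ (m+1) * fT y) :=
      hTint.const_mul _
    have i3 : Integrable (fun y : Fin n → ℝ => xb ^ (m+1) * fT y) := hTint.const_mul _
    have i4 : Integrable (fun y : Fin n → ℝ => ((m:ℝ)+1) * xb ^ m * fC y) :=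
      hCint.const_mul _
    simp only [hfL]
    rw [integral_sub i1 i2, integral_add i3 i4,
      MeasureTheory.integral_const_mul, MeasureTheory.integral_const_mul,
      MeasureTheory.integral_const_mul, hTval, hCval]
    ring
  have hfinal : ∫ y, fL y ≤ ∫ y, fZ y := integral_mono hLint hZint hLle
  rw [hIL, hZval] at hfinal
  have := le_of_mul_le_mul_left hfinal hKpos
  calc xb ^ (m+1) * C' ≤ chs n (m+1) x := this
end

section
/- Let X₁,…,Xₙ be independent standard exponential random variables and X = (X₁,…,Xₙ). Then for every x ∈ ℝⁿ and every nonnegative integer d, E[⟨X,x⟩^d] = d!·h_d(x₁,…,xₙ). -/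
open MeasureTheory ProbabilityTheory Real Set
open scoped ENNReal NNReal

lemma expPDF_eq_ofReal : exponentialPDF 1 = fun x => ENNReal.ofReal (exponentialPDFReal 1 x) := rfl
lemma expPDF_eq_coe : exponentialPDF 1 = fun x => ((exponentialPDFReal 1 x).toNNReal : ℝ≥0∞) := rfl

lemma integrableOn_pow_exp (k : ℕ) :
    IntegrableOn (fun x : ℝ => x ^ k * Real.exp (-x)) (Set.Ici 0) := by
  rw [integrableOn_Ici_iff_integrableOn_Ioi]
  have h := Real.GammaIntegral_convergent (s := (k : ℝ) + 1) (by positivity)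
  refine (h.congr_fun ?_ measurableSet_Ioi)
  intro x hx
  simp only [add_sub_cancel_right, Real.rpow_natCast]
  ring

lemma integral_pow_exp (k : ℕ) :
    ∫ x in Set.Ici (0:ℝ), x ^ k * Real.exp (-x) = (Nat.factorial k : ℝ) := by
  rw [MeasureTheory.integral_Ici_eq_integral_Ioi]
  have h := Real.Gamma_eq_integral (s := (k : ℝ) + 1) (by positivity)
  rw [Real.Gamma_nat_eq_factorial] at h
  rw [h]
  refine MeasureTheory.setIntegral_congr_fun measurableSet_Ioi fun x hx => ?_
  simp only [add_sub_cancel_right, Real.rpow_natCast]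
  ring

lemma expPDF_toReal_mul (k : ℕ) (x : ℝ) :
    x ^ k * (exponentialPDF 1 x).toReal
      = Set.indicator (Set.Ici 0) (fun t => t ^ k * Real.exp (-t)) x := by
  rw [exponentialPDF_eq]
  by_cases hx : (0:ℝ) ≤ x
  · rw [if_pos hx, Set.indicator_of_mem (Set.mem_Ici.2 hx),
      ENNReal.toReal_ofReal (by positivity)]
    ring_nf
  · rw [if_neg hx, Set.indicator_of_notMem (by simpa using hx)]
    simp

lemma expMoment_integrable (k : ℕ) :
    Integrable (fun t : ℝ => t ^ k) (volume.withDensity (exponentialPDF 1)) := by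
  rw [expPDF_eq_ofReal, integrable_withDensity_iff ((measurable_exponentialPDFReal 1).ennreal_ofReal)
    (Filter.Eventually.of_forall fun x => ENNReal.ofReal_lt_top)]
  have : (fun x : ℝ => x ^ k * (ENNReal.ofReal (exponentialPDFReal 1 x)).toReal)
      = Set.indicator (Set.Ici 0) (fun t => t ^ k * Real.exp (-t)) := by
    funext x; exact expPDF_toReal_mul k x
  rw [this]
  exact (integrableOn_pow_exp k).integrable_indicator measurableSet_Ici

lemma expMoment (k : ℕ) :
    ∫ t, t ^ k ∂(volume.withDensity (exponentialPDF 1)) = (Nat.factorial k : ℝ) := by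
  rw [expPDF_eq_coe, integral_withDensity_eq_integral_smul
    ((measurable_exponentialPDFReal 1).real_toNNReal) (fun t => t ^ k)]
  have : (fun x : ℝ => (exponentialPDFReal 1 x).toNNReal • x ^ k)
      = Set.indicator (Set.Ici 0) (fun t => t ^ k * Real.exp (-t)) := by
    funext x
    have h1 : (exponentialPDF 1 x).toReal = exponentialPDFReal 1 x := by
      rw [expPDF_eq_ofReal]; exact ENNReal.toReal_ofReal (exponentialPDFReal_nonneg one_pos x)
    rw [NNReal.smul_def, Real.coe_toNNReal _ (exponentialPDFReal_nonneg one_pos x), ← h1,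
      smul_eq_mul, mul_comm, expPDF_toReal_mul]
  rw [this, integral_indicator measurableSet_Ici, integral_pow_exp]

lemma indep_prod_integral {ι Ω : Type*} [Fintype ι] [MeasurableSpace Ω]
    (P : Measure Ω) [IsProbabilityMeasure P] (Y : ι → Ω → ℝ)
    (hindep : iIndepFun Y P) (hmeas : ∀ i, Measurable (Y i))
    (hint : ∀ i, Integrable (Y i) P) (s : Finset ι) :
    Integrable (fun ω => ∏ k ∈ s, Y k ω) P ∧
      ∫ ω, ∏ k ∈ s, Y k ω ∂P = ∏ k ∈ s, ∫ ω, Y k ω ∂P := by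
  classical
  induction s using Finset.cons_induction with
  | empty => simp
  | cons i s hi ih =>
    have hfn : (fun ω => ∏ k ∈ s, Y k ω) = ∏ k ∈ s, Y k := by
      funext ω; simp
    have hIndep : IndepFun (Y i) (fun ω => ∏ k ∈ s, Y k ω) P := by
      rw [hfn]
      exact (hindep.indepFun_finset_prod_of_notMem hmeas hi).symm
    have hint2 := hIndep.integrable_mul (hint i) ih.1
    constructor
    · simpa only [Finset.prod_cons, Pi.mul_def] using hint2
    · simp only [Finset.prod_cons]
      have h3 := hIndep.integral_mul_eq_mul_integral (hint i).aestronglyMeasurable ih.1.aestronglyMeasurable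
      rw [show (Y i * fun ω => ∏ k ∈ s, Y k ω) = fun ω => Y i ω * ∏ k ∈ s, Y k ω from rfl] at h3
      rw [h3, ih.2]


open Finset in
lemma fiber_card (n d : ℕ) (f : Fin d → Fin n) :
    ((Finset.univ.filter (fun g : Fin d → Fin n => ∀ i j : Fin d, i ≤ j → g i ≤ g j) ×ˢ
        (Finset.univ : Finset (Equiv.Perm (Fin d)))).filter
          (fun p => p.1 ∘ p.2 = f)).card
      = ∏ k : Fin n, Nat.factorial (Finset.univ.filter (fun i => f i = k)).card := by
  classical
  set ρ := Tuple.sort f with hρ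
  have hget : ∀ p : (Fin d → Fin n) × Equiv.Perm (Fin d),
      p ∈ ((Finset.univ.filter (fun g : Fin d → Fin n => ∀ i j : Fin d, i ≤ j → g i ≤ g j) ×ˢ
        (Finset.univ : Finset (Equiv.Perm (Fin d)))).filter (fun p => p.1 ∘ p.2 = f)) →
      p.1 = f ∘ ⇑ρ ∧ p.1 ∘ ⇑p.2 = f := by
    intro p hp
    simp only [Finset.mem_filter, Finset.mem_product, Finset.mem_univ, true_and, and_true] at hp
    obtain ⟨hmono', hcomp⟩ := hp
    have hmono : Monotone p.1 := fun i j hij => hmono' i j hij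
    refine ⟨?_, hcomp⟩
    have h2 : p.1 = f ∘ ⇑p.2.symm := by
      rw [← hcomp]; funext i; simp
    have h1 : f ∘ ⇑p.2.symm = f ∘ ⇑(Tuple.sort f) := by
      rw [Tuple.comp_sort_eq_comp_iff_monotone, ← h2]
      exact hmono
    rw [h2, h1, hρ]
  have key : ((Finset.univ : Finset (Equiv.Perm (Fin d))).filter (fun τ : Equiv.Perm (Fin d) => f ∘ ⇑τ = f)).card
      = ((Finset.univ.filter (fun g : Fin d → Fin n => ∀ i j : Fin d, i ≤ j → g i ≤ g j) ×ˢ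
        (Finset.univ : Finset (Equiv.Perm (Fin d)))).filter
          (fun p => p.1 ∘ p.2 = f)).card := by
    apply Finset.card_bij' (fun τ _ => (f ∘ ⇑ρ, τ.trans ρ.symm))
      (fun p _ => p.2.trans ρ)
    case hi =>
      intro τ hτ
      simp only [Finset.mem_filter, Finset.mem_univ, true_and] at hτ
      simp only [Finset.mem_filter, Finset.mem_product, Finset.mem_univ, true_and, and_true]
      refine ⟨fun i j hij => Tuple.monotone_sort f hij, ?_⟩
      funext i
      simp only [Function.comp_apply, Equiv.trans_apply, Equiv.apply_symm_apply]
      exact congrFun hτ i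
    case hj =>
      intro p hp
      obtain ⟨hg, hcomp⟩ := hget p hp
      simp only [Finset.mem_filter, Finset.mem_univ, true_and]
      funext i
      simp only [Function.comp_apply, Equiv.trans_apply]
      have : f (ρ (p.2 i)) = p.1 (p.2 i) := (congrFun hg (p.2 i)).symm
      rw [this]
      exact congrFun hcomp i
    case left_inv =>
      intro τ hτ
      ext i
      simp
    case right_inv =>
      intro p hp
      obtain ⟨hg, _⟩ := hget p hp
      have h2 : (p.2.trans ρ).trans ρ.symm = p.2 := by ext i; simp
      rw [Prod.ext_iff]
      exact ⟨hg.symm, h2⟩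
  rw [← key]
  have h3 : ((Finset.univ : Finset (Equiv.Perm (Fin d))).filter (fun τ : Equiv.Perm (Fin d) => f ∘ ⇑τ = f)).card
      = Fintype.card {g : Equiv.Perm (Fin d) // f ∘ ⇑g = f} := (Fintype.card_subtype _).symm
  rw [h3, DomMulAct.stabilizer_card f]
  refine Finset.prod_congr rfl fun k _ => ?_
  rw [Fintype.card_subtype]

open Finset in
lemma comb_identity (n d : ℕ) (x : Fin n → ℝ) :
    ∑ f : Fin d → Fin n, (∏ i, x (f i)) *
      ∏ k : Fin n, (Nat.factorial (Finset.univ.filter (fun i => f i = k)).card : ℝ)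
    = (Nat.factorial d : ℝ) * chs n d x := by
  classical
  rw [chs, Finset.mul_sum]
  have step1 : ∀ g : Fin d → Fin n,
      (Nat.factorial d : ℝ) * ∏ i, x (g i) = ∑ σ : Equiv.Perm (Fin d), ∏ i, x (g (σ i)) := by
    intro g
    have h : ∀ σ : Equiv.Perm (Fin d), ∏ i, x (g (σ i)) = ∏ i, x (g i) := fun σ =>
      Equiv.prod_comp σ (fun i => x (g i))
    rw [Finset.sum_congr rfl (fun σ _ => h σ), Finset.sum_const, Finset.card_univ,
      Fintype.card_perm, Fintype.card_fin, nsmul_eq_mul]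
  rw [Finset.sum_congr rfl (fun g _ => step1 g), ← Finset.sum_product']
  rw [← Finset.sum_fiberwise (_ ×ˢ _) (fun p : (Fin d → Fin n) × Equiv.Perm (Fin d) => p.1 ∘ ⇑p.2)
    (fun p => ∏ i, x (p.1 (p.2 i)))]
  refine Finset.sum_congr rfl fun f _ => ?_
  have hconst : ∀ p ∈ (Finset.univ.filter
        (fun g : Fin d → Fin n => ∀ i j : Fin d, i ≤ j → g i ≤ g j) ×ˢ
        (Finset.univ : Finset (Equiv.Perm (Fin d)))).filter
        (fun p : (Fin d → Fin n) × Equiv.Perm (Fin d) => p.1 ∘ ⇑p.2 = f),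
      (∏ i, x (p.1 (p.2 i))) = ∏ i, x (f i) := by
    intro p hp
    have := (Finset.mem_filter.1 hp).2
    refine Finset.prod_congr rfl fun i _ => ?_
    rw [show p.1 (p.2 i) = (p.1 ∘ ⇑p.2) i from rfl, this]
  rw [Finset.sum_congr rfl hconst, Finset.sum_const, fiber_card n d f, nsmul_eq_mul,
    Nat.cast_prod, mul_comm]

lemma moment_transfer {Ω : Type*} [MeasurableSpace Ω] (P : Measure Ω) (Z : Ω → ℝ)
    (hm : Measurable Z) (hd : Measure.map Z P = volume.withDensity (exponentialPDF 1)) (c : ℕ) :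
    Integrable (fun ω => Z ω ^ c) P ∧ ∫ ω, Z ω ^ c ∂P = (Nat.factorial c : ℝ) := by
  have hg : AEStronglyMeasurable (fun t : ℝ => t ^ c) (Measure.map Z P) :=
    (measurable_id.pow_const c).aestronglyMeasurable
  constructor
  · exact (integrable_map_measure hg hm.aemeasurable).mp
      (by rw [hd]; exact expMoment_integrable c)
  · rw [← integral_map hm.aemeasurable hg, hd, expMoment]

/-- If `X₁,…,Xₙ` are independent standard exponential random variables, then
`E[⟨X,x⟩^d] = d! · h_d(x)`. -/
theorem expectation_inner_pow_eq_chs (n : ℕ) {Ω : Type*} [MeasurableSpace Ω]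
    (P : Measure Ω) [IsProbabilityMeasure P] (X : Fin n → Ω → ℝ)
    (hmeas : ∀ i, Measurable (X i))
    (hindep : iIndepFun X P)
    (hdist : ∀ i, Measure.map (X i) P = volume.withDensity (exponentialPDF 1))
    (x : Fin n → ℝ) (d : ℕ) :
    ∫ ω, (∑ i, x i * X i ω) ^ d ∂P = (Nat.factorial d : ℝ) * chs n d x := by
  classical
  have hexp : ∀ ω, (∑ i, x i * X i ω) ^ d
      = ∑ f : Fin d → Fin n, (∏ j, x (f j)) *
          ∏ k : Fin n, X k ω ^ (Finset.univ.filter (fun j => f j = k)).card := by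
    intro ω
    rw [Fintype.sum_pow]
    refine Finset.sum_congr rfl fun f _ => ?_
    have h2 : ∏ j, X (f j) ω
        = ∏ k : Fin n, X k ω ^ (Finset.univ.filter (fun j => f j = k)).card := by
      rw [Finset.prod_comp (s := (Finset.univ : Finset (Fin d))) (fun k : Fin n => X k ω) f]
      refine Finset.prod_subset (Finset.subset_univ _) fun k _ hk => ?_
      have he : (Finset.univ.filter (fun j => f j = k)) = ∅ := by
        refine Finset.filter_eq_empty_iff.2 fun j _ => fun hj => ?_
        exact hk (Finset.mem_image.2 ⟨j, Finset.mem_univ _, hj⟩)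
      rw [he]
      simp
    rw [Finset.prod_mul_distrib, h2]
  have hint : ∀ f : Fin d → Fin n,
      (Integrable (fun ω => ∏ k : Fin n,
          X k ω ^ (Finset.univ.filter (fun j => f j = k)).card) P ∧
        ∫ ω, ∏ k : Fin n, X k ω ^ (Finset.univ.filter (fun j => f j = k)).card ∂P
          = ∏ k : Fin n,
              (Nat.factorial (Finset.univ.filter (fun j => f j = k)).card : ℝ)) := by
    intro f
    set c : Fin n → ℕ := fun k => (Finset.univ.filter (fun j => f j = k)).card with hc
    have hYindep : iIndepFun (fun k ω => X k ω ^ c k) P :=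
      hindep.comp (fun k t => t ^ c k) (fun k => measurable_id.pow_const (c k))
    have hYmeas : ∀ k, Measurable (fun ω => X k ω ^ c k) :=
      fun k => (hmeas k).pow_const (c k)
    have hYint : ∀ k, Integrable (fun ω => X k ω ^ c k) P :=
      fun k => (moment_transfer P (X k) (hmeas k) (hdist k) (c k)).1
    have h := indep_prod_integral P (fun k ω => X k ω ^ c k) hYindep hYmeas hYint Finset.univ
    refine ⟨h.1, ?_⟩
    rw [h.2]
    exact Finset.prod_congr rfl fun k _ =>
      (moment_transfer P (X k) (hmeas k) (hdist k) (c k)).2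
  calc ∫ ω, (∑ i, x i * X i ω) ^ d ∂P
      = ∫ ω, ∑ f : Fin d → Fin n, (∏ j, x (f j)) *
          ∏ k : Fin n, X k ω ^ (Finset.univ.filter (fun j => f j = k)).card ∂P := by
        exact integral_congr_ae (Filter.Eventually.of_forall fun ω => hexp ω)
    _ = ∑ f : Fin d → Fin n, ∫ ω, (∏ j, x (f j)) *
          ∏ k : Fin n, X k ω ^ (Finset.univ.filter (fun j => f j = k)).card ∂P := by
        exact integral_finset_sum _ fun f _ => ((hint f).1.const_mul _)
    _ = ∑ f : Fin d → Fin n, (∏ j, x (f j)) *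
          ∏ k : Fin n, (Nat.factorial (Finset.univ.filter (fun j => f j = k)).card : ℝ) := by
        refine Finset.sum_congr rfl fun f _ => ?_
        rw [integral_const_mul, (hint f).2]
    _ = (Nat.factorial d : ℝ) * chs n d x := comb_identity n d x
end

section
/- A continuously differentiable symmetric function f : ℝⁿ → ℝ is Schur-convex if and only if (xᵢ − xⱼ)·(∂f/∂xᵢ − ∂f/∂xⱼ)(x) ≥ 0 for all x ∈ ℝⁿ and all 1 ≤ i < j ≤ n (the Schur–Ostrowski criterion). -/
open Finset

namespace SchurAux

variable {n : ℕ}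

/-- extension of a tuple to ℕ -/
def toNat (x : Fin n → ℝ) (m : ℕ) : ℝ := if h : m < n then x ⟨m, h⟩ else 0

lemma pSum_eq_range (x : Fin n → ℝ) {k : ℕ} (hk : k ≤ n) :
    pSum x k = ∑ m ∈ range k, toNat x m := by
  rw [pSum, sum_filter]
  have h1 : ∀ i : Fin n, (if (i : ℕ) < k then x i else 0)
      = (fun m => if m < k then toNat x m else 0) (i : ℕ) := by
    intro i
    simp only [toNat, i.is_lt, dif_pos, Fin.eta]
  simp_rw [h1]
  rw [Fin.sum_univ_eq_sum_range (fun m => if m < k then toNat x m else 0) n]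
  rw [← Finset.sum_subset (Finset.range_subset_range.2 hk)
    (by intro m _ hm; simp only [mem_range, not_lt] at hm; simp [Nat.not_lt.2 hm])]
  exact Finset.sum_congr rfl (by intro m hm; simp only [mem_range] at hm; simp [hm])

lemma pSum_top (x : Fin n → ℝ) : pSum x n = ∑ i, x i := by
  rw [pSum]
  congr 1
  ext i
  simp [i.is_lt]

lemma strictMono_le {k : ℕ} {f : Fin k → ℕ} (hf : StrictMono f) :
    ∀ m (h : m < k), m ≤ f ⟨m, h⟩ := by
  intro m
  induction m with
  | zero => intro h; exact Nat.zero_le _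
  | succ m ih =>
    intro h
    have h' : m < k := Nat.lt_of_succ_lt h
    have h2 := hf (show (⟨m, h'⟩ : Fin k) < ⟨m + 1, h⟩ by simp [Fin.lt_def])
    have := ih h'
    omega

lemma sum_le_pSum {w : Fin n → ℝ} (hw : Antitone w) (s : Finset (Fin n)) :
    ∑ i ∈ s, w i ≤ pSum w s.card := by
  have hk : s.card ≤ n := le_trans (Finset.card_le_univ s) (by simp)
  set k := s.card with hkdef
  rw [pSum_eq_range w hk]
  set e := s.orderEmbOfFin hkdef.symm with he
  have hs : s = Finset.image e Finset.univ := by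
    ext i
    simp only [Finset.mem_image, Finset.mem_univ, true_and]
    constructor
    · intro hi
      have : (i : Fin n) ∈ Set.range e := by
        rw [he, Finset.range_orderEmbOfFin]
        exact hi
      exact this
    · rintro ⟨j, rfl⟩
      exact Finset.orderEmbOfFin_mem s hkdef.symm j
  rw [hs, Finset.sum_image (by intro a _ b _ hab; exact e.injective hab)]
  rw [← Fin.sum_univ_eq_sum_range (toNat w) k]
  apply Finset.sum_le_sum
  intro j _
  have hjn : (j : ℕ) < n := lt_of_lt_of_le j.is_lt hk
  have h1 : toNat w (j : ℕ) = w ⟨j, hjn⟩ := by simp [toNat, hjn]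
  rw [h1]
  apply hw
  have := strictMono_le (f := fun j => ((e j : Fin n) : ℕ))
    (fun a b hab => by exact_mod_cast (e.strictMono hab)) j j.is_lt
  simp only [Fin.le_def]
  simpa using this

end SchurAux

namespace SchurAux2
open SchurAux

variable {n : ℕ}

lemma decSort_antitone (x : Fin n → ℝ) : Antitone (decSort x) := by
  have h := Tuple.monotone_sort (fun i => -x i)
  intro a b hab
  have := h hab
  simp only [Function.comp_apply] at this
  unfold decSort
  simp only [Function.comp_apply]
  linarith

lemma sum_decSort (x : Fin n → ℝ) : ∑ i, decSort x i = ∑ i, x i :=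
  Equiv.sum_comp (Tuple.sort (fun i => -x i)) x

lemma card_filter_lt {k : ℕ} (hk : k ≤ n) :
    (Finset.univ.filter (fun i : Fin n => (i : ℕ) < k)).card = k := by
  have h : Finset.univ.filter (fun i : Fin n => (i : ℕ) < k)
      = (Finset.range k).attachFin (fun m hm => lt_of_lt_of_le (Finset.mem_range.1 hm) hk) := by
    ext i
    simp [Finset.mem_attachFin]
  rw [h, Finset.card_attachFin, Finset.card_range]

lemma pSum_decSort_exists (x : Fin n → ℝ) {k : ℕ} (hk : k ≤ n) :
    ∃ s : Finset (Fin n), s.card = k ∧ pSum (decSort x) k = ∑ i ∈ s, x i := by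
  set σ := Tuple.sort (fun i => -x i) with hσ
  refine ⟨(Finset.univ.filter (fun i : Fin n => (i : ℕ) < k)).image σ, ?_, ?_⟩
  · rw [Finset.card_image_of_injective _ σ.injective, card_filter_lt hk]
  · rw [Finset.sum_image (by intro a _ b _ hab; exact σ.injective hab)]
    rfl

lemma sum_le_pSum_decSort (x : Fin n → ℝ) (s : Finset (Fin n)) :
    ∑ i ∈ s, x i ≤ pSum (decSort x) s.card := by
  set σ := Tuple.sort (fun i => -x i) with hσ
  have h1 : ∑ i ∈ s, x i = ∑ i ∈ s.image σ.symm, decSort x i := by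
    rw [Finset.sum_image (by intro a _ b _ hab; exact σ.symm.injective hab)]
    apply Finset.sum_congr rfl
    intro i _
    simp [decSort]
    exact congrArg x (σ.apply_symm_apply i).symm
  have h2 : (s.image σ.symm).card = s.card :=
    Finset.card_image_of_injective _ σ.symm.injective
  rw [h1, ← h2]
  exact sum_le_pSum (decSort_antitone x) _

end SchurAux2

namespace SchurAux3

variable {n : ℕ}

lemma vec_eq_sum (v : Fin n → ℝ) : v = ∑ m, v m • (Pi.single m 1 : Fin n → ℝ) := by
  funext j
  rw [Finset.sum_apply]
  simp only [Pi.smul_apply, Pi.single_apply, smul_eq_mul, mul_ite, mul_one, mul_zero]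
  rw [Finset.sum_ite_eq Finset.univ j (fun m => v m)]
  simp
  
lemma fderiv_apply_sum (f : (Fin n → ℝ) → ℝ) (p v : Fin n → ℝ) :
    fderiv ℝ f p v = ∑ m, v m * fderiv ℝ f p (Pi.single m 1) := by
  conv_lhs => rw [vec_eq_sum v]
  rw [map_sum]
  simp [smul_eq_mul]

lemma abel_nonneg (a D : ℕ → ℝ) (N : ℕ)
    (hA : ∀ k, k ≤ N → 0 ≤ ∑ m ∈ Finset.range k, a m)
    (hAn : ∑ m ∈ Finset.range N, a m = 0)
    (hD : ∀ k, k + 1 < N → D (k + 1) ≤ D k) :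
    0 ≤ ∑ m ∈ Finset.range N, a m * D m := by
  have h := Finset.sum_range_by_parts (fun i => D i) (fun i => a i) N
  simp only [smul_eq_mul] at h
  have h2 : ∀ m, a m * D m = D m * a m := fun m => mul_comm _ _
  simp_rw [h2]
  rw [h, hAn, mul_zero, zero_sub, le_neg, neg_zero]
  apply Finset.sum_nonpos
  intro i hi
  rw [Finset.mem_range] at hi
  have hi1 : i + 1 < N := by omega
  have h3 : D (i + 1) - D i ≤ 0 := by linarith [hD i hi1]
  have h4 : 0 ≤ ∑ m ∈ Finset.range (i + 1), a m := hA (i + 1) (by omega)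
  exact mul_nonpos_of_nonpos_of_nonneg h3 h4

end SchurAux3

namespace SchurAux4

variable {n : ℕ}

/-- Precomposition with a permutation as a continuous linear map. -/
noncomputable def permCLM (σ : Equiv.Perm (Fin n)) : (Fin n → ℝ) →L[ℝ] (Fin n → ℝ) :=
  (LinearMap.funLeft ℝ ℝ σ).toContinuousLinearMap

@[simp] lemma permCLM_apply (σ : Equiv.Perm (Fin n)) (x : Fin n → ℝ) :
    permCLM σ x = x ∘ σ := rfl

lemma fderiv_single_eq_of_eq (f : (Fin n → ℝ) → ℝ) (hf : ContDiff ℝ 1 f)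
    (hsym : ∀ (σ : Equiv.Perm (Fin n)) (x : Fin n → ℝ), f (x ∘ σ) = f x)
    (z : Fin n → ℝ) (i j : Fin n) (hz : z i = z j) :
    fderiv ℝ f z (Pi.single i 1) = fderiv ℝ f z (Pi.single j 1) := by
  rcases eq_or_ne i j with rfl | hij
  · rfl
  set σ := Equiv.swap i j with hσ
  set L := permCLM σ with hL
  have hdf : Differentiable ℝ f := hf.differentiable one_ne_zero
  have hfL : f ∘ L = f := by
    funext x
    exact hsym σ x
  have happ : ∀ (v : Fin n → ℝ) (m : Fin n), L v m = v (σ m) := fun v m => rfl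
  have hLz : L z = z := by
    funext m
    rw [happ]
    by_cases hmi : m = i
    · rw [hmi, hσ, Equiv.swap_apply_left, hz]
    by_cases hmj : m = j
    · rw [hmj, hσ, Equiv.swap_apply_right, hz]
    · rw [hσ, Equiv.swap_apply_of_ne_of_ne hmi hmj]
  have hcomp : fderiv ℝ (f ∘ L) z = (fderiv ℝ f (L z)).comp L := by
    rw [fderiv_comp z (hdf (L z)) L.differentiableAt, L.fderiv]
  rw [hfL, hLz] at hcomp
  have key : ∀ v, fderiv ℝ f z v = fderiv ℝ f z (L v) := by
    intro v
    conv_lhs => rw [hcomp]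
    rfl
  have hLij : L (Pi.single j 1) = Pi.single i 1 := by
    funext m
    rw [happ]
    by_cases hmi : m = i
    · rw [hmi, hσ, Equiv.swap_apply_left]
      simp
    by_cases hmj : m = j
    · rw [hmj, hσ, Equiv.swap_apply_right]
      have h2 : ¬ (i = j) := hij
      simp [Pi.single_apply, h2, fun h : j = i => hij h.symm]
    · rw [hσ, Equiv.swap_apply_of_ne_of_ne hmi hmj]
      simp [Pi.single_apply, hmi, hmj]
  rw [key (Pi.single j 1), hLij]

end SchurAux4

open SchurAux SchurAux2 SchurAux3 SchurAux4 in
theorem schur_ostrowski_mpr (n : ℕ) (f : (Fin n → ℝ) → ℝ) (hf : ContDiff ℝ 1 f)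
    (hsym : ∀ (σ : Equiv.Perm (Fin n)) (x : Fin n → ℝ), f (x ∘ σ) = f x)
    (h : ∀ (x : Fin n → ℝ) (i j : Fin n), i < j →
        0 ≤ (x i - x j) *
          (fderiv ℝ f x (Pi.single i 1) - fderiv ℝ f x (Pi.single j 1))) :
    ∀ x y : Fin n → ℝ, Majorizes x y → f x ≤ f y := by
  intro x y hmaj
  have hfu : f (decSort x) = f x := hsym (Tuple.sort (fun i => -x i)) x
  have hfw : f (decSort y) = f y := hsym (Tuple.sort (fun i => -y i)) y
  rw [← hfu, ← hfw]
  set u := decSort x with hu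
  set w := decSort y with hw
  have hua : Antitone u := decSort_antitone x
  have hwa : Antitone w := decSort_antitone y
  set z : ℝ → (Fin n → ℝ) := fun t => u + t • (w - u) with hz
  have hdf : Differentiable ℝ f := hf.differentiable one_ne_zero
  have hderiv : ∀ t : ℝ, HasDerivAt (fun t => f (z t)) (fderiv ℝ f (z t) (w - u)) t := by
    intro t
    have hc : HasDerivAt z (w - u) t := by
      have h1 : HasDerivAt (fun t : ℝ => t • (w - u)) ((1:ℝ) • (w - u)) t :=
        (hasDerivAt_id t).smul_const (w - u)
      simpa only [one_smul] using h1.const_add u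
    exact (hdf (z t)).hasFDerivAt.comp_hasDerivAt t hc
  have hA : ∀ k, k ≤ n → 0 ≤ ∑ m ∈ Finset.range k, toNat (w - u) m := by
    intro k hk
    rw [← pSum_eq_range (w - u) hk]
    have hsub : pSum (w - u) k = pSum w k - pSum u k := by
      unfold pSum
      rw [← Finset.sum_sub_distrib]
      rfl
    rw [hsub, sub_nonneg]
    rcases lt_or_eq_of_le hk with hlt | rfl
    · exact hmaj.1 k hlt
    · rw [pSum_top, pSum_top, hu, hw, sum_decSort, sum_decSort]
      exact le_of_eq hmaj.2
  have hAn : ∑ m ∈ Finset.range n, toNat (w - u) m = 0 := by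
    rw [← pSum_eq_range (w - u) le_rfl]
    have hsub : pSum (w - u) n = pSum w n - pSum u n := by
      unfold pSum
      rw [← Finset.sum_sub_distrib]
      rfl
    rw [hsub, pSum_top, pSum_top, hu, hw, sum_decSort, sum_decSort, hmaj.2, sub_self]
  have hderiv_nonneg : ∀ t ∈ Set.Ioo (0:ℝ) 1, 0 ≤ fderiv ℝ f (z t) (w - u) := by
    intro t ht
    rw [fderiv_apply_sum]
    set p := z t with hp
    have hpa : ∀ (m m' : Fin n), m ≤ m' → p m' ≤ p m := by
      intro m m' hmm
      have h1 := hua hmm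
      have h2 := hwa hmm
      have h3 : p m' - p m = (1 - t) * (u m' - u m) + t * (w m' - w m) := by
        simp only [hp, hz, Pi.add_apply, Pi.smul_apply, Pi.sub_apply, smul_eq_mul]
        ring
      nlinarith [ht.1.le, ht.2.le]
    set D : ℕ → ℝ := fun m =>
      if hm : m < n then fderiv ℝ f p (Pi.single (⟨m, hm⟩ : Fin n) 1) else 0 with hD
    have hconv : ∑ m : Fin n, (w - u) m * fderiv ℝ f p (Pi.single m 1)
        = ∑ m ∈ Finset.range n, toNat (w - u) m * D m := by
      rw [← Fin.sum_univ_eq_sum_range (fun m => toNat (w - u) m * D m) n]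
      apply Finset.sum_congr rfl
      intro m _
      have e1 : toNat (w - u) (m : ℕ) = w m - u m := by
        unfold SchurAux.toNat
        simp only [m.is_lt, dif_pos, Fin.eta, Pi.sub_apply]
      have e2 : D (m : ℕ) = fderiv ℝ f p (Pi.single m 1) := by
        simp only [hD, m.is_lt, dif_pos, Fin.eta]
      rw [e1, e2, Pi.sub_apply]
    rw [hconv]
    apply abel_nonneg _ _ n hA hAn
    intro k hk1
    have hkn : k < n := by omega
    set iF : Fin n := ⟨k, hkn⟩ with hiF
    set jF : Fin n := ⟨k + 1, hk1⟩ with hjF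
    have hij : iF < jF := by simp [hiF, hjF, Fin.lt_def]
    have hle : p jF ≤ p iF := hpa iF jF (le_of_lt hij)
    have hDk : D k = fderiv ℝ f p (Pi.single iF 1) := by simp [hD, hkn, hiF]
    have hDk1 : D (k + 1) = fderiv ℝ f p (Pi.single jF 1) := by simp [hD, hk1, hjF]
    rw [hDk, hDk1]
    rcases eq_or_lt_of_le hle with heq | hlt
    · exact le_of_eq (fderiv_single_eq_of_eq f hf hsym p jF iF heq)
    · have hcrit := h p iF jF hij
      have hpos : 0 < p iF - p jF := by linarith
      nlinarith
  have hmono : MonotoneOn (fun t => f (z t)) (Set.Icc 0 1) := by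
    apply monotoneOn_of_deriv_nonneg (convex_Icc 0 1)
    · exact ((hf.continuous).comp (by fun_prop)).continuousOn
    · intro t ht
      exact ((hderiv t).differentiableAt).differentiableWithinAt
    · intro t ht
      rw [interior_Icc] at ht
      rw [(hderiv t).deriv]
      exact hderiv_nonneg t ht
  have h01 := hmono (Set.left_mem_Icc.2 zero_le_one) (Set.right_mem_Icc.2 zero_le_one) zero_le_one
  have hz0 : z 0 = u := by simp [hz]
  have hz1 : z 1 = w := by
    funext m
    simp [hz]
  simpa [hz0, hz1] using h01

open SchurAux SchurAux2 SchurAux3 SchurAux4 in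
theorem schur_ostrowski_mp (n : ℕ) (f : (Fin n → ℝ) → ℝ) (hf : ContDiff ℝ 1 f)
    (h : ∀ x y : Fin n → ℝ, Majorizes x y → f x ≤ f y) :
    ∀ (x : Fin n → ℝ) (i j : Fin n), i < j →
        0 ≤ (x i - x j) *
          (fderiv ℝ f x (Pi.single i 1) - fderiv ℝ f x (Pi.single j 1)) := by
  intro x i j hij
  have hijne : i ≠ j := ne_of_lt hij
  set a := x i with hax
  set b := x j with hbx
  set v : Fin n → ℝ := Pi.single i (b - a) + Pi.single j (a - b) with hv
  set c : ℝ → (Fin n → ℝ) := fun t => x + t • v with hc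
  have hvs : ∀ s : Finset (Fin n),
      ∑ m ∈ s, v m = (if i ∈ s then b - a else 0) + (if j ∈ s then a - b else 0) := by
    intro s
    rw [hv]
    simp only [Pi.add_apply, Finset.sum_add_distrib]
    congr 1
    · simp_rw [Pi.single_apply]
      exact Finset.sum_ite_eq' s i (fun _ => b - a)
    · simp_rw [Pi.single_apply]
      exact Finset.sum_ite_eq' s j (fun _ => a - b)
  have hct : ∀ (t : ℝ) (s : Finset (Fin n)), ∑ m ∈ s, c t m
      = ∑ m ∈ s, x m + t * ((if i ∈ s then b - a else 0) + (if j ∈ s then a - b else 0)) := by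
    intro t s
    simp only [hc, Pi.add_apply, Pi.smul_apply, smul_eq_mul]
    rw [Finset.sum_add_distrib, ← Finset.mul_sum, hvs s]
  have hmaj : ∀ t ∈ Set.Icc (0:ℝ) 1, Majorizes (c t) x := by
    intro t ht
    constructor
    · intro k hk
      obtain ⟨s, hcard, hps⟩ := pSum_decSort_exists (c t) hk.le
      rw [hps]
      have key : ∃ s' : Finset (Fin n), s'.card = k ∧ ∑ m ∈ s, c t m ≤ ∑ m ∈ s', x m := by
        by_cases hi : i ∈ s <;> by_cases hj : j ∈ s
        · refine ⟨s, hcard, ?_⟩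
          rw [hct]
          simp [hi, hj]
        · rcases le_or_gt b a with hba | hba
          · refine ⟨s, hcard, ?_⟩
            rw [hct]
            simp only [hi, hj, if_true, if_false, add_zero]
            nlinarith [ht.1, ht.2]
          · refine ⟨insert j (s.erase i), ?_, ?_⟩
            · rw [Finset.card_insert_of_notMem (fun hmem => hj (Finset.mem_of_mem_erase hmem)),
                Finset.card_erase_of_mem hi, hcard]
              have : 1 ≤ k := by
                rw [← hcard]
                exact Finset.card_pos.2 ⟨i, hi⟩
              omega
            · rw [Finset.sum_insert (fun hmem => hj (Finset.mem_of_mem_erase hmem)),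
                Finset.sum_erase_eq_sub hi, hct]
              simp only [hi, hj, if_true, if_false, add_zero]
              have h1 : t * (b - a) ≤ b - a := by nlinarith [ht.1, ht.2]
              rw [← hax, ← hbx]
              linarith
        · rcases le_or_gt a b with hab | hab
          · refine ⟨s, hcard, ?_⟩
            rw [hct]
            simp only [hi, hj, if_true, if_false, zero_add]
            nlinarith [ht.1, ht.2]
          · refine ⟨insert i (s.erase j), ?_, ?_⟩
            · rw [Finset.card_insert_of_notMem (fun hmem => hi (Finset.mem_of_mem_erase hmem)),
                Finset.card_erase_of_mem hj, hcard]
              have : 1 ≤ k := by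
                rw [← hcard]
                exact Finset.card_pos.2 ⟨j, hj⟩
              omega
            · rw [Finset.sum_insert (fun hmem => hi (Finset.mem_of_mem_erase hmem)),
                Finset.sum_erase_eq_sub hj, hct]
              simp only [hi, hj, if_true, if_false, zero_add]
              have h1 : t * (a - b) ≤ a - b := by nlinarith [ht.1, ht.2]
              rw [← hax, ← hbx]
              linarith
        · refine ⟨s, hcard, ?_⟩
          rw [hct]
          simp [hi, hj]
      obtain ⟨s', hcard', hle⟩ := key
      calc ∑ m ∈ s, c t m ≤ ∑ m ∈ s', x m := hle
        _ ≤ pSum (decSort x) s'.card := sum_le_pSum_decSort x s'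
        _ = pSum (decSort x) k := by rw [hcard']
    · have htot := hct t Finset.univ
      simp only [Finset.mem_univ, if_pos] at htot
      rw [htot]
      ring
  have hdf : Differentiable ℝ f := hf.differentiable one_ne_zero
  have hderiv : ∀ t : ℝ, HasDerivAt (fun t => f (c t)) (fderiv ℝ f (c t) v) t := by
    intro t
    have hcd : HasDerivAt c v t := by
      have h1 : HasDerivAt (fun t : ℝ => t • v) ((1:ℝ) • v) t :=
        (hasDerivAt_id t).smul_const v
      simpa only [one_smul] using h1.const_add x
    exact (hdf (c t)).hasFDerivAt.comp_hasDerivAt t hcd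
  have hc0 : c 0 = x := by simp [hc]
  have hder0 : HasDerivAt (fun t => f (c t)) (fderiv ℝ f x v) 0 := by
    have := hderiv 0
    rwa [hc0] at this
  have hle0 : fderiv ℝ f x v ≤ 0 := by
    have hslope : Filter.Tendsto (slope (fun t => f (c t)) 0) (nhdsWithin 0 {(0:ℝ)}ᶜ)
        (nhds (fderiv ℝ f x v)) := hasDerivAt_iff_tendsto_slope.mp hder0
    have hmono : Filter.Tendsto (slope (fun t => f (c t)) 0) (nhdsWithin 0 (Set.Ioi 0))
        (nhds (fderiv ℝ f x v)) :=
      hslope.mono_left (nhdsWithin_mono 0 (fun t ht => ne_of_gt ht))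
    refine le_of_tendsto hmono ?_
    filter_upwards [Ioc_mem_nhdsGT (zero_lt_one)] with t ht
    rw [slope_def_field]
    have hft : f (c t) ≤ f x := h (c t) x (hmaj t ⟨ht.1.le, ht.2⟩)
    have : f (c t) - f (c 0) ≤ 0 := by rw [hc0]; linarith
    rw [hc0]
    apply div_nonpos_of_nonpos_of_nonneg
    · linarith
    · linarith [ht.1]
  have hvd : fderiv ℝ f x v = (b - a) * fderiv ℝ f x (Pi.single i 1)
      + (a - b) * fderiv ℝ f x (Pi.single j 1) := by
    rw [hv, map_add]
    have e1 : Pi.single i (b - a) = (b - a) • (Pi.single i 1 : Fin n → ℝ) := by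
      rw [← Pi.single_smul, smul_eq_mul, mul_one]
    have e2 : Pi.single j (a - b) = (a - b) • (Pi.single j 1 : Fin n → ℝ) := by
      rw [← Pi.single_smul, smul_eq_mul, mul_one]
    rw [e1, e2, map_smul, map_smul, smul_eq_mul, smul_eq_mul]
  rw [hvd] at hle0
  have : (x i - x j) * (fderiv ℝ f x (Pi.single i 1) - fderiv ℝ f x (Pi.single j 1))
      = -((b - a) * fderiv ℝ f x (Pi.single i 1) + (a - b) * fderiv ℝ f x (Pi.single j 1)) := by
    rw [← hax, ← hbx]
    ring
  rw [this]
  linarith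

/-- The Schur–Ostrowski criterion: a `C¹` symmetric function is Schur-convex iff
`(xᵢ - xⱼ)(∂f/∂xᵢ - ∂f/∂xⱼ)(x) ≥ 0` for all `x` and `i < j`. -/
theorem schur_ostrowski (n : ℕ) (f : (Fin n → ℝ) → ℝ) (hf : ContDiff ℝ 1 f)
    (hsym : ∀ (σ : Equiv.Perm (Fin n)) (x : Fin n → ℝ), f (x ∘ σ) = f x) :
    (∀ x y : Fin n → ℝ, Majorizes x y → f x ≤ f y) ↔
      ∀ (x : Fin n → ℝ) (i j : Fin n), i < j →
        0 ≤ (x i - x j) *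
          (fderiv ℝ f x (Pi.single i 1) - fderiv ℝ f x (Pi.single j 1)) := by
  constructor
  · exact fun h => schur_ostrowski_mp n f hf h
  · exact fun h => schur_ostrowski_mpr n f hf hsym h
end

section
/- If A and B are n×n complex Hermitian matrices, then the vector of eigenvalues of A+B (in nonincreasing order) is majorized by the sum of the eigenvalue vectors of A and B (each in nonincreasing order): λ(A+B) ≺ λ(A) + λ(B). -/
open Matrix Finset

lemma antitone_decSort {n : ℕ} (x : Fin n → ℝ) : Antitone (decSort x) := fun _ _ hij =>
  neg_le_neg_iff.mp (Tuple.monotone_sort (fun i => -x i) hij)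

lemma decSort_eq_self_of_antitone {n : ℕ} {y : Fin n → ℝ} (hy : Antitone y) : decSort y = y := by
  rw [decSort, Tuple.sort_eq_refl_iff_monotone.2 fun i j h => neg_le_neg (hy h)]
  rfl

lemma sum_decSort {n : ℕ} (x : Fin n → ℝ) : ∑ i, decSort x i = ∑ i, x i :=
  Equiv.sum_comp _ x

lemma pSum_add {n : ℕ} (x y : Fin n → ℝ) (k : ℕ) : pSum (x + y) k = pSum x k + pSum y k :=
  sum_add_distrib

lemma pSum_eq_sum_castLE {n k : ℕ} (hk : k ≤ n) (y : Fin n → ℝ) :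
    pSum y k = ∑ i : Fin k, y (Fin.castLE hk i) := by
  have hmap : univ.filter (fun i : Fin n => (i : ℕ) < k) = univ.map (Fin.castLEEmb hk) := by
    ext j
    simpa using ⟨fun hj => ⟨⟨j, hj⟩, rfl⟩, by rintro ⟨i, rfl⟩; exact i.2⟩
  rw [pSum, hmap, sum_map]
  rfl

lemma sum_mul_le_pSum_of_antitone {n k : ℕ} (hk : k < n) {y c : Fin n → ℝ} (hy : Antitone y)
    (hc0 : ∀ i, 0 ≤ c i) (hc1 : ∀ i, c i ≤ 1) (hcs : ∑ i, c i = k) :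
    ∑ i, c i * y i ≤ pSum y k := by
  set t := y ⟨k, hk⟩
  have hpoint : ∀ i : Fin n, c i * (y i - t) ≤ if (i : ℕ) < k then y i - t else 0 := by
    intro i
    split_ifs with hik
    · exact mul_le_of_le_one_left (sub_nonneg.2 (hy (Fin.le_def.2 hik.le))) (hc1 i)
    · exact mul_nonpos_of_nonneg_of_nonpos (hc0 i) (sub_nonpos.2 (hy (Fin.le_def.2 (not_lt.1 hik))))
  calc ∑ i, c i * y i = ∑ i, c i * (y i - t) + k * t := by
        simp only [mul_sub, sum_sub_distrib, ← sum_mul, hcs, sub_add_cancel]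
    _ ≤ ∑ i : Fin n, (if (i : ℕ) < k then y i - t else 0) + k * t := by
        gcongr with i; exact hpoint i
    _ = pSum y k := by
        rw [← sum_filter, sum_sub_distrib, sum_const, Fin.card_filter_val_lt, min_eq_right hk.le,
          nsmul_eq_mul, sub_add_cancel, pSum]

lemma sum_mul_le_pSum_decSort {n k : ℕ} (hk : k < n) (x c : Fin n → ℝ)
    (hc0 : ∀ i, 0 ≤ c i) (hc1 : ∀ i, c i ≤ 1) (hcs : ∑ i, c i = k) :
    ∑ i, c i * x i ≤ pSum (decSort x) k := by
  set σ := Tuple.sort (fun i => -x i)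
  calc ∑ i, c i * x i = ∑ i, c (σ i) * decSort x i := (Equiv.sum_comp σ (fun i => c i * x i)).symm
    _ ≤ pSum (decSort x) k := sum_mul_le_pSum_of_antitone hk (antitone_decSort x)
        (fun _ => hc0 _) (fun _ => hc1 _) (by rw [Equiv.sum_comp σ c, hcs])

section Isometry

variable {m κ : Type*} [Fintype κ]

lemma mul_conjTranspose_apply_self (W : Matrix m κ ℂ) (j : m) :
    (W * Wᴴ) j j = ((∑ i, Complex.normSq (W j i) : ℝ) : ℂ) := by
  simp [mul_apply, Complex.mul_conj]

lemma trace_conjTranspose_mul_diagonal_mul [Fintype m] [DecidableEq m] (W : Matrix m κ ℂ)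
    (d : m → ℝ) :
    (Wᴴ * diagonal (fun j => (d j : ℂ)) * W).trace
      = ((∑ j, (∑ i, Complex.normSq (W j i)) * d j : ℝ) : ℂ) := by
  rw [trace_mul_cycle, trace]
  push_cast
  refine sum_congr rfl fun j _ => ?_
  rw [diag_apply, mul_diagonal, mul_conjTranspose_apply_self]
  push_cast
  rfl

variable [Fintype m] [DecidableEq κ] {W : Matrix m κ ℂ}

lemma sum_normSq_row_le_one (hW : Wᴴ * W = 1) (j : m) : ∑ i, Complex.normSq (W j i) ≤ 1 := by
  have hP : (W * Wᴴ) * (W * Wᴴ)ᴴ = W * Wᴴ := by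
    rw [conjTranspose_mul, conjTranspose_conjTranspose, Matrix.mul_assoc, ← Matrix.mul_assoc Wᴴ, hW,
      Matrix.one_mul]
  set c := ∑ i, Complex.normSq (W j i)
  have hc : (c : ℂ) = (W * Wᴴ) j j := (mul_conjTranspose_apply_self W j).symm
  -- `W * Wᴴ` is an orthogonal projection, so its diagonal entry dominates its square.
  have hsq : c ^ 2 ≤ c := by
    have h : c = ∑ i, Complex.normSq ((W * Wᴴ) j i) := by
      exact_mod_cast hc.trans (hP ▸ mul_conjTranspose_apply_self (W * Wᴴ) j)
    calc c ^ 2 = Complex.normSq ((W * Wᴴ) j j) := by rw [← hc, Complex.normSq_ofReal, sq]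
      _ ≤ c := h ▸ single_le_sum (fun i _ => Complex.normSq_nonneg _) (mem_univ j)
  nlinarith [sum_nonneg fun i (_ : i ∈ univ) => Complex.normSq_nonneg (W j i)]

lemma sum_sum_normSq_eq_card (hW : Wᴴ * W = 1) :
    ∑ j, ∑ i, Complex.normSq (W j i) = Fintype.card κ := by
  have h : (W * Wᴴ).trace = Fintype.card κ := by rw [trace_mul_comm, hW, trace_one]
  simp only [trace, diag_apply, mul_conjTranspose_apply_self] at h
  exact_mod_cast h

end Isometry

lemma conjTranspose_submatrix_mul_mul_submatrix {α m n κ : Type*} [Fintype m] [Fintype n]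
    [NonUnitalNonAssocSemiring α] [StarRing α] (U : Matrix m n α) (X : Matrix m m α) (g : κ → n) :
    (U.submatrix id g)ᴴ * X * U.submatrix id g = (Uᴴ * X * U).submatrix g g := by
  ext i j
  simp [mul_apply]

namespace Matrix.IsHermitian

variable {n : ℕ} {M : Matrix (Fin n) (Fin n) ℂ} (hM : M.IsHermitian)

lemma re_trace_conjTranspose_mul_mul_le_pSum {k : ℕ} (hk : k < n) {V : Matrix (Fin n) (Fin k) ℂ}
    (hV : Vᴴ * V = 1) : (Vᴴ * M * V).trace.re ≤ pSum (decSort hM.eigenvalues) k := by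
  set U : Matrix (Fin n) (Fin n) ℂ := ↑hM.eigenvectorUnitary
  set W := Uᴴ * V
  have hU : U * Uᴴ = 1 := mem_unitaryGroup_iff.mp hM.eigenvectorUnitary.2
  have hW : Wᴴ * W = 1 := by
    rw [conjTranspose_mul, conjTranspose_conjTranspose, Matrix.mul_assoc, ← Matrix.mul_assoc U,
      hU, Matrix.one_mul, hV]
  have hMV : Vᴴ * M * V = Wᴴ * diagonal (fun j => (hM.eigenvalues j : ℂ)) * W := by
    conv_lhs => rw [hM.spectral_theorem]
    simp [W, U, Unitary.conjStarAlgAut_apply, conjTranspose_mul, Matrix.mul_assoc]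
    rfl
  rw [hMV, trace_conjTranspose_mul_diagonal_mul, Complex.ofReal_re]
  exact sum_mul_le_pSum_decSort hk _ _ (fun j => sum_nonneg fun i _ => Complex.normSq_nonneg _)
    (sum_normSq_row_le_one hW) (by rw [sum_sum_normSq_eq_card hW, Fintype.card_fin])

lemma exists_isometry_re_trace_eq_pSum {k : ℕ} (hk : k ≤ n) :
    ∃ V : Matrix (Fin n) (Fin k) ℂ, Vᴴ * V = 1 ∧
      (Vᴴ * M * V).trace.re = pSum (decSort hM.eigenvalues) k := by
  set U : Matrix (Fin n) (Fin n) ℂ := ↑hM.eigenvectorUnitary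
  -- the eigenvectors belonging to the `k` largest eigenvalues
  set g : Fin k → Fin n := Tuple.sort (fun i => -hM.eigenvalues i) ∘ Fin.castLE hk
  have hg : Function.Injective g := (Equiv.injective _).comp (Fin.castLE_injective hk)
  refine ⟨U.submatrix id g, ?_, ?_⟩
  · rw [← Matrix.mul_one (U.submatrix id g)ᴴ, conjTranspose_submatrix_mul_mul_submatrix,
      Matrix.mul_one, ← star_eq_conjTranspose, Unitary.coe_star_mul_self, submatrix_one g hg]
  · have hdiag : Uᴴ * M * U = diagonal (fun j => (hM.eigenvalues j : ℂ)) := by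
      have h := hM.conjStarAlgAut_star_eigenvectorUnitary
      rw [Unitary.conjStarAlgAut_star_apply] at h
      exact h
    rw [conjTranspose_submatrix_mul_mul_submatrix, hdiag, trace, pSum_eq_sum_castLE hk]
    simp [g, decSort]

end Matrix.IsHermitian

/-- The eigenvalues of `A + B` (nonincreasing) are majorized by the sum of the
nonincreasingly ordered eigenvalues of `A` and of `B`. -/
theorem eigenvalues_add_majorized (n : ℕ) (A B : Matrix (Fin n) (Fin n) ℂ)
    (hA : A.IsHermitian) (hB : B.IsHermitian) (hAB : (A + B).IsHermitian) :
    Majorizes hAB.eigenvalues (decSort hA.eigenvalues + decSort hB.eigenvalues) := by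
  refine ⟨fun k hk => ?_, ?_⟩
  · obtain ⟨V, hV, hVAB⟩ := hAB.exists_isometry_re_trace_eq_pSum hk.le
    have hsorted : Antitone (decSort hA.eigenvalues + decSort hB.eigenvalues) :=
      (antitone_decSort _).add (antitone_decSort _)
    rw [decSort_eq_self_of_antitone hsorted, pSum_add, ← hVAB,
      Matrix.mul_add, Matrix.add_mul, trace_add, Complex.add_re]
    exact add_le_add (hA.re_trace_conjTranspose_mul_mul_le_pSum hk hV)
      (hB.re_trace_conjTranspose_mul_mul_le_pSum hk hV)
  · have htrace := hAB.trace_eq_sum_eigenvalues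
    rw [trace_add, hA.trace_eq_sum_eigenvalues, hB.trace_eq_sum_eigenvalues] at htrace
    simp only [Pi.add_apply, sum_add_distrib, sum_decSort]
    exact_mod_cast htrace.symm
end

section
/- A norm ‖·‖ on the real vector space of n×n complex Hermitian matrices is weakly unitarily invariant (‖U*AU‖ = ‖A‖ for all unitary U) if and only if there exists a symmetric norm f on ℝⁿ with ‖A‖ = f(λ₁(A),…,λₙ(A)) for all Hermitian A. -/
/-!
By the spectral theorem, a unitarily invariant `N` takes the same value at a Hermitian `A` and at
the diagonal matrix of its eigenvalues, so `f x := N (diagonal x)` is the required norm. It is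
symmetric because `diagonal x` and `diagonal (x ∘ σ)` have the same characteristic polynomial,
and Mathlib's eigenvalue tuple of a Hermitian matrix is a function of its characteristic
polynomial. For the same reason `star U * A * U` and `A` have the same eigenvalue tuple.
-/

open Matrix Polynomial

namespace Matrix

variable {𝕜 : Type*} [RCLike 𝕜] {n : Type*}

lemma IsHermitian.star_mul_mul [Fintype n] {A : Matrix n n 𝕜} (hA : A.IsHermitian)
    (U : Matrix n n 𝕜) :
    (star U * A * U).IsHermitian := by
  simpa only [star_eq_conjTranspose] using isHermitian_conjTranspose_mul_mul U hA

variable [DecidableEq n]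

lemma isHermitian_diagonal_ofReal (x : n → ℝ) :
    (diagonal (RCLike.ofReal ∘ x : n → 𝕜)).IsHermitian :=
  isHermitian_diagonal_of_self_adjoint _ <| funext fun i => RCLike.conj_ofReal (x i)

lemma diagonal_ofReal_eq_zero_iff {x : n → ℝ} :
    diagonal (RCLike.ofReal ∘ x : n → 𝕜) = 0 ↔ x = 0 := by
  simp [diagonal_eq_zero, funext_iff]

lemma diagonal_ofReal_smul (c : ℝ) (x : n → ℝ) :
    diagonal (RCLike.ofReal ∘ (c • x) : n → 𝕜) = (c : 𝕜) • diagonal (RCLike.ofReal ∘ x) := by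
  rw [← diagonal_smul]; congr 1; ext i; simp

lemma diagonal_ofReal_add (x y : n → ℝ) :
    diagonal (RCLike.ofReal ∘ (x + y) : n → 𝕜) =
      diagonal (RCLike.ofReal ∘ x) + diagonal (RCLike.ofReal ∘ y) := by
  rw [diagonal_add]; congr 1; ext i; simp

variable [Fintype n]

lemma charpoly_diagonal_comp_perm (d : n → 𝕜) (σ : Equiv.Perm n) :
    (diagonal (d ∘ σ)).charpoly = (diagonal d).charpoly := by
  simp only [charpoly_diagonal, Function.comp_apply]
  exact Equiv.prod_comp σ fun i => X - C (d i)

lemma charpoly_star_mul_mul {U : Matrix n n 𝕜} (hU : U ∈ unitaryGroup n 𝕜) (A : Matrix n n 𝕜) :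
    (star U * A * U).charpoly = A.charpoly := by
  rw [charpoly_mul_comm, ← mul_assoc, mem_unitaryGroup_iff.mp hU, one_mul]

lemma IsHermitian.eigenvalues_star_mul_mul {A U : Matrix n n 𝕜} (hA : A.IsHermitian)
    (hU : U ∈ unitaryGroup n 𝕜) (hUA : (star U * A * U).IsHermitian) :
    hUA.eigenvalues = hA.eigenvalues :=
  (hUA.eigenvalues_eq_eigenvalues_iff hA).mpr (charpoly_star_mul_mul hU A)

lemma IsHermitian.star_eigenvectorUnitary_mul_mul {A : Matrix n n 𝕜} (hA : A.IsHermitian) :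
    star (hA.eigenvectorUnitary : Matrix n n 𝕜) * A * (hA.eigenvectorUnitary : Matrix n n 𝕜) =
      diagonal (RCLike.ofReal ∘ hA.eigenvalues) := by
  simpa [Unitary.conjStarAlgAut_apply] using hA.conjStarAlgAut_star_eigenvectorUnitary

variable {α : Type*} {N : Matrix n n 𝕜 → α}

lemma apply_eq_apply_diagonal_eigenvalues
    (hN : ∀ A : Matrix n n 𝕜, A.IsHermitian → ∀ U ∈ unitaryGroup n 𝕜, N (star U * A * U) = N A)
    {A : Matrix n n 𝕜} (hA : A.IsHermitian) :
    N A = N (diagonal (RCLike.ofReal ∘ hA.eigenvalues)) := by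
  rw [← hA.star_eigenvectorUnitary_mul_mul, hN A hA _ hA.eigenvectorUnitary.2]

lemma apply_eq_of_charpoly_eq
    (hN : ∀ A : Matrix n n 𝕜, A.IsHermitian → ∀ U ∈ unitaryGroup n 𝕜, N (star U * A * U) = N A)
    {A B : Matrix n n 𝕜} (hA : A.IsHermitian) (hB : B.IsHermitian)
    (h : A.charpoly = B.charpoly) : N A = N B := by
  rw [apply_eq_apply_diagonal_eigenvalues hN hA, apply_eq_apply_diagonal_eigenvalues hN hB,
    (hA.eigenvalues_eq_eigenvalues_iff hB).mpr h]

end Matrix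

/-- Lewis' classification: a norm on the Hermitian `n × n` matrices is weakly unitarily
invariant iff it is a symmetric norm on `ℝⁿ` applied to the eigenvalues. -/
theorem weakly_unitarily_invariant_iff_symmetric_norm_eigenvalues (n : ℕ)
    (N : Matrix (Fin n) (Fin n) ℂ → ℝ)
    (hnonneg : ∀ A : Matrix (Fin n) (Fin n) ℂ, A.IsHermitian → 0 ≤ N A)
    (hdef : ∀ A : Matrix (Fin n) (Fin n) ℂ, A.IsHermitian → (N A = 0 ↔ A = 0))
    (hhom : ∀ (c : ℝ) (A : Matrix (Fin n) (Fin n) ℂ), A.IsHermitian →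
      N ((c : ℂ) • A) = |c| * N A)
    (htri : ∀ A B : Matrix (Fin n) (Fin n) ℂ, A.IsHermitian → B.IsHermitian →
      N (A + B) ≤ N A + N B) :
    (∀ A : Matrix (Fin n) (Fin n) ℂ, A.IsHermitian →
        ∀ U ∈ Matrix.unitaryGroup (Fin n) ℂ, N (star U * A * U) = N A) ↔
      ∃ f : (Fin n → ℝ) → ℝ,
        (∀ x, 0 ≤ f x) ∧ (∀ x, f x = 0 ↔ x = 0) ∧
        (∀ (c : ℝ) x, f (c • x) = |c| * f x) ∧
        (∀ x y, f (x + y) ≤ f x + f y) ∧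
        (∀ (σ : Equiv.Perm (Fin n)) x, f (x ∘ σ) = f x) ∧
        (∀ (A : Matrix (Fin n) (Fin n) ℂ) (hA : A.IsHermitian),
          N A = f hA.eigenvalues) := by
  constructor
  · intro hN
    have hdiag := isHermitian_diagonal_ofReal (𝕜 := ℂ) (n := Fin n)
    refine ⟨fun x => N (diagonal (RCLike.ofReal ∘ x)), fun x => hnonneg _ (hdiag x),
      fun x => (hdef _ (hdiag x)).trans diagonal_ofReal_eq_zero_iff, fun c x => ?_, fun x y => ?_,
      fun σ x => ?_, fun A hA => apply_eq_apply_diagonal_eigenvalues hN hA⟩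
    · change N _ = _
      rw [diagonal_ofReal_smul]
      exact hhom c _ (hdiag x)
    · simpa only [diagonal_ofReal_add] using htri _ _ (hdiag x) (hdiag y)
    · exact apply_eq_of_charpoly_eq hN (hdiag (x ∘ σ)) (hdiag x)
        (charpoly_diagonal_comp_perm (RCLike.ofReal ∘ x) σ)
  · rintro ⟨f, -, -, -, -, -, hf⟩ A hA U hU
    rw [hf _ (hA.star_mul_mul U), hf _ hA, hA.eigenvalues_star_mul_mul hU]
end

section
/- If f is a symmetric norm on ℝⁿ, then A ↦ f(λ₁(A),…,λₙ(A)) defines a norm on the real vector space of n×n complex Hermitian matrices; in particular it satisfies the triangle inequality. -/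
/-!
By the spectral theorem, `U* A U = W* diag(λ(A)) W` with `W` unitary, so the real diagonal of
`U* A U` is `P λ(A)` for the doubly stochastic matrix `P i j = |W j i|²`.  By Birkhoff's theorem
`P λ(A)` is a convex combination of permutations of `λ(A)`, so for a convex permutation-invariant
`f` we get `f (diag (U* A U)) ≤ f (λ(A))`.  Since `λ(A)` is itself the diagonal of `V* A V` for
the eigenvector unitary `V` of `A`, and the diagonal is linear in `A`, subadditivity and
homogeneity pass from `f` to `A ↦ f (λ(A))`.
-/

open Matrix

variable {m : Type*} [Fintype m] [DecidableEq m] {𝕜 : Type*} [RCLike 𝕜]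

theorem ConvexOn.map_mulVec_le_of_mem_doublyStochastic {f : (m → ℝ) → ℝ}
    (hf : ConvexOn ℝ Set.univ f) (hsym : ∀ (σ : Equiv.Perm m) x, f (x ∘ σ) = f x)
    {P : Matrix m m ℝ} (hP : P ∈ doublyStochastic ℝ m) (x : m → ℝ) : f (P *ᵥ x) ≤ f x := by
  obtain ⟨w, hw0, hw1, rfl⟩ := exists_eq_sum_perm_of_mem_doublyStochastic hP
  calc f ((∑ σ, w σ • σ.permMatrix ℝ) *ᵥ x) = f (∑ σ, w σ • (x ∘ σ)) := by
        simp only [sum_mulVec, smul_mulVec, permMatrix_mulVec]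
    _ ≤ ∑ σ, w σ • f (x ∘ σ) :=
        hf.map_sum_le (fun σ _ => hw0 σ) hw1 fun _ _ => Set.mem_univ _
    _ = f x := by simp only [hsym, ← Finset.sum_smul, hw1, one_smul]

namespace Matrix

theorem map_norm_sq_mem_doublyStochastic {U : Matrix m m 𝕜} (hU : U ∈ unitaryGroup m 𝕜) :
    U.map (‖·‖ ^ 2) ∈ doublyStochastic ℝ m := by
  refine mem_doublyStochastic_iff_sum.2 ⟨fun _ _ => sq_nonneg _, fun i => ?_, fun j => ?_⟩
  · have h := congrFun₂ (mem_unitaryGroup_iff.mp hU) i i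
    simp only [mul_apply, star_apply, RCLike.star_def, RCLike.mul_conj, one_apply_eq] at h
    exact_mod_cast h
  · have h := congrFun₂ (mem_unitaryGroup_iff'.mp hU) j j
    simp only [mul_apply, star_apply, RCLike.star_def, RCLike.conj_mul, one_apply_eq] at h
    exact_mod_cast h

theorem star_mul_diagonal_mul_apply_self (W : Matrix m m 𝕜) (d : m → 𝕜) (i : m) :
    (star W * diagonal d * W) i i = ∑ j, (‖W j i‖ ^ 2 : ℝ) * d j := by
  refine (mul_apply ..).trans <| Finset.sum_congr rfl fun j _ => ?_
  rw [mul_diagonal, star_apply, RCLike.star_def, mul_right_comm, RCLike.conj_mul]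
  push_cast; rfl

def conjDiagRe (U : Matrix m m 𝕜) : Matrix m m 𝕜 →ₗ[ℝ] m → ℝ where
  toFun A i := RCLike.re ((star U * A * U) i i)
  map_add' A B := by ext i; simp [Matrix.mul_add, Matrix.add_mul]
  map_smul' c A := by ext i; simp [RCLike.smul_re]

theorem conjDiagRe_apply (U A : Matrix m m 𝕜) (i : m) :
    conjDiagRe U A i = RCLike.re ((star U * A * U) i i) :=
  rfl

namespace IsHermitian

variable {A B : Matrix m m 𝕜}

theorem eigenvalues_eq_conjDiagRe (hA : A.IsHermitian) :
    hA.eigenvalues = conjDiagRe (hA.eigenvectorUnitary : Matrix m m 𝕜) A := by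
  funext i
  rw [conjDiagRe_apply, ← Unitary.conjStarAlgAut_star_apply (S := 𝕜),
    hA.conjStarAlgAut_star_eigenvectorUnitary]
  simp

theorem exists_mem_doublyStochastic_conjDiagRe_eq (hA : A.IsHermitian) {U : Matrix m m 𝕜}
    (hU : U ∈ unitaryGroup m 𝕜) :
    ∃ P ∈ doublyStochastic ℝ m, conjDiagRe U A = P *ᵥ hA.eigenvalues := by
  set W := star (hA.eigenvectorUnitary : Matrix m m 𝕜) * U
  have hW : W ∈ unitaryGroup m 𝕜 := mul_mem (Unitary.star_mem hA.eigenvectorUnitary.2) hU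
  have hconj : star U * A * U = star W * diagonal (RCLike.ofReal ∘ hA.eigenvalues) * W := by
    conv_lhs => rw [hA.spectral_theorem, Unitary.conjStarAlgAut_apply]
    simp only [W, StarMul.star_mul, star_star]
    noncomm_ring
  refine ⟨(W.map (‖·‖ ^ 2))ᵀ,
    transpose_mem_doublyStochastic_iff.2 (map_norm_sq_mem_doublyStochastic hW), ?_⟩
  ext i
  rw [conjDiagRe_apply, hconj, star_mul_diagonal_mul_apply_self]
  simp [mulVec, dotProduct]

theorem map_conjDiagRe_le (hA : A.IsHermitian) {f : (m → ℝ) → ℝ} (hf : ConvexOn ℝ Set.univ f)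
    (hsym : ∀ (σ : Equiv.Perm m) x, f (x ∘ σ) = f x) {U : Matrix m m 𝕜}
    (hU : U ∈ unitaryGroup m 𝕜) : f (conjDiagRe U A) ≤ f hA.eigenvalues := by
  obtain ⟨P, hP, hdiag⟩ := hA.exists_mem_doublyStochastic_conjDiagRe_eq hU
  exact hdiag ▸ hf.map_mulVec_le_of_mem_doublyStochastic hsym hP _

variable (p : Seminorm ℝ (m → ℝ))

theorem seminorm_eigenvalues_add_le (hA : A.IsHermitian)
    (hsym : ∀ (σ : Equiv.Perm m) x, p (x ∘ σ) = p x) (hB : B.IsHermitian)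
    (hAB : (A + B).IsHermitian) :
    p hAB.eigenvalues ≤ p hA.eigenvalues + p hB.eigenvalues := by
  rw [hAB.eigenvalues_eq_conjDiagRe, map_add]
  exact (map_add_le_add p _ _).trans <| add_le_add
    (hA.map_conjDiagRe_le p.convexOn hsym (Subtype.prop _))
    (hB.map_conjDiagRe_le p.convexOn hsym (Subtype.prop _))

theorem seminorm_eigenvalues_le_of_eq_smul (hA : A.IsHermitian)
    (hsym : ∀ (σ : Equiv.Perm m) x, p (x ∘ σ) = p x) (hB : B.IsHermitian)
    {c : ℝ} (h : B = c • A) :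
    p hB.eigenvalues ≤ |c| * p hA.eigenvalues := by
  subst h
  rw [hB.eigenvalues_eq_conjDiagRe, map_smul, map_smul_eq_mul, Real.norm_eq_abs]
  gcongr
  exact hA.map_conjDiagRe_le p.convexOn hsym (Subtype.prop _)

theorem seminorm_eigenvalues_eq_of_eq_smul (hA : A.IsHermitian)
    (hsym : ∀ (σ : Equiv.Perm m) x, p (x ∘ σ) = p x) (hB : B.IsHermitian)
    {c : ℝ} (h : B = c • A) :
    p hB.eigenvalues = |c| * p hA.eigenvalues := by
  refine le_antisymm (hA.seminorm_eigenvalues_le_of_eq_smul p hsym hB h) ?_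
  rcases eq_or_ne c 0 with rfl | hc
  · simp
  · have hle := hB.seminorm_eigenvalues_le_of_eq_smul p hsym hA (c := c⁻¹)
      (by rw [h, smul_smul, inv_mul_cancel₀ hc, one_smul])
    rwa [abs_inv, le_inv_mul_iff₀ (abs_pos.2 hc)] at hle

end IsHermitian

end Matrix

theorem symmetric_norm_eigenvalues_is_norm_general (n : ℕ) (f : (Fin n → ℝ) → ℝ)
    (hdef : ∀ x, f x = 0 ↔ x = 0)
    (hhom : ∀ (c : ℝ) x, f (c • x) = |c| * f x)
    (htri : ∀ x y, f (x + y) ≤ f x + f y)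
    (hsym : ∀ (σ : Equiv.Perm (Fin n)) x, f (x ∘ σ) = f x) :
    (∀ (A : Matrix (Fin n) (Fin n) ℂ) (hA : A.IsHermitian), 0 ≤ f hA.eigenvalues) ∧
    (∀ (A : Matrix (Fin n) (Fin n) ℂ) (hA : A.IsHermitian),
      (f hA.eigenvalues = 0 ↔ A = 0)) ∧
    (∀ (c : ℝ) (A : Matrix (Fin n) (Fin n) ℂ) (hA : A.IsHermitian)
      (hcA : ((c : ℂ) • A).IsHermitian), f hcA.eigenvalues = |c| * f hA.eigenvalues) ∧
    (∀ (A B : Matrix (Fin n) (Fin n) ℂ) (hA : A.IsHermitian) (hB : B.IsHermitian)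
      (hAB : (A + B).IsHermitian),
      f hAB.eigenvalues ≤ f hA.eigenvalues + f hB.eigenvalues) := by
  let p : Seminorm ℝ (Fin n → ℝ) := .of f htri fun c x => by rw [hhom, Real.norm_eq_abs]
  refine ⟨fun A hA => apply_nonneg p _, fun A hA => (hdef _).trans hA.eigenvalues_eq_zero_iff,
    fun c A hA hcA => ?_, fun A B hA hB hAB => hA.seminorm_eigenvalues_add_le p hsym hB hAB⟩
  exact hA.seminorm_eigenvalues_eq_of_eq_smul p hsym hcA (RCLike.real_smul_eq_coe_smul c A).symm

/-- If `f` is a symmetric norm on `ℝⁿ`, then `A ↦ f(λ(A))` is a norm on the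
Hermitian `n × n` matrices. -/
theorem symmetric_norm_eigenvalues_is_norm (n : ℕ) (f : (Fin n → ℝ) → ℝ)
    (hnonneg : ∀ x, 0 ≤ f x) (hdef : ∀ x, f x = 0 ↔ x = 0)
    (hhom : ∀ (c : ℝ) x, f (c • x) = |c| * f x)
    (htri : ∀ x y, f (x + y) ≤ f x + f y)
    (hsym : ∀ (σ : Equiv.Perm (Fin n)) x, f (x ∘ σ) = f x) :
    (∀ (A : Matrix (Fin n) (Fin n) ℂ) (hA : A.IsHermitian), 0 ≤ f hA.eigenvalues) ∧
    (∀ (A : Matrix (Fin n) (Fin n) ℂ) (hA : A.IsHermitian),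
      (f hA.eigenvalues = 0 ↔ A = 0)) ∧
    (∀ (c : ℝ) (A : Matrix (Fin n) (Fin n) ℂ) (hA : A.IsHermitian)
      (hcA : ((c : ℂ) • A).IsHermitian), f hcA.eigenvalues = |c| * f hA.eigenvalues) ∧
    (∀ (A B : Matrix (Fin n) (Fin n) ℂ) (hA : A.IsHermitian) (hB : B.IsHermitian)
      (hAB : (A + B).IsHermitian),
      f hAB.eigenvalues ≤ f hA.eigenvalues + f hB.eigenvalues) :=
  symmetric_norm_eigenvalues_is_norm_general n f hdef hhom htri hsym
end

section
/- Let d ≥ 1 and let X₁,…,Xₙ be independent, identically distributed, nondegenerate real random variables with E|Xᵢ|^d < ∞. Then f(λ) = (E|Σᵢ λᵢXᵢ|^d)^{1/d} defines a norm on ℝⁿ. In particular, if E|Σᵢ λᵢXᵢ|^d = 0 then λ = 0. -/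
open MeasureTheory ProbabilityTheory

/-- A real random variable whose cdf takes only values 0 and 1 is a.s. constant. -/
lemma ae_const_of_cdf_zero_one {Ω : Type*} [MeasurableSpace Ω] (P : Measure Ω)
    [IsProbabilityMeasure P] {Y : Ω → ℝ} (hY : Measurable Y)
    (h01 : ∀ q : ℝ, P (Y ⁻¹' Set.Iic q) = 0 ∨ P (Y ⁻¹' Set.Iic q) = 1) :
    ∃ c : ℝ, Y =ᵐ[P] fun _ => c := by
  set A : Set ℝ := {q | P (Y ⁻¹' Set.Iic q) = 1} with hA
  have hup : ∀ {q r : ℝ}, q ≤ r → q ∈ A → r ∈ A := by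
    intro q r hqr hq
    refine le_antisymm prob_le_one ?_
    calc (1 : ENNReal) = P (Y ⁻¹' Set.Iic q) := hq.symm
      _ ≤ P (Y ⁻¹' Set.Iic r) := measure_mono (Set.preimage_mono (Set.Iic_subset_Iic.mpr hqr))
  have hne : A.Nonempty := by
    by_contra h
    rw [Set.not_nonempty_iff_eq_empty] at h
    have h0 : ∀ q : ℝ, P (Y ⁻¹' Set.Iic q) = 0 := by
      intro q
      rcases h01 q with h' | h'
      · exact h'
      · exfalso
        have : q ∈ A := h'
        rw [h] at this
        exact this
    have : P (⋃ n : ℕ, Y ⁻¹' Set.Iic (n : ℝ)) = 0 := measure_iUnion_null fun n => h0 n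
    have huniv : (Set.univ : Set Ω) ⊆ ⋃ n : ℕ, Y ⁻¹' Set.Iic (n : ℝ) := by
      intro ω _
      obtain ⟨n, hn⟩ := exists_nat_ge (Y ω)
      exact Set.mem_iUnion.2 ⟨n, hn⟩
    have : P Set.univ = 0 := measure_mono_null huniv this
    simp at this
  have hbdd : BddBelow A := by
    by_contra h
    have hmem : ∀ n : ℕ, (-(n : ℝ)) ∈ A := by
      intro n
      rw [not_bddBelow_iff] at h
      obtain ⟨a, ha, hlt⟩ := h (-(n : ℝ))
      exact hup hlt.le ha
    have h0 : ∀ n : ℕ, P (Y ⁻¹' Set.Ioi (-(n : ℝ))) = 0 := by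
      intro n
      have : Y ⁻¹' Set.Ioi (-(n : ℝ)) = (Y ⁻¹' Set.Iic (-(n : ℝ)))ᶜ := by
        rw [← Set.preimage_compl, Set.compl_Iic]
      rw [this, prob_compl_eq_zero_iff (hY measurableSet_Iic)]
      exact hmem n
    have : P (⋃ n : ℕ, Y ⁻¹' Set.Ioi (-(n : ℝ))) = 0 := measure_iUnion_null h0
    have huniv : (Set.univ : Set Ω) ⊆ ⋃ n : ℕ, Y ⁻¹' Set.Ioi (-(n : ℝ)) := by
      intro ω _
      obtain ⟨n, hn⟩ := exists_nat_gt (-(Y ω))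
      exact Set.mem_iUnion.2 ⟨n, by simp only [Set.mem_preimage, Set.mem_Ioi]; linarith⟩
    have : P Set.univ = 0 := measure_mono_null huniv this
    simp at this
  set c := sInf A with hc
  refine ⟨c, ?_⟩
  have hgt : ∀ n : ℕ, P (Y ⁻¹' Set.Ioi (c + 1 / (n + 1))) = 0 := by
    intro n
    have hcm : c + 1 / (n + 1) ∈ A := by
      have hlt : c < c + 1 / (n + 1) := by
        have : (0 : ℝ) < 1 / (n + 1) := by positivity
        linarith
      obtain ⟨a, haA, halt⟩ := (csInf_lt_iff hbdd hne).mp hlt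
      exact hup halt.le haA
    have : Y ⁻¹' Set.Ioi (c + 1 / (n + 1)) = (Y ⁻¹' Set.Iic (c + 1 / (n + 1)))ᶜ := by
      rw [← Set.preimage_compl, Set.compl_Iic]
    rw [this, prob_compl_eq_zero_iff (hY measurableSet_Iic)]
    exact hcm
  have hlt : ∀ n : ℕ, P (Y ⁻¹' Set.Iic (c - 1 / (n + 1))) = 0 := by
    intro n
    rcases h01 (c - 1 / (n + 1)) with h' | h'
    · exact h'
    · exfalso
      have : c ≤ c - 1 / (n + 1) := csInf_le hbdd h'
      have hpos : (0 : ℝ) < 1 / (n + 1) := by positivity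
      linarith
  have hsub : {ω | Y ω ≠ c} ⊆
      (⋃ n : ℕ, Y ⁻¹' Set.Ioi (c + 1 / (n + 1))) ∪
      (⋃ n : ℕ, Y ⁻¹' Set.Iic (c - 1 / (n + 1))) := by
    intro ω hω
    rcases lt_or_gt_of_ne hω with h | h
    · right
      obtain ⟨n, hn⟩ := exists_nat_one_div_lt (show (0 : ℝ) < c - Y ω by linarith)
      exact Set.mem_iUnion.2 ⟨n, by simp only [Set.mem_preimage, Set.mem_Iic]; linarith⟩
    · left
      obtain ⟨n, hn⟩ := exists_nat_one_div_lt (show (0 : ℝ) < Y ω - c by linarith)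
      exact Set.mem_iUnion.2 ⟨n, by simp only [Set.mem_preimage, Set.mem_Ioi]; linarith⟩
  have h0 : P {ω | Y ω ≠ c} = 0 := by
    refine measure_mono_null hsub (measure_union_null ?_ ?_)
    · exact measure_iUnion_null hgt
    · exact measure_iUnion_null hlt
  rw [Filter.EventuallyEq, ae_iff]
  exact h0

/-- If `Y` and `Z` are independent and a.e. equal, then `Y` is a.s. constant. -/
lemma ae_const_of_indep_ae_eq {Ω : Type*} [MeasurableSpace Ω] (P : Measure Ω)
    [IsProbabilityMeasure P] {Y Z : Ω → ℝ} (hY : Measurable Y) (hZ : Measurable Z)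
    (hind : IndepFun Y Z P) (heq : Y =ᵐ[P] Z) :
    ∃ c : ℝ, Y =ᵐ[P] fun _ => c := by
  refine ae_const_of_cdf_zero_one P hY ?_
  intro q
  have hYZ : P (Y ⁻¹' Set.Iic q ∩ Z ⁻¹' Set.Iic q) = P (Y ⁻¹' Set.Iic q) := by
    refine measure_congr ?_
    filter_upwards [heq] with ω hω
    show (Y ω ≤ q ∧ Z ω ≤ q) = (Y ω ≤ q)
    rw [hω, eq_iff_iff, and_self]
  have hZY : P (Z ⁻¹' Set.Iic q) = P (Y ⁻¹' Set.Iic q) := by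
    refine measure_congr ?_
    filter_upwards [heq] with ω hω
    show (Z ω ≤ q) = (Y ω ≤ q)
    rw [hω]
  have hmul := hind.measure_inter_preimage_eq_mul (Set.Iic q) (Set.Iic q)
    measurableSet_Iic measurableSet_Iic
  rw [hYZ, hZY] at hmul
  set p := P (Y ⁻¹' Set.Iic q) with hp
  by_cases h0 : p = 0
  · exact Or.inl h0
  · right
    have hfin : p ≠ ⊤ := (lt_of_le_of_lt prob_le_one ENNReal.one_lt_top).ne
    have hr : p.toReal = p.toReal * p.toReal := by
      rw [← ENNReal.toReal_mul]
      exact congrArg ENNReal.toReal hmul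
    have hr0 : p.toReal ≠ 0 := ENNReal.toReal_ne_zero.mpr ⟨h0, hfin⟩
    have hr1 : p.toReal = 1 := by
      have : p.toReal * (p.toReal - 1) = 0 := by ring_nf; linarith [hr]
      rcases mul_eq_zero.mp this with h | h
      · exact absurd h hr0
      · linarith
    rw [← ENNReal.ofReal_toReal hfin, hr1, ENNReal.ofReal_one]

/-- The random vector norm `λ ↦ (E|⟨X,λ⟩|^d)^{1/d}`. -/
noncomputable def rvNorm {n : ℕ} {Ω : Type*} [MeasurableSpace Ω] (P : Measure Ω)
    (X : Fin n → Ω → ℝ) (d : ℝ) (l : Fin n → ℝ) : ℝ :=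
  (∫ ω, |∑ i, l i * X i ω| ^ d ∂P) ^ (1 / d)

/-- For iid nondegenerate `X₁,…,Xₙ` with finite `d`-th moment (`d ≥ 1`),
`λ ↦ (E|Σ λᵢ Xᵢ|^d)^{1/d}` is a norm on `ℝⁿ`; in particular, it is positive definite. -/
theorem rvNorm_is_norm (n : ℕ) (d : ℝ) (hd : 1 ≤ d) {Ω : Type*} [MeasurableSpace Ω]
    (P : Measure Ω) [IsProbabilityMeasure P] (X : Fin n → Ω → ℝ)
    (hmeas : ∀ i, Measurable (X i))
    (hindep : iIndepFun X P)
    (hident : ∀ i j, Measure.map (X i) P = Measure.map (X j) P)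
    (hnondeg : ∀ i, ¬ ∃ c : ℝ, X i =ᵐ[P] fun _ => c)
    (hmom : ∀ i, MemLp (X i) (ENNReal.ofReal d) P) :
    (∀ l m : Fin n → ℝ, rvNorm P X d (l + m) ≤ rvNorm P X d l + rvNorm P X d m) ∧
    (∀ (c : ℝ) (l : Fin n → ℝ), rvNorm P X d (c • l) = |c| * rvNorm P X d l) ∧
    (∀ l : Fin n → ℝ, (∫ ω, |∑ i, l i * X i ω| ^ d ∂P) = 0 → l = 0) := by
  have hd0 : (0 : ℝ) < d := lt_of_lt_of_le one_pos hd
  have hdne : d ≠ 0 := hd0.ne'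
  set p : ENNReal := ENNReal.ofReal d with hpdef
  have hp_ne_zero : p ≠ 0 := by
    simp [hpdef, ENNReal.ofReal_eq_zero, not_le, hd0]
  have hp_ne_top : p ≠ ⊤ := ENNReal.ofReal_ne_top
  have hp_toReal : p.toReal = d := ENNReal.toReal_ofReal hd0.le
  have hp_one : 1 ≤ p := by
    rw [hpdef, ← ENNReal.ofReal_one]
    exact ENNReal.ofReal_le_ofReal hd
  -- the linear combination
  set S : (Fin n → ℝ) → Ω → ℝ := fun l ω => ∑ i, l i * X i ω with hSdef
  have hSmem : ∀ l, MemLp (S l) p P := by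
    intro l
    exact memLp_finsetSum Finset.univ fun i _ => (hmom i).const_mul (l i)
  -- key rewriting
  have key : ∀ l, rvNorm P X d l = (eLpNorm (S l) p P).toReal := by
    intro l
    rw [(hSmem l).eLpNorm_eq_integral_rpow_norm hp_ne_zero hp_ne_top]
    rw [ENNReal.toReal_ofReal (by positivity)]
    simp only [rvNorm, Real.norm_eq_abs, hp_toReal, one_div]
    rfl
  refine ⟨?_, ?_, ?_⟩
  · -- triangle inequality
    intro l m
    have hsum : S (l + m) = S l + S m := by
      funext ω
      simp only [hSdef, Pi.add_apply, add_mul, Finset.sum_add_distrib]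
    rw [key, key, key, hsum]
    have htri := eLpNorm_add_le (hSmem l).aestronglyMeasurable (hSmem m).aestronglyMeasurable hp_one
    have hfl : eLpNorm (S l) p P ≠ ⊤ := (hSmem l).eLpNorm_ne_top
    have hfm : eLpNorm (S m) p P ≠ ⊤ := (hSmem m).eLpNorm_ne_top
    calc (eLpNorm (S l + S m) p P).toReal
        ≤ (eLpNorm (S l) p P + eLpNorm (S m) p P).toReal :=
          ENNReal.toReal_mono (by finiteness) htri
      _ = (eLpNorm (S l) p P).toReal + (eLpNorm (S m) p P).toReal :=
          ENNReal.toReal_add hfl hfm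
  · -- homogeneity
    intro c l
    have hS : ∀ ω, S (c • l) ω = c * S l ω := by
      intro ω
      simp only [hSdef, Pi.smul_apply, smul_eq_mul, Finset.mul_sum, mul_assoc]
    have habs : ∀ ω, |S (c • l) ω| ^ d = |c| ^ d * |S l ω| ^ d := by
      intro ω
      rw [hS, abs_mul, Real.mul_rpow (abs_nonneg _) (abs_nonneg _)]
    simp only [rvNorm]
    calc (∫ ω, |∑ i, (c • l) i * X i ω| ^ d ∂P) ^ (1 / d)
        = (∫ ω, |c| ^ d * |∑ i, l i * X i ω| ^ d ∂P) ^ (1 / d) := by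
          congr 1
          exact integral_congr_ae (Filter.Eventually.of_forall fun ω => habs ω)
      _ = (|c| ^ d * ∫ ω, |∑ i, l i * X i ω| ^ d ∂P) ^ (1 / d) := by
          rw [integral_const_mul]
      _ = (|c| ^ d) ^ (1 / d) * (∫ ω, |∑ i, l i * X i ω| ^ d ∂P) ^ (1 / d) := by
          refine Real.mul_rpow (by positivity) ?_
          exact integral_nonneg fun ω => by positivity
      _ = |c| * (∫ ω, |∑ i, l i * X i ω| ^ d ∂P) ^ (1 / d) := by
          rw [← Real.rpow_mul (abs_nonneg c), mul_one_div_cancel hdne, Real.rpow_one]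
  · -- positive definiteness
    intro l hl
    by_contra hlne
    obtain ⟨i, hi⟩ := Function.ne_iff.mp hlne
    simp only [Pi.zero_apply] at hi
    -- the integrand is integrable
    have hint : Integrable (fun ω => |S l ω| ^ d) P := by
      have h := (hSmem l).integrable_norm_rpow hp_ne_zero hp_ne_top
      simpa only [Real.norm_eq_abs, hp_toReal] using h
    -- a.e. zero
    have hzero : (fun ω => |S l ω| ^ d) =ᵐ[P] 0 := by
      refine (integral_eq_zero_iff_of_nonneg (fun ω => by positivity) hint).mp ?_
      exact hl
    have hS0 : S l =ᵐ[P] 0 := by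
      filter_upwards [hzero] with ω hω
      simp only [Pi.zero_apply] at hω ⊢
      have := (Real.rpow_eq_zero (abs_nonneg _) hdne).mp hω
      exact abs_eq_zero.mp this
    -- the scaled family
    set f : Fin n → Ω → ℝ := fun j ω => l j * X j ω with hfdef
    have hfmeas : ∀ j, Measurable (f j) := fun j => (hmeas j).const_mul (l j)
    have hfindep : iIndepFun f P :=
      hindep.comp (fun j x => l j * x) fun j => measurable_const_mul (l j)
    have hIF : IndepFun (∑ j ∈ Finset.univ.erase i, f j) (f i) P :=
      hfindep.indepFun_finsetSum_of_notMem hfmeas (Finset.notMem_erase i Finset.univ)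
    set Z : Ω → ℝ := -(∑ j ∈ Finset.univ.erase i, f j) with hZdef
    have hsum_eq : (∑ j ∈ Finset.univ.erase i, f j) = fun ω => ∑ j ∈ Finset.univ.erase i, f j ω :=
      funext fun ω => Finset.sum_apply ω _ f
    have hZmeas : Measurable Z := by
      rw [hZdef, hsum_eq]
      exact (Finset.measurable_sum _ fun j _ => hfmeas j).neg
    have hYZ : f i =ᵐ[P] Z := by
      filter_upwards [hS0] with ω hω
      simp only [Pi.zero_apply, hSdef] at hω
      have hsplit : f i ω + ∑ j ∈ Finset.univ.erase i, f j ω = ∑ j, f j ω :=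
        Finset.add_sum_erase Finset.univ (fun j => f j ω) (Finset.mem_univ i)
      have h0 : (∑ j, f j ω) = 0 := hω
      simp only [hZdef, Pi.neg_apply, Finset.sum_apply]
      linarith [hsplit]
    have hind2 : IndepFun (f i) Z P := by
      exact (hIF.symm).neg_right
    obtain ⟨c, hc⟩ := ae_const_of_indep_ae_eq P (hfmeas i) hZmeas hind2 hYZ
    refine hnondeg i ⟨c / l i, ?_⟩
    filter_upwards [hc] with ω hω
    simp only [hfdef] at hω
    rw [eq_div_iff hi, mul_comm]
    exact hω
end

section
/- For n ≥ 2 and even d ≥ 4, the norm A ↦ (h_d(λ₁(A),…,λₙ(A)))^{1/d} on n×n Hermitian matrices is not induced by an inner product: with A = diag(1,0,…,0) and B = diag(0,1,0,…,0) the parallelogram law fails, since ‖A+B‖² + ‖A−B‖² = (d+1)^{2/d} + 1 ≠ 4 = 2(‖A‖² + ‖B‖²) unless (d+1)² = 3^d. -/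
open Matrix Polynomial in
lemma eig_multiset {n : ℕ} {M : Matrix (Fin n) (Fin n) ℂ} (hM : M.IsHermitian)
    (D : Fin n → ℂ) (hMD : M = Matrix.diagonal D) :
    (Finset.univ.val.map (fun i => ((hM.eigenvalues i : ℝ) : ℂ))) =
      Finset.univ.val.map D := by
  set U : Matrix (Fin n) (Fin n) ℂ := (hM.eigenvectorUnitary : Matrix (Fin n) (Fin n) ℂ) with hU
  have hUU : U * star U = 1 := (Matrix.mem_unitaryGroup_iff).mp hM.eigenvectorUnitary.2
  have hUU' : star U * U = 1 := (Matrix.mem_unitaryGroup_iff').mp hM.eigenvectorUnitary.2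
  have key : ∀ x : ℂ, ∏ i, (x - (hM.eigenvalues i : ℂ)) = ∏ i, (x - D i) := by
    intro x
    have h1 : x • (1 : Matrix (Fin n) (Fin n) ℂ) - M
        = U * (Matrix.diagonal (fun i => x - (hM.eigenvalues i : ℂ))) * star U := by
      have e1 : U * (x • (1 : Matrix (Fin n) (Fin n) ℂ)) * star U = x • (1 : Matrix (Fin n) (Fin n) ℂ) := by
        rw [mul_smul_comm, mul_one, smul_mul_assoc, hUU]
      have e2 : (Matrix.diagonal (fun i => x - (hM.eigenvalues i : ℂ)))
          = x • (1 : Matrix (Fin n) (Fin n) ℂ) - Matrix.diagonal (RCLike.ofReal ∘ hM.eigenvalues) := by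
        rw [smul_one_eq_diagonal, diagonal_sub]
        rfl
      rw [e2, mul_sub, sub_mul, e1]
      conv_lhs => rw [hM.spectral_theorem]
      rw [Unitary.conjStarAlgAut_apply]
    have h2 : det (x • (1 : Matrix (Fin n) (Fin n) ℂ) - M)
        = ∏ i, (x - (hM.eigenvalues i : ℂ)) := by
      rw [h1, det_mul, det_mul, mul_comm, ← mul_assoc, ← det_mul, hUU', det_one, one_mul,
        det_diagonal]
    have h3 : det (x • (1 : Matrix (Fin n) (Fin n) ℂ) - M) = ∏ i, (x - D i) := by
      rw [hMD, smul_one_eq_diagonal, diagonal_sub, det_diagonal]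
    rw [← h2, h3]
  have hpq : ((Finset.univ.val.map (fun i => ((hM.eigenvalues i : ℝ) : ℂ))).map
      (fun a => X - C a)).prod = ((Finset.univ.val.map D).map (fun a => X - C a)).prod := by
    apply Polynomial.funext
    intro x
    rw [Polynomial.eval_multiset_prod, Polynomial.eval_multiset_prod]
    simp only [Multiset.map_map, Function.comp, eval_sub, eval_X, eval_C]
    rw [← Finset.prod_eq_multiset_prod, ← Finset.prod_eq_multiset_prod]
    exact key x
  have := congrArg Polynomial.roots hpq
  rwa [roots_multiset_prod_X_sub_C, roots_multiset_prod_X_sub_C] at this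

lemma cnt_eq {n : ℕ} (f : Fin n → ℂ) (x : ℂ) :
    (Finset.univ.val.map f).count x = (Finset.univ.filter (fun i => x = f i)).card := by
  rw [Multiset.count_map]
  rfl

lemma mem_map_univ {n : ℕ} (f : Fin n → ℂ) (x : ℂ) :
    x ∈ Finset.univ.val.map f ↔ ∃ i, f i = x := by
  rw [Multiset.mem_map]
  simp

lemma two_le_cnt {n : ℕ} (f : Fin n → ℂ) (x : ℂ) {i j : Fin n} (hij : i ≠ j)
    (hi : f i = x) (hj : f j = x) :
    2 ≤ (Finset.univ.val.map f).count x := by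
  rw [cnt_eq]
  have : ({i, j} : Finset (Fin n)) ⊆ Finset.univ.filter (fun k => x = f k) := by
    intro k hk
    simp only [Finset.mem_insert, Finset.mem_singleton] at hk
    rcases hk with rfl | rfl <;> simp [hi, hj]
  calc 2 = ({i, j} : Finset (Fin n)).card := by rw [Finset.card_insert_of_notMem (by simpa), Finset.card_singleton]
  _ ≤ _ := Finset.card_le_card this

lemma cnt_unique {n : ℕ} (f : Fin n → ℂ) (x : ℂ) (k0 : Fin n)
    (h : ∀ i, f i = x ↔ i = k0) :
    (Finset.univ.val.map f).count x = 1 := by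
  rw [cnt_eq]
  have : Finset.univ.filter (fun i => x = f i) = {k0} := by
    ext i
    simp only [Finset.mem_filter, Finset.mem_univ, true_and, Finset.mem_singleton]
    rw [eq_comm, h i]
  rw [this, Finset.card_singleton]

lemma extract_two {n : ℕ} (v : Fin n → ℝ) (a b : ℝ) (ha : a ≠ 0) (hb : b ≠ 0) (hab : a ≠ b)
    (k0 l0 : Fin n) (hkl : k0 ≠ l0) (w : Fin n → ℂ)
    (hw : ∀ i, w i = if i = k0 then (a : ℂ) else if i = l0 then (b : ℂ) else 0)
    (h : Finset.univ.val.map (fun i => ((v i : ℝ) : ℂ)) = Finset.univ.val.map w) :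
    ∃ k l, k ≠ l ∧ v k = a ∧ v l = b ∧ ∀ i, i ≠ k → i ≠ l → v i = 0 := by
  have haC : (a : ℂ) ≠ 0 := by exact_mod_cast ha
  have hbC : (b : ℂ) ≠ 0 := by exact_mod_cast hb
  have habC : (a : ℂ) ≠ (b : ℂ) := by exact_mod_cast hab
  have hwa : ∀ i, w i = (a : ℂ) ↔ i = k0 := by
    intro i
    rw [hw i]
    split_ifs with h1 h2
    · simp [h1]
    · simp [h1, habC.symm]
    · simp [h1, haC.symm, eq_comm]
  have hwb : ∀ i, w i = (b : ℂ) ↔ i = l0 := by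
    intro i
    rw [hw i]
    split_ifs with h1 h2
    · simp [h1, habC, hkl, (h1 ▸ hkl : i ≠ l0)]
    · simp [h2]
    · simp [h2, hbC.symm, eq_comm]
  have hka : ∃ k, v k = a := by
    have : (a : ℂ) ∈ Finset.univ.val.map (fun i => ((v i : ℝ) : ℂ)) := by
      rw [h, mem_map_univ]
      exact ⟨k0, (hwa k0).mpr rfl⟩
    rw [mem_map_univ] at this
    obtain ⟨k, hk⟩ := this
    exact ⟨k, by exact_mod_cast hk⟩
  have hlb : ∃ l, v l = b := by
    have : (b : ℂ) ∈ Finset.univ.val.map (fun i => ((v i : ℝ) : ℂ)) := by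
      rw [h, mem_map_univ]
      exact ⟨l0, (hwb l0).mpr rfl⟩
    rw [mem_map_univ] at this
    obtain ⟨l, hl⟩ := this
    exact ⟨l, by exact_mod_cast hl⟩
  obtain ⟨k, hk⟩ := hka
  obtain ⟨l, hl⟩ := hlb
  refine ⟨k, l, fun hkl' => hab (by rw [← hk, ← hl, hkl']), hk, hl, ?_⟩
  intro i hik hil
  -- v i ∈ {a, b, 0}
  have hmem : ((v i : ℝ) : ℂ) ∈ Finset.univ.val.map w := by
    rw [← h, mem_map_univ]
    exact ⟨i, rfl⟩
  rw [mem_map_univ] at hmem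
  obtain ⟨j, hj⟩ := hmem
  rw [hw j] at hj
  by_contra hvi
  have hviC : ((v i : ℝ) : ℂ) ≠ 0 := by exact_mod_cast hvi
  split_ifs at hj with h1 h2
  · -- v i = a : contradiction with count
    have hva : v i = a := by exact_mod_cast hj.symm
    have h2le := two_le_cnt (fun i => ((v i : ℝ) : ℂ)) (a : ℂ) hik
      (congrArg Complex.ofReal hva) (congrArg Complex.ofReal hk)
    rw [h, cnt_unique w _ k0 hwa] at h2le
    omega
  · have hvb : v i = b := by exact_mod_cast hj.symm
    have h2le := two_le_cnt (fun i => ((v i : ℝ) : ℂ)) (b : ℂ) hil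
      (congrArg Complex.ofReal hvb) (congrArg Complex.ofReal hl)
    rw [h, cnt_unique w _ l0 hwb] at h2le
    omega
  · exact hviC hj.symm

lemma extract_one {n : ℕ} (v : Fin n → ℝ) (a : ℝ) (ha : a ≠ 0)
    (k0 : Fin n) (w : Fin n → ℂ)
    (hw : ∀ i, w i = if i = k0 then (a : ℂ) else 0)
    (h : Finset.univ.val.map (fun i => ((v i : ℝ) : ℂ)) = Finset.univ.val.map w) :
    ∃ k, v k = a ∧ ∀ i, i ≠ k → v i = 0 := by
  have haC : (a : ℂ) ≠ 0 := by exact_mod_cast ha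
  have hwa : ∀ i, w i = (a : ℂ) ↔ i = k0 := by
    intro i
    rw [hw i]
    split_ifs with h1
    · simp [h1]
    · simp [h1, haC.symm, eq_comm]
  have hka : ∃ k, v k = a := by
    have : (a : ℂ) ∈ Finset.univ.val.map (fun i => ((v i : ℝ) : ℂ)) := by
      rw [h, mem_map_univ]
      exact ⟨k0, (hwa k0).mpr rfl⟩
    rw [mem_map_univ] at this
    obtain ⟨k, hk⟩ := this
    exact ⟨k, by exact_mod_cast hk⟩
  obtain ⟨k, hk⟩ := hka
  refine ⟨k, hk, ?_⟩
  intro i hik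
  have hmem : ((v i : ℝ) : ℂ) ∈ Finset.univ.val.map w := by
    rw [← h, mem_map_univ]
    exact ⟨i, rfl⟩
  rw [mem_map_univ] at hmem
  obtain ⟨j, hj⟩ := hmem
  rw [hw j] at hj
  by_contra hvi
  have hviC : ((v i : ℝ) : ℂ) ≠ 0 := by exact_mod_cast hvi
  split_ifs at hj with h1
  · have hva : v i = a := by exact_mod_cast hj.symm
    have h2le := two_le_cnt (fun i => ((v i : ℝ) : ℂ)) (a : ℂ) hik
      (congrArg Complex.ofReal hva) (congrArg Complex.ofReal hk)
    rw [h, cnt_unique w _ k0 hwa] at h2le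
    omega
  · exact hviC hj.symm

lemma chs_single {n d : ℕ} (k : Fin n) (x : Fin n → ℝ)
    (hxk : x k = 1) (hx0 : ∀ i, i ≠ k → x i = 0) :
    chs n d x = 1 := by
  unfold chs
  rw [Finset.sum_eq_single (fun _ : Fin d => k)]
  · simp [hxk]
  · intro f hf hne
    have : ∃ i, f i ≠ k := by
      by_contra h
      push_neg at h
      exact hne (funext h)
    obtain ⟨i, hi⟩ := this
    exact Finset.prod_eq_zero (Finset.mem_univ i) (hx0 _ hi)
  · intro h
    exact absurd (Finset.mem_filter.mpr ⟨Finset.mem_univ _, fun i j _ => le_refl k⟩) h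

lemma card_filter_lt (d m : ℕ) (hm : m ≤ d) :
    (Finset.univ.filter (fun i : Fin d => (i : ℕ) < m)).card = m := by
  rcases eq_or_lt_of_le hm with h | hlt
  · have huniv : (Finset.univ.filter (fun i : Fin d => (i : ℕ) < m)) = Finset.univ := by
      ext i
      have := i.isLt
      simp only [Finset.mem_filter, Finset.mem_univ, true_and, iff_true]
      omega
    rw [huniv, Finset.card_univ, Fintype.card_fin, ← h]
  · have : (Finset.univ.filter (fun i : Fin d => (i : ℕ) < m)) = Finset.Iio ⟨m, hlt⟩ := by
      ext i
      simp [Finset.mem_Iio, Fin.lt_def]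
    rw [this, Fin.card_Iio]

lemma chs_pair {n d : ℕ} (a b : ℝ) {k l : Fin n} (hkl : k < l) (x : Fin n → ℝ)
    (hxk : x k = a) (hxl : x l = b) (hx0 : ∀ i, i ≠ k → i ≠ l → x i = 0) :
    chs n d x = ∑ j ∈ Finset.range (d + 1), a ^ (d - j) * b ^ j := by
  classical
  unfold chs
  set T := Finset.univ.filter (fun f : Fin d → Fin n => ∀ i j : Fin d, i ≤ j → f i ≤ f j) with hT
  set g : ℕ → (Fin d → Fin n) := fun j i => if (i : ℕ) < d - j then k else l with hg
  -- restrict to functions with values in {k, l}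
  have step1 : ∑ f ∈ T, ∏ i, x (f i)
      = ∑ f ∈ T.filter (fun f => ∀ i, f i = k ∨ f i = l), ∏ i, x (f i) := by
    refine (Finset.sum_filter_of_ne ?_).symm
    intro f _ hne i
    by_contra hi
    push_neg at hi
    exact hne (Finset.prod_eq_zero (Finset.mem_univ i) (hx0 _ hi.1 hi.2))
  -- the filtered set is the image of g on range (d+1)
  have hgmem : ∀ j ∈ Finset.range (d + 1), g j ∈ T.filter (fun f => ∀ i, f i = k ∨ f i = l) := by
    intro j hj
    refine Finset.mem_filter.mpr ⟨Finset.mem_filter.mpr ⟨Finset.mem_univ _, ?_⟩, ?_⟩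
    · intro i i' hii'
      have hii : (i : ℕ) ≤ (i' : ℕ) := hii'
      simp only [hg]
      split_ifs with h1 h2 h2
      · exact le_refl k
      · exact le_of_lt hkl
      · exact absurd (lt_of_le_of_lt hii h2) h1
      · exact le_refl l
    · intro i
      simp only [hg]
      split_ifs
      · exact Or.inl rfl
      · exact Or.inr rfl
  have hcount : ∀ j ≤ d, (Finset.univ.filter (fun i : Fin d => g j i = l)).card = j := by
    intro j hj
    have : (Finset.univ.filter (fun i : Fin d => g j i = l))
        = Finset.univ.filter (fun i : Fin d => ¬ ((i : ℕ) < d - j)) := by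
      ext i
      simp only [Finset.mem_filter, Finset.mem_univ, true_and, hg]
      split_ifs with h1
      · simp [h1, ne_of_lt hkl]
      · simp [h1]
    rw [this, Finset.filter_not, Finset.card_sdiff_of_subset (Finset.filter_subset _ _)]
    rw [card_filter_lt d (d - j) (Nat.sub_le _ _), Finset.card_univ, Fintype.card_fin]
    omega
  have hginj : ∀ j ∈ Finset.range (d+1), ∀ j' ∈ Finset.range (d+1), g j = g j' → j = j' := by
    intro j hj j' hj' hgg
    rw [Finset.mem_range] at hj hj'
    have := hcount j (by omega)
    rw [hgg] at this
    rw [hcount j' (by omega)] at this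
    omega
  have himg : T.filter (fun f => ∀ i, f i = k ∨ f i = l)
      = (Finset.range (d + 1)).image g := by
    apply Finset.Subset.antisymm
    · intro f hf
      rw [Finset.mem_filter, hT, Finset.mem_filter] at hf
      obtain ⟨⟨-, hmono⟩, hvals⟩ := hf
      set S := Finset.univ.filter (fun i : Fin d => f i = l) with hS
      have hScard : S.card ≤ d := le_trans (Finset.card_filter_le _ _) (by simp)
      -- up-closed
      have hup : ∀ i i' : Fin d, i ≤ i' → f i = l → f i' = l := by
        intro i i' hii' hfi
        rcases hvals i' with h | h
        · have := hmono i i' hii'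
          rw [hfi, h] at this
          exact absurd this (not_le_of_gt hkl)
        · exact h
      have hiff : ∀ i : Fin d, f i = l ↔ d - S.card ≤ (i : ℕ) := by
        intro i
        constructor
        · intro hfi
          have hsub : Finset.Ici i ⊆ S := by
            intro i' hi'
            rw [Finset.mem_Ici] at hi'
            exact Finset.mem_filter.mpr ⟨Finset.mem_univ _, hup i i' hi' hfi⟩
          have := Finset.card_le_card hsub
          rw [Fin.card_Ici] at this
          omega
        · intro hle
          by_contra hfi
          have hsub : S ⊆ Finset.Ioi i := by
            intro i' hi'
            rw [Finset.mem_Ioi]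
            rw [hS, Finset.mem_filter] at hi'
            by_contra hcon
            push_neg at hcon
            exact hfi (hup i' i hcon hi'.2)
          have := Finset.card_le_card hsub
          rw [Fin.card_Ioi] at this
          have hid := i.isLt
          omega
      rw [Finset.mem_image]
      refine ⟨S.card, Finset.mem_range.mpr (by omega), ?_⟩
      funext i
      simp only [hg]
      split_ifs with h1
      · rcases hvals i with h | h
        · exact h.symm
        · rw [hiff i] at h
          omega
      · exact ((hiff i).mpr (by omega)).symm
    · intro f hf
      rw [Finset.mem_image] at hf
      obtain ⟨j, hj, rfl⟩ := hf
      exact hgmem j hj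
  rw [step1, himg, Finset.sum_image hginj]
  apply Finset.sum_congr rfl
  intro j hj
  rw [Finset.mem_range] at hj
  have : ∏ i : Fin d, x (g j i) = ∏ i : Fin d, (if (i : ℕ) < d - j then a else b) := by
    apply Finset.prod_congr rfl
    intro i _
    simp only [hg]
    split_ifs
    · exact hxk
    · exact hxl
  rw [this, Finset.prod_ite, Finset.prod_const, Finset.prod_const]
  rw [card_filter_lt d (d - j) (Nat.sub_le _ _)]
  rw [Finset.filter_not, Finset.card_sdiff_of_subset (Finset.filter_subset _ _),
    card_filter_lt d (d - j) (Nat.sub_le _ _), Finset.card_univ, Fintype.card_fin]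
  have hjj : d - (d - j) = j := by omega
  rw [hjj]
lemma three_le_cnt {n : ℕ} (f : Fin n → ℂ) (x : ℂ) {i j m : Fin n}
    (hij : i ≠ j) (him : i ≠ m) (hjm : j ≠ m)
    (hi : f i = x) (hj : f j = x) (hm : f m = x) :
    3 ≤ (Finset.univ.val.map f).count x := by
  rw [cnt_eq]
  have hsub : ({i, j, m} : Finset (Fin n)) ⊆ Finset.univ.filter (fun k => x = f k) := by
    intro k hk
    simp only [Finset.mem_insert, Finset.mem_singleton] at hk
    rcases hk with rfl | rfl | rfl <;> simp [hi, hj, hm]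
  calc 3 = ({i, j, m} : Finset (Fin n)).card := by
        rw [Finset.card_insert_of_notMem (by simp [hij, him]),
          Finset.card_insert_of_notMem (by simpa), Finset.card_singleton]
  _ ≤ _ := Finset.card_le_card hsub

lemma extract_two_eq {n : ℕ} (v : Fin n → ℝ) (k0 l0 : Fin n) (hkl0 : k0 ≠ l0)
    (w : Fin n → ℂ)
    (hw : ∀ i, w i = if i = k0 then ((1 : ℝ) : ℂ) else if i = l0 then ((1 : ℝ) : ℂ) else 0)
    (h : Finset.univ.val.map (fun i => ((v i : ℝ) : ℂ)) = Finset.univ.val.map w) :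
    ∃ k l, k ≠ l ∧ v k = 1 ∧ v l = 1 ∧ ∀ i, i ≠ k → i ≠ l → v i = 0 := by
  have hw1 : ∀ i, w i = 1 ↔ (i = k0 ∨ i = l0) := by
    intro i
    rw [hw i]
    split_ifs with h1 h2 <;> simp_all
  have hcnt2 : (Finset.univ.val.map w).count 1 = 2 := by
    rw [cnt_eq]
    have : Finset.univ.filter (fun i => (1 : ℂ) = w i) = {k0, l0} := by
      ext i
      simp only [Finset.mem_filter, Finset.mem_univ, true_and, Finset.mem_insert,
        Finset.mem_singleton]
      rw [eq_comm, hw1 i]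
    rw [this, Finset.card_insert_of_notMem (by simpa), Finset.card_singleton]
  have hcnt2' : (Finset.univ.val.map (fun i => ((v i : ℝ) : ℂ))).count 1 = 2 := by
    rw [h, hcnt2]
  have hex : ∃ k l : Fin n, k ≠ l ∧ v k = 1 ∧ v l = 1 := by
    rw [cnt_eq] at hcnt2'
    have h1lt : 1 < (Finset.univ.filter (fun i : Fin n => (1 : ℂ) = ((v i : ℝ) : ℂ))).card := by
      omega
    rw [Finset.one_lt_card] at h1lt
    obtain ⟨k, hk, l, hl, hkl⟩ := h1lt
    simp only [Finset.mem_filter, Finset.mem_univ, true_and] at hk hl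
    exact ⟨k, l, hkl, by exact_mod_cast hk.symm, by exact_mod_cast hl.symm⟩
  obtain ⟨k, l, hkl, hk, hl⟩ := hex
  refine ⟨k, l, hkl, hk, hl, ?_⟩
  intro i hik hil
  have hmem : ((v i : ℝ) : ℂ) ∈ Finset.univ.val.map w := by
    rw [← h, mem_map_univ]
    exact ⟨i, rfl⟩
  rw [mem_map_univ] at hmem
  obtain ⟨j, hj⟩ := hmem
  rw [hw j] at hj
  by_contra hvi
  have hviC : ((v i : ℝ) : ℂ) ≠ 0 := by exact_mod_cast hvi
  have hvi1 : v i = 1 := by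
    split_ifs at hj
    · exact_mod_cast hj.symm
    · exact_mod_cast hj.symm
    · exact absurd hj.symm hviC
  have h3le := three_le_cnt (fun i => ((v i : ℝ) : ℂ)) 1 hik hil hkl
    (congrArg Complex.ofReal hvi1) (congrArg Complex.ofReal hk) (congrArg Complex.ofReal hl)
  rw [hcnt2'] at h3le
  omega

lemma pow_gt (d : ℕ) (hd : 4 ≤ d) : (d + 1) ^ 2 < 3 ^ d := by
  induction d with
  | zero => omega
  | succ m ih =>
    rcases Nat.lt_or_ge m 4 with h | h
    · interval_cases m <;> simp_all
    · have h1 := ih h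
      have h2 : 3 ^ (m + 1) = 3 * 3 ^ m := by ring
      nlinarith [h1, h2]

/-- For `n ≥ 2` and even `d ≥ 4`, the CHS norm `A ↦ h_d(λ(A))^{1/d}` fails the
parallelogram law at `A = diag(1,0,…,0)`, `B = diag(0,1,0,…,0)`:
`‖A+B‖² + ‖A−B‖² = (d+1)^{2/d} + 1 ≠ 2(‖A‖² + ‖B‖²)`. -/
theorem chs_norm_parallelogram_fails (n d : ℕ) (hn : 2 ≤ n) (hd : Even d) (hd4 : 4 ≤ d)
    (A B : Matrix (Fin n) (Fin n) ℂ)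
    (hAdef : A = Matrix.diagonal (fun i : Fin n => if (i : ℕ) = 0 then (1 : ℂ) else 0))
    (hBdef : B = Matrix.diagonal (fun i : Fin n => if (i : ℕ) = 1 then (1 : ℂ) else 0))
    (hA : A.IsHermitian) (hB : B.IsHermitian)
    (hAB : (A + B).IsHermitian) (hAB' : (A - B).IsHermitian) :
    (chs n d hAB.eigenvalues) ^ ((2 : ℝ) / d) + (chs n d hAB'.eigenvalues) ^ ((2 : ℝ) / d) =
        ((d : ℝ) + 1) ^ ((2 : ℝ) / d) + 1 ∧
      (chs n d hAB.eigenvalues) ^ ((2 : ℝ) / d) + (chs n d hAB'.eigenvalues) ^ ((2 : ℝ) / d) ≠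
        2 * ((chs n d hA.eigenvalues) ^ ((2 : ℝ) / d) +
          (chs n d hB.eigenvalues) ^ ((2 : ℝ) / d)) := by
  have hn0 : 0 < n := by omega
  set k0 : Fin n := ⟨0, by omega⟩ with hk0
  set l0 : Fin n := ⟨1, by omega⟩ with hl0
  have hk0l0 : k0 ≠ l0 := by simp [hk0, hl0, Fin.ext_iff]
  have hcond0 : ∀ i : Fin n, i = k0 ↔ (i : ℕ) = 0 := fun i => by rw [Fin.ext_iff]
  have hcond1 : ∀ i : Fin n, i = l0 ↔ (i : ℕ) = 1 := fun i => by rw [Fin.ext_iff]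
  -- chs of A
  have hchsA : chs n d hA.eigenvalues = 1 := by
    obtain ⟨k, hk, h0⟩ := extract_one hA.eigenvalues 1 one_ne_zero k0 _
      (fun i => by
        by_cases h : (i : ℕ) = 0
        · rw [if_pos h, if_pos ((hcond0 i).mpr h)]; norm_num
        · rw [if_neg h, if_neg (fun hh => h ((hcond0 i).mp hh))])
      (eig_multiset hA _ hAdef)
    exact chs_single k hA.eigenvalues hk h0
  -- chs of B
  have hchsB : chs n d hB.eigenvalues = 1 := by
    obtain ⟨k, hk, h0⟩ := extract_one hB.eigenvalues 1 one_ne_zero l0 _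
      (fun i => by
        by_cases h : (i : ℕ) = 1
        · rw [if_pos h, if_pos ((hcond1 i).mpr h)]; norm_num
        · rw [if_neg h, if_neg (fun hh => h ((hcond1 i).mp hh))])
      (eig_multiset hB _ hBdef)
    exact chs_single k hB.eigenvalues hk h0
  -- chs of A + B
  have hABd : A + B = Matrix.diagonal
      ((fun i : Fin n => if (i : ℕ) = 0 then (1 : ℂ) else 0)
        + (fun i : Fin n => if (i : ℕ) = 1 then (1 : ℂ) else 0)) := by
    rw [hAdef, hBdef, Matrix.diagonal_add]
    rfl
  have hchsAB : chs n d hAB.eigenvalues = (d : ℝ) + 1 := by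
    obtain ⟨k, l, hkl, hk, hl, h0⟩ := extract_two_eq hAB.eigenvalues k0 l0 hk0l0 _
      (fun i => by
        simp only [Pi.add_apply]
        by_cases h0' : (i : ℕ) = 0
        · rw [if_pos h0', if_neg (by omega), if_pos ((hcond0 i).mpr h0')]; norm_num
        · rw [if_neg h0', if_neg (fun hh => h0' ((hcond0 i).mp hh))]
          by_cases h1' : (i : ℕ) = 1
          · rw [if_pos h1', if_pos ((hcond1 i).mpr h1')]; norm_num
          · rw [if_neg h1', if_neg (fun hh => h1' ((hcond1 i).mp hh))]; norm_num)
      (eig_multiset hAB _ hABd)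
    have hsum : ∑ j ∈ Finset.range (d + 1), (1 : ℝ) ^ (d - j) * 1 ^ j = (d : ℝ) + 1 := by
      simp [Finset.sum_const, Finset.card_range]
    rcases lt_or_gt_of_ne hkl with h | h
    · rw [chs_pair 1 1 h hAB.eigenvalues hk hl h0, hsum]
    · rw [chs_pair 1 1 h hAB.eigenvalues hl hk (fun i hil hik => h0 i hik hil), hsum]
  -- chs of A - B
  have hABd' : A - B = Matrix.diagonal
      ((fun i : Fin n => if (i : ℕ) = 0 then (1 : ℂ) else 0)
        - (fun i : Fin n => if (i : ℕ) = 1 then (1 : ℂ) else 0)) := by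
    rw [hAdef, hBdef, Matrix.diagonal_sub]
    rfl
  have hchsAB' : chs n d hAB'.eigenvalues = 1 := by
    obtain ⟨k, l, hkl, hk, hl, h0⟩ := extract_two hAB'.eigenvalues 1 (-1) one_ne_zero
      (by norm_num) (by norm_num) k0 l0 hk0l0 _
      (fun i => by
        simp only [Pi.sub_apply]
        by_cases h0' : (i : ℕ) = 0
        · rw [if_pos h0', if_neg (by omega), if_pos ((hcond0 i).mpr h0')]; norm_num
        · rw [if_neg h0', if_neg (fun hh => h0' ((hcond0 i).mp hh))]
          by_cases h1' : (i : ℕ) = 1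
          · rw [if_pos h1', if_pos ((hcond1 i).mpr h1')]; norm_num
          · rw [if_neg h1', if_neg (fun hh => h1' ((hcond1 i).mp hh))]; norm_num)
      (eig_multiset hAB' _ hABd')
    have hodd : ¬ Even (d + 1) := by simp [Nat.even_add_one, hd]
    rcases lt_or_gt_of_ne hkl with h | h
    · rw [chs_pair 1 (-1) h hAB'.eigenvalues hk hl h0]
      simp only [one_pow, one_mul]
      rw [neg_one_geom_sum]
      simp [hodd]
    · rw [chs_pair (-1) 1 h hAB'.eigenvalues hl hk (fun i hil hik => h0 i hik hil)]
      simp only [one_pow, mul_one]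
      have hrefl := Finset.sum_range_reflect (fun j => (-1 : ℝ) ^ j) (d + 1)
      simp only [Nat.add_sub_cancel] at hrefl
      rw [hrefl, neg_one_geom_sum]
      simp [hodd]
  -- final arithmetic
  rw [hchsA, hchsB, hchsAB, hchsAB', Real.one_rpow]
  refine ⟨rfl, ?_⟩
  intro hcon
  have h3 : ((d : ℝ) + 1) ^ ((2 : ℝ) / d) = 3 := by
    norm_num at hcon
    linarith
  have hdR : (0 : ℝ) < (d : ℝ) := by
    have : (4 : ℝ) ≤ (d : ℝ) := by exact_mod_cast hd4
    linarith
  have ht : (0 : ℝ) ≤ (d : ℝ) + 1 := by linarith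
  have hstep := congrArg (fun y : ℝ => y ^ (d : ℝ)) h3
  rw [← Real.rpow_mul ht] at hstep
  have h2d : (2 : ℝ) / d * d = 2 := by field_simp
  rw [h2d] at hstep
  rw [show (2 : ℝ) = ((2 : ℕ) : ℝ) by norm_num, Real.rpow_natCast, Real.rpow_natCast] at hstep
  have hnat : (d + 1) ^ 2 = 3 ^ d := by exact_mod_cast hstep
  have := pow_gt d hd4
  omega
end
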